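/- arXiv:2501.06131 — 5 statements merged into one kernel-verified Lean document; each statement's English description precedes it below -/
import Mathlib

section
/- Let A, B be disjoint finite vertex sets and H ⊆ A × B a bipartite graph with |E(H)| ≥ |A||B|/K, and let 0 < ε < 1. Then there exists U ⊆ A with |U| ≥ |A|/(2K) such that at least a (1−ε)-fraction of the ordered pairs of vertices (u,u') ∈ U × U have at least ε|B|/(2K²) common neighbors in B. -/
open Finset

/-!
Choose `b ∈ B` at random and take `U` to be its neighbourhood. By Cauchy–Schwarz
`E|U|² ≥ (|H|/|B|)² ≥ |A|²/K²`, while a pair with fewer than `m = ε|B|/(2K²)` common neighbours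
lies in `U` with probability less than `m/|B|`, so `U` contains on average fewer than
`|A|² m/|B| = ε|A|²/(2K²)` such pairs. Hence some `b` has
`|U|² - #(sparse pairs in U)/ε ≥ |A|²/(2K²)`, which yields both the size of `U` and the bound
on sparse pairs.
-/

namespace DependentRandomChoice

variable {α β : Type*} [DecidableEq α] [DecidableEq β]
  (A : Finset α) (B : Finset β) (H : Finset (α × β))

def nbhd (b : β) : Finset α := A.filter fun a => (a, b) ∈ H

def codegree (a a' : α) : ℕ := #(B.filter fun b => (a, b) ∈ H ∧ (a', b) ∈ H)

noncomputable def sparsePairs (m : ℝ) (s : Finset α) : Finset (α × α) :=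
  (s ×ˢ s).filter fun p => ¬ m ≤ (codegree B H p.1 p.2 : ℝ)

variable {A B H}

theorem sum_card_nbhd (hH : H ⊆ A ×ˢ B) : ∑ b ∈ B, #(nbhd A H b) = #H := by
  calc ∑ b ∈ B, #(nbhd A H b) = #((A ×ˢ B).filter (· ∈ H)) := by
        simp only [nbhd, card_filter, sum_product_right]
    _ = #H := by rw [filter_mem_eq_inter, inter_eq_right.mpr hH]

theorem sum_card_filter_nbhd_product (P : α × α → Prop) [DecidablePred P] :
    ∑ b ∈ B, #((nbhd A H b ×ˢ nbhd A H b).filter P) =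
      ∑ p ∈ (A ×ˢ A).filter P, codegree B H p.1 p.2 := by
  convert sum_card_bipartiteAbove_eq_sum_card_bipartiteBelow
    (s := B) (t := (A ×ˢ A).filter P) (fun b p => (p.1, b) ∈ H ∧ (p.2, b) ∈ H) using 3 with b
  · ext p
    simp only [nbhd, bipartiteAbove, mem_filter, mem_product]
    tauto
  · rfl

theorem sq_card_le_card_mul_sum_sq_card_nbhd (hH : H ⊆ A ×ˢ B) :
    #H ^ 2 ≤ #B * ∑ b ∈ B, #(nbhd A H b) ^ 2 :=
  sum_card_nbhd hH ▸ sq_sum_le_card_mul_sum_sq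

theorem sum_card_sparsePairs_nbhd_le {m : ℝ} (hm : 0 ≤ m) :
    ∑ b ∈ B, (#(sparsePairs B H m (nbhd A H b)) : ℝ) ≤ #A ^ 2 * m := by
  unfold sparsePairs
  rw [← Nat.cast_sum, sum_card_filter_nbhd_product, Nat.cast_sum]
  calc _ ≤ ∑ _p ∈ (A ×ˢ A).filter (fun p => ¬ m ≤ (codegree B H p.1 p.2 : ℝ)), m :=
        sum_le_sum fun p hp => (not_le.mp (mem_filter.mp hp).2).le
    _ ≤ #(A ×ˢ A) * m := by
        rw [sum_const, nsmul_eq_mul]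
        gcongr
        exact filter_subset _ _
    _ = #A ^ 2 * m := by rw [card_product, sq, Nat.cast_mul]

theorem exists_nbhd_with_few_sparsePairs (hH : H ⊆ A ×ˢ B) (hB : B.Nonempty) {m ε : ℝ}
    (hm : 0 ≤ m) (hε : 0 < ε) :
    ∃ b ∈ B, ((#H : ℝ) / #B) ^ 2 - #A ^ 2 * m / (ε * #B) ≤
      #(nbhd A H b) ^ 2 - #(sparsePairs B H m (nbhd A H b)) / ε := by
  apply exists_le_of_sum_le hB
  have hB0 : (0 : ℝ) < #B := by exact_mod_cast hB.card_pos
  have hsq : (#H : ℝ) ^ 2 / #B ≤ ∑ b ∈ B, (#(nbhd A H b) : ℝ) ^ 2 := by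
    rw [div_le_iff₀ hB0, mul_comm]
    exact_mod_cast sq_card_le_card_mul_sum_sq_card_nbhd hH
  have hsparse := sum_card_sparsePairs_nbhd_le (A := A) (B := B) (H := H) hm
  rw [sum_const, nsmul_eq_mul, sum_sub_distrib, ← sum_div]
  calc (#B : ℝ) * (((#H : ℝ) / #B) ^ 2 - #A ^ 2 * m / (ε * #B))
      = (#H : ℝ) ^ 2 / #B - #A ^ 2 * m / ε := by field_simp
    _ ≤ _ := by gcongr

theorem one_sub_mul_card_sq_le_card_filter_le_codegree {m ε : ℝ} {s : Finset α}
    (h : (#(sparsePairs B H m s) : ℝ) ≤ ε * #s ^ 2) :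
    (1 - ε) * #s ^ 2 ≤ (#((s ×ˢ s).filter fun p => m ≤ (codegree B H p.1 p.2 : ℝ)) : ℝ) := by
  have hsplit := card_filter_add_card_filter_not (s := s ×ˢ s)
    fun p => m ≤ (codegree B H p.1 p.2 : ℝ)
  rw [card_product, ← sq] at hsplit
  unfold sparsePairs at h
  have hsplit' := congrArg (Nat.cast : ℕ → ℝ) hsplit
  push_cast at hsplit'
  linarith

end DependentRandomChoice

open DependentRandomChoice

theorem dependent_random_choice_general {V : Type*} [DecidableEq V]
    (A B : Finset V)
    (K ε : ℝ) (hK : 1 ≤ K) (hε : 0 < ε)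
    (H : Finset (V × V)) (hH : H ⊆ A ×ˢ B)
    (hE : (A.card : ℝ) * B.card / K ≤ H.card) :
    ∃ U ⊆ A, (A.card : ℝ) / (2 * K) ≤ U.card ∧
      (1 - ε) * (U.card : ℝ) ^ 2 ≤
        (((U ×ˢ U).filter fun p =>
          ε * B.card / (2 * K ^ 2) ≤
            ((B.filter fun b => (p.1, b) ∈ H ∧ (p.2, b) ∈ H).card : ℝ)).card : ℝ) := by
  have hK0 : 0 < K := by linarith
  rcases B.eq_empty_or_nonempty with rfl | hB
  · refine ⟨A, subset_rfl, div_le_self (Nat.cast_nonneg _) (by linarith), ?_⟩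
    simp only [card_empty, CharP.cast_eq_zero, mul_zero, zero_div, filter_empty, le_refl,
      filter_true, card_product, Nat.cast_mul]
    rw [← sq]
    exact mul_le_of_le_one_left (sq_nonneg _) (by linarith)
  set m := ε * #B / (2 * K ^ 2) with hm_def
  obtain ⟨b, -, hb⟩ := exists_nbhd_with_few_sparsePairs hH hB (m := m) (by positivity) hε
  set U := nbhd A H b
  have hB0 : (0 : ℝ) < #B := by exact_mod_cast hB.card_pos
  have hdensity : (#A / K) ^ 2 ≤ ((#H : ℝ) / #B) ^ 2 := by
    refine pow_le_pow_left₀ (by positivity) ?_ 2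
    rwa [le_div_iff₀ hB0, div_mul_eq_mul_div]
  have hm : #A ^ 2 * m / (ε * #B) = (#A / K) ^ 2 / 2 := by
    rw [hm_def]
    field_simp
  have hU : (#A / K) ^ 2 / 2 ≤ #U ^ 2 - #(sparsePairs B H m U) / ε := by linarith
  have hsparse : 0 ≤ (#(sparsePairs B H m U) : ℝ) / ε := by positivity
  refine ⟨U, filter_subset _ _, ?_, one_sub_mul_card_sq_le_card_filter_le_codegree ?_⟩
  · refine (pow_le_pow_iff_left₀ (by positivity) (Nat.cast_nonneg _) two_ne_zero).mp ?_
    rw [div_mul_eq_div_div_swap, div_pow]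
    linarith [sq_nonneg ((#A : ℝ) / K)]
  · rw [← div_le_iff₀' hε]
    linarith [sq_nonneg ((#A : ℝ) / K)]

/-- **Dependent random choice.**  If `H ⊆ A × B` is a bipartite graph with
`|E(H)| ≥ |A||B|/K` and `0 < ε < 1`, then there is `U ⊆ A` with `|U| ≥ |A|/(2K)`
such that at least a `(1 - ε)`-fraction of ordered pairs `(u, u') ∈ U × U` have
at least `ε|B|/(2K²)` common neighbors in `B`. -/
theorem dependent_random_choice {V : Type*} [DecidableEq V]
    (A B : Finset V) (hAB : Disjoint A B)
    (K ε : ℝ) (hK : 1 ≤ K) (hε : 0 < ε) (hε1 : ε < 1)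
    (H : Finset (V × V)) (hH : H ⊆ A ×ˢ B)
    (hE : (A.card : ℝ) * B.card / K ≤ H.card) :
    ∃ U ⊆ A, (A.card : ℝ) / (2 * K) ≤ U.card ∧
      (1 - ε) * (U.card : ℝ) ^ 2 ≤
        (((U ×ˢ U).filter fun p =>
          ε * B.card / (2 * K ^ 2) ≤
            ((B.filter fun b => (p.1, b) ∈ H ∧ (p.2, b) ∈ H).card : ℝ)).card : ℝ) :=
  dependent_random_choice_general A B K ε hK hε H hH hE
end

section
/- Let r ≥ 2 and let V_1, …, V_r be disjoint finite vertex sets, H ⊆ V_1 × ⋯ × V_r an r-partite r-uniform hypergraph with |E(H)| ≥ (1/K)·∏_{i∈[r]}|V_i|, and 0 < ε < 1. Then there exists U ⊆ V_1 such that: (a) |U| ≥ |V_1|/(4K); (b) at least a (1−ε)-fraction of ordered pairs (v,w) ∈ U × U admit at least (ε/(2K²))·∏_{2≤i≤r}|V_i| first-coordinate r-legs on (v,w) in H; and (c) every vertex u ∈ U has degree at least (1/(2K))·∏_{2≤i≤r}|V_i| in H. -/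
open scoped Classical

/-- The number of `i`-th `r`-legs on `(v, w)` in `H`: choices of `u j ∈ A j` for
`j ≠ i` such that placing `v` resp. `w` in coordinate `i` gives edges of `H`
(the `i`-th coordinate of `u` is pinned to `v`). -/
noncomputable def legCount {α : Type*} [DecidableEq α] {r : ℕ} (A : Fin r → Finset α)
    (H : Finset (Fin r → α)) (i : Fin r) (v w : α) : ℕ :=
  ((Fintype.piFinset A).filter fun u =>
    u i = v ∧ Function.update u i v ∈ H ∧ Function.update u i w ∈ H).card

/-- The degree of a vertex `v` in coordinate `i`: the number of edges of `H`
containing `v` in coordinate `i`. -/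
noncomputable def degOn {α : Type*} {r : ℕ} (H : Finset (Fin r → α)) (i : Fin r) (v : α) : ℕ :=
  (H.filter fun e => e i = v).card

open Finset

lemma filter_pin_card {α : Type*} [DecidableEq α] {r : ℕ}
    (V : Fin r → Finset α) (i0 : Fin r) {a₀ v : α}
    (ha₀ : a₀ ∈ V i0) (hv : v ∈ V i0) (Q : (Fin r → α) → Prop) :
    ((Fintype.piFinset V).filter fun u => u i0 = v ∧ Q u).card
      = ((Fintype.piFinset (Function.update V i0 {a₀})).filter fun z =>
          Q (Function.update z i0 v)).card := by
  apply Finset.card_nbij' (fun u => Function.update u i0 a₀)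
      (fun z => Function.update z i0 v)
  · intro u hu
    have hu : u ∈ ((Fintype.piFinset V).filter fun u => u i0 = v ∧ Q u) := hu
    rw [Finset.mem_coe]
    simp only [Finset.mem_filter, Fintype.mem_piFinset] at hu ⊢
    obtain ⟨hmem, huv, hQ⟩ := hu
    constructor
    · intro i
      rcases eq_or_ne i i0 with rfl | hne
      · simp
      · simp [Function.update_of_ne hne, hmem i]
    · have h : Function.update (Function.update u i0 a₀) i0 v = u := by
        rw [Function.update_idem, ← huv, Function.update_eq_self]
      rw [h]; exact hQ
  · intro z hz
    have hz : z ∈ ((Fintype.piFinset (Function.update V i0 {a₀})).filter fun z =>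
        Q (Function.update z i0 v)) := hz
    rw [Finset.mem_coe]
    simp only [Finset.mem_filter, Fintype.mem_piFinset] at hz ⊢
    obtain ⟨hmem, hQ⟩ := hz
    refine ⟨fun i => ?_, ?_, hQ⟩
    · rcases eq_or_ne i i0 with rfl | hne
      · simpa using hv
      · have h := hmem i
        rw [Function.update_of_ne hne] at h ⊢
        exact h
    · simp
  · intro u hu
    have hu : u ∈ ((Fintype.piFinset V).filter fun u => u i0 = v ∧ Q u) := hu
    simp only [Finset.mem_filter] at hu
    show Function.update (Function.update u i0 a₀) i0 v = u
    rw [Function.update_idem, ← hu.2.1, Function.update_eq_self]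
  · intro z hz
    have hz : z ∈ ((Fintype.piFinset (Function.update V i0 {a₀})).filter fun z =>
        Q (Function.update z i0 v)) := hz
    simp only [Finset.mem_filter, Fintype.mem_piFinset] at hz
    have hz0 : z i0 = a₀ := by have h := hz.1 i0; simpa using h
    show Function.update (Function.update z i0 v) i0 a₀ = z
    rw [Function.update_idem, ← hz0, Function.update_eq_self]

set_option maxHeartbeats 1000000 in
/-- Lemma 2.5 of the paper: from a dense `r`-partite `r`-uniform hypergraph one
finds `U ⊆ V_1` with `|U| ≥ |V_1|/(4K)` such that a `(1-ε)`-fraction of ordered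
pairs in `U × U` support many first-coordinate `r`-legs, and every vertex of
`U` has large degree. -/
theorem iterate_lemma {α : Type*} [DecidableEq α] (r : ℕ) (hr : 2 ≤ r)
    (V : Fin r → Finset α) (hdisj : ∀ i j, i ≠ j → Disjoint (V i) (V j))
    (K ε : ℝ) (hK : 1 ≤ K) (hε : 0 < ε) (hε1 : ε < 1)
    (H : Finset (Fin r → α)) (hH : H ⊆ Fintype.piFinset V)
    (hE : (1 / K) * ∏ i, ((V i).card : ℝ) ≤ H.card) :
    ∃ U ⊆ V ⟨0, by omega⟩,
      ((V ⟨0, by omega⟩).card : ℝ) / (4 * K) ≤ U.card ∧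
      (1 - ε) * (U.card : ℝ) ^ 2 ≤
        (((U ×ˢ U).filter fun p =>
          ε / (2 * K ^ 2) * ∏ i ∈ Finset.univ.erase ⟨0, by omega⟩, ((V i).card : ℝ) ≤
            (legCount V H ⟨0, by omega⟩ p.1 p.2 : ℝ)).card : ℝ) ∧
      ∀ u ∈ U, 1 / (2 * K) * ∏ i ∈ Finset.univ.erase ⟨0, by omega⟩, ((V i).card : ℝ) ≤
        (degOn H ⟨0, by omega⟩ u : ℝ) := by
  have hK0 : (0 : ℝ) < K := lt_of_lt_of_le one_pos hK
  set i0 : Fin r := ⟨0, by omega⟩ with hi0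
  by_cases hV0 : V i0 = ∅
  · refine ⟨∅, by simp, ?_, ?_, by simp⟩
    · simp [hV0]
    · simp
  by_cases hMz : ∃ i ∈ Finset.univ.erase i0, V i = ∅
  · obtain ⟨i, hi, hVi⟩ := hMz
    have hM0 : (∏ i ∈ Finset.univ.erase i0, ((V i).card : ℝ)) = 0 :=
      Finset.prod_eq_zero hi (by simp [hVi])
    refine ⟨V i0, subset_rfl, ?_, ?_, ?_⟩
    · exact div_le_self (by positivity) (by linarith)
    · rw [Finset.filter_true_of_mem (fun p _ => by rw [hM0, mul_zero]; positivity)]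
      rw [Finset.card_product]
      push_cast
      nlinarith [sq_nonneg ((V i0).card : ℝ), hε.le]
    · intro u _
      rw [hM0, mul_zero]
      positivity
  · push_neg at hMz
    obtain ⟨a₀, ha₀⟩ := Finset.nonempty_iff_ne_empty.2 hV0
    set Mn : ℕ := ∏ i ∈ Finset.univ.erase i0, (V i).card with hMn
    have hMr : (∏ i ∈ Finset.univ.erase i0, ((V i).card : ℝ)) = (Mn : ℝ) := by
      rw [hMn]; push_cast; rfl
    have hMnpos : 0 < Mn := by
      rw [hMn]
      exact Finset.prod_pos fun i hi =>
        Finset.card_pos.2 (hMz i hi)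
    set n0 : ℕ := (V i0).card with hn0
    have hn0pos : 0 < n0 := by rw [hn0]; exact Finset.card_pos.2 ⟨a₀, ha₀⟩
    set U0 : Finset α := (V i0).filter (fun v =>
      1 / (2 * K) * ∏ i ∈ Finset.univ.erase i0, ((V i).card : ℝ) ≤ (degOn H i0 v : ℝ))
      with hU0
    set W : Fin r → Finset α := Function.update V i0 {a₀} with hW
    set Z : Finset (Fin r → α) := Fintype.piFinset W with hZdef
    have hZcard : Z.card = Mn := by
      rw [hZdef, Fintype.card_piFinset,
        ← Finset.mul_prod_erase Finset.univ _ (Finset.mem_univ i0), hMn, hW]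
      simp only [Function.update_self, Finset.card_singleton, one_mul]
      exact Finset.prod_congr rfl fun i hi => by
        rw [Function.update_of_ne (Finset.mem_erase.1 hi).1]
    set Uz : (Fin r → α) → Finset α :=
      fun z => U0.filter (fun v => Function.update z i0 v ∈ H) with hUzdef
    have hU0V : ∀ v ∈ U0, v ∈ V i0 := by
      intro v hv; rw [hU0] at hv; exact Finset.mem_of_mem_filter v hv
    have hdeg : ∀ v ∈ V i0, degOn H i0 v
        = (Z.filter fun z => Function.update z i0 v ∈ H).card := by
      intro v hv
      have key := filter_pin_card V i0 ha₀ hv (fun u => u ∈ H)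
      rw [← hW, ← hZdef] at key
      rw [degOn]
      refine Eq.trans ?_ (Eq.trans key ?_)
      · congr 1
        ext u
        simp only [Finset.mem_filter]
        constructor
        · rintro ⟨h1, h2⟩; exact ⟨hH h1, h2, h1⟩
        · rintro ⟨_, h2, h3⟩; exact ⟨h3, h2⟩
      · congr 1
        ext u
        simp only [Finset.mem_filter]
    have hleg : ∀ v ∈ V i0, ∀ w : α, legCount V H i0 v w
        = (Z.filter fun z => Function.update z i0 v ∈ H ∧ Function.update z i0 w ∈ H).card := by
      intro v hv w
      have key := filter_pin_card V i0 ha₀ hv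
        (fun u => Function.update u i0 v ∈ H ∧ Function.update u i0 w ∈ H)
      rw [← hW, ← hZdef] at key
      rw [legCount]
      refine Eq.trans ?_ (Eq.trans key ?_)
      · congr 1
        ext u
        simp only [Finset.mem_filter]
      · congr 1
        ext z
        simp only [Finset.mem_filter, Function.update_idem]
    have hXcard : ∀ z : Fin r → α, (Uz z).card
        = ∑ v ∈ U0, if Function.update z i0 v ∈ H then 1 else 0 := by
      intro z; rw [hUzdef]; exact Finset.card_filter _ _
    have hsum1 : ∑ z ∈ Z, (Uz z).card = ∑ v ∈ U0, degOn H i0 v := by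
      rw [Finset.sum_congr rfl fun z _ => hXcard z, Finset.sum_comm]
      refine Finset.sum_congr rfl fun v hv => ?_
      rw [← Finset.card_filter]
      exact (hdeg v (hU0V v hv)).symm
    have hsum2 : ∑ z ∈ Z, ((Uz z).card) ^ 2 = ∑ v ∈ U0, ∑ w ∈ U0, legCount V H i0 v w := by
      have hx : ∀ z : Fin r → α, ((Uz z).card) ^ 2
          = ∑ v ∈ U0, ∑ w ∈ U0,
              if (Function.update z i0 v ∈ H ∧ Function.update z i0 w ∈ H) then 1 else 0 := by
        intro z
        rw [sq, hXcard z, Finset.sum_mul_sum]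
        refine Finset.sum_congr rfl fun v _ => Finset.sum_congr rfl fun w _ => ?_
        by_cases h1 : Function.update z i0 v ∈ H <;>
          by_cases h2 : Function.update z i0 w ∈ H <;> simp [h1, h2]
      rw [Finset.sum_congr rfl fun z _ => hx z, Finset.sum_comm]
      refine Finset.sum_congr rfl fun v hv => ?_
      rw [Finset.sum_comm]
      refine Finset.sum_congr rfl fun w hw => ?_
      rw [← Finset.card_filter]
      exact (hleg v (hU0V v hv) w).symm
    set P : Finset (α × α) := (U0 ×ˢ U0).filter (fun p =>
      ¬ (ε / (2 * K ^ 2) * ∏ i ∈ Finset.univ.erase i0, ((V i).card : ℝ) ≤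
        (legCount V H i0 p.1 p.2 : ℝ))) with hP
    set Bz : (Fin r → α) → ℕ := fun z => (P.filter fun p =>
      Function.update z i0 p.1 ∈ H ∧ Function.update z i0 p.2 ∈ H).card with hBzdef
    have hPU0 : ∀ p ∈ P, p.1 ∈ U0 ∧ p.2 ∈ U0 := by
      intro p hp
      rw [hP] at hp
      exact Finset.mem_product.1 (Finset.mem_of_mem_filter p hp)
    have hsum3 : ∑ z ∈ Z, Bz z = ∑ p ∈ P, legCount V H i0 p.1 p.2 := by
      have hb : ∀ z : Fin r → α, Bz z = ∑ p ∈ P,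
          if (Function.update z i0 p.1 ∈ H ∧ Function.update z i0 p.2 ∈ H) then 1 else 0 := by
        intro z; rw [hBzdef]; exact Finset.card_filter _ _
      rw [Finset.sum_congr rfl fun z _ => hb z, Finset.sum_comm]
      refine Finset.sum_congr rfl fun p hp => ?_
      rw [← Finset.card_filter]
      exact (hleg p.1 (hU0V p.1 (hPU0 p hp).1) p.2).symm
    -- real-number quantities
    set Sr : ℝ := ∑ v ∈ U0, (degOn H i0 v : ℝ) with hSr
    set R : Finset α := (V i0).filter (fun v =>
      ¬ (1 / (2 * K) * ∏ i ∈ Finset.univ.erase i0, ((V i).card : ℝ) ≤ (degOn H i0 v : ℝ)))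
      with hR
    have hHsum : H.card = ∑ v ∈ V i0, degOn H i0 v := by
      have h := Finset.card_eq_sum_card_fiberwise
        (f := fun e => e i0) (s := H) (t := V i0)
        (fun e he => (Fintype.mem_piFinset.1 (hH he)) i0)
      rw [h]
      refine Finset.sum_congr rfl fun v _ => ?_
      rw [degOn]
      congr 1
      ext e
      simp only [Finset.mem_filter]
    have hsplitdeg : Sr + ∑ v ∈ R, (degOn H i0 v : ℝ) = (H.card : ℝ) := by
      rw [hSr, hU0, hR]
      rw [Finset.sum_filter_add_sum_filter_not]
      rw [hHsum]
      push_cast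
      rfl
    have hcardsplit : U0.card + R.card = n0 := by
      rw [hU0, hR, hn0]
      exact Finset.card_filter_add_card_filter_not _
    have hRsum : ∑ v ∈ R, (degOn H i0 v : ℝ) ≤ (R.card : ℝ) * ((Mn : ℝ) / (2 * K)) := by
      have h := Finset.sum_le_card_nsmul R (fun v => (degOn H i0 v : ℝ)) ((Mn : ℝ) / (2 * K)) ?_
      · simpa [nsmul_eq_mul] using h
      · intro v hv
        rw [hR, Finset.mem_filter] at hv
        have h2 := hv.2
        rw [not_le, hMr] at h2
        have e1 : 1 / (2 * K) * (Mn : ℝ) = (Mn : ℝ) / (2 * K) := by ring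
        linarith [h2, e1.symm.le]
    have hprodall : (∏ i, ((V i).card : ℝ)) = (n0 : ℝ) * (Mn : ℝ) := by
      rw [← Finset.mul_prod_erase Finset.univ _ (Finset.mem_univ i0), hMr, hn0]
    have hE' : (n0 : ℝ) * (Mn : ℝ) / K ≤ (H.card : ℝ) := by
      rw [hprodall] at hE
      have e1 : 1 / K * ((n0 : ℝ) * (Mn : ℝ)) = (n0 : ℝ) * (Mn : ℝ) / K := by ring
      linarith [hE, e1.le]
    have hbn : (U0.card : ℝ) ≤ (n0 : ℝ) := by
      have h : U0.card ≤ n0 := by rw [hU0, hn0]; exact Finset.card_filter_le _ _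
      exact_mod_cast h
    have hS1 : ((n0 : ℝ) + (U0.card : ℝ)) * (Mn : ℝ) / (2 * K) ≤ Sr := by
      have hRc : (R.card : ℝ) = (n0 : ℝ) - (U0.card : ℝ) := by
        have h2 : (U0.card : ℝ) + (R.card : ℝ) = (n0 : ℝ) := by exact_mod_cast hcardsplit
        linarith
      have hring : (n0 : ℝ) * (Mn : ℝ) / K
          - ((n0 : ℝ) - (U0.card : ℝ)) * ((Mn : ℝ) / (2 * K))
          = ((n0 : ℝ) + (U0.card : ℝ)) * (Mn : ℝ) / (2 * K) := by
        field_simp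
        ring
      rw [hRc] at hRsum
      linarith [hsplitdeg, hRsum, hE', hring]
    -- existence of a good tail
    have hex : ∃ z ∈ Z, ((n0 : ℝ) / (4 * K) ≤ ((Uz z).card : ℝ))
        ∧ ((Bz z : ℝ) ≤ ε * ((Uz z).card : ℝ) ^ 2) := by
      by_contra hcon
      push_neg at hcon
      have hptw : ∀ z ∈ Z, ε * ((Uz z).card : ℝ) ^ 2
          ≤ (Bz z : ℝ) + ε * ((n0 : ℝ) / (4 * K)) * ((Uz z).card : ℝ) := by
        intro z hz
        rcases le_or_gt ((n0 : ℝ) / (4 * K)) ((Uz z).card : ℝ) with h | h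
        · have h2 := hcon z hz h
          have h3 : 0 ≤ ε * ((n0 : ℝ) / (4 * K)) * ((Uz z).card : ℝ) :=
            mul_nonneg (mul_nonneg hε.le (div_nonneg (Nat.cast_nonneg _) (by linarith)))
              (Nat.cast_nonneg _)
          linarith
        · have h0 : (0 : ℝ) ≤ ((Uz z).card : ℝ) := Nat.cast_nonneg _
          have h4 : (0 : ℝ) ≤ (Bz z : ℝ) := Nat.cast_nonneg _
          nlinarith [mul_nonneg (mul_nonneg hε.le h0)
            (by linarith : (0:ℝ) ≤ (n0 : ℝ) / (4 * K) - ((Uz z).card : ℝ))]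
      have hsumineq : ε * (∑ z ∈ Z, ((Uz z).card : ℝ) ^ 2)
          ≤ (∑ z ∈ Z, (Bz z : ℝ)) + ε * ((n0 : ℝ) / (4 * K)) * (∑ z ∈ Z, ((Uz z).card : ℝ)) := by
        calc ε * (∑ z ∈ Z, ((Uz z).card : ℝ) ^ 2)
            = ∑ z ∈ Z, ε * ((Uz z).card : ℝ) ^ 2 := Finset.mul_sum _ _ _
          _ ≤ ∑ z ∈ Z, ((Bz z : ℝ) + ε * ((n0 : ℝ) / (4 * K)) * ((Uz z).card : ℝ)) :=
              Finset.sum_le_sum hptw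
          _ = (∑ z ∈ Z, (Bz z : ℝ)) + ε * ((n0 : ℝ) / (4 * K)) * (∑ z ∈ Z, ((Uz z).card : ℝ)) := by
              rw [Finset.sum_add_distrib, ← Finset.mul_sum]
      have hXsum : (∑ z ∈ Z, ((Uz z).card : ℝ)) = Sr := by
        rw [hSr]
        exact_mod_cast hsum1
      set Qr : ℝ := ∑ v ∈ U0, ∑ w ∈ U0, (legCount V H i0 v w : ℝ) with hQr
      have hX2sum : (∑ z ∈ Z, ((Uz z).card : ℝ) ^ 2) = Qr := by
        rw [hQr]
        exact_mod_cast hsum2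
      have hBsum : (∑ z ∈ Z, (Bz z : ℝ)) = ∑ p ∈ P, (legCount V H i0 p.1 p.2 : ℝ) := by
        exact_mod_cast hsum3
      have hCS : Sr ^ 2 ≤ (Mn : ℝ) * Qr := by
        have h := sq_sum_le_card_mul_sum_sq (s := Z) (f := fun z => ((Uz z).card : ℝ))
        rw [hXsum, hX2sum] at h
        rwa [hZcard] at h
      have hPB : (∑ p ∈ P, (legCount V H i0 p.1 p.2 : ℝ))
          ≤ (U0.card : ℝ) ^ 2 * (ε / (2 * K ^ 2) * (Mn : ℝ)) := by
        have h1 : ∀ p ∈ P, (legCount V H i0 p.1 p.2 : ℝ) ≤ ε / (2 * K ^ 2) * (Mn : ℝ) := by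
          intro p hp
          rw [hP, Finset.mem_filter] at hp
          have h2 := hp.2
          rw [not_le, hMr] at h2
          exact h2.le
        calc (∑ p ∈ P, (legCount V H i0 p.1 p.2 : ℝ))
            ≤ ∑ _p ∈ P, ε / (2 * K ^ 2) * (Mn : ℝ) := Finset.sum_le_sum h1
          _ = (P.card : ℝ) * (ε / (2 * K ^ 2) * (Mn : ℝ)) := by
              rw [Finset.sum_const, nsmul_eq_mul]
          _ ≤ (U0.card : ℝ) ^ 2 * (ε / (2 * K ^ 2) * (Mn : ℝ)) := by
              have hc : P.card ≤ U0.card * U0.card := by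
                rw [hP]
                calc ((U0 ×ˢ U0).filter _).card ≤ (U0 ×ˢ U0).card := Finset.card_filter_le _ _
                  _ = U0.card * U0.card := Finset.card_product _ _
              have hc2 : (P.card : ℝ) ≤ (U0.card : ℝ) ^ 2 := by
                rw [sq]; exact_mod_cast hc
              have hpos : (0 : ℝ) ≤ ε / (2 * K ^ 2) * (Mn : ℝ) :=
                mul_nonneg (div_nonneg hε.le (by positivity)) (Nat.cast_nonneg _)
              exact mul_le_mul_of_nonneg_right hc2 hpos
      -- final contradiction
      rw [hXsum, hX2sum, hBsum] at hsumineq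
      clear_value Sr Qr Mn n0
      have hmain : Sr ^ 2 ≤ (Mn : ℝ) ^ 2 * (U0.card : ℝ) ^ 2 / (2 * K ^ 2)
          + (n0 : ℝ) * (Mn : ℝ) * Sr / (4 * K) := by
        have h5 : ε * Sr ^ 2 ≤ ε * ((Mn : ℝ) * Qr) :=
          mul_le_mul_of_nonneg_left hCS hε.le
        have h6 : (Mn : ℝ) * (ε * Qr) ≤ (Mn : ℝ) *
            ((∑ p ∈ P, (legCount V H i0 p.1 p.2 : ℝ)) + ε * ((n0 : ℝ) / (4 * K)) * Sr) :=
          mul_le_mul_of_nonneg_left hsumineq (Nat.cast_nonneg _)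
        have h7 : (Mn : ℝ) * (∑ p ∈ P, (legCount V H i0 p.1 p.2 : ℝ))
            ≤ (Mn : ℝ) * ((U0.card : ℝ) ^ 2 * (ε / (2 * K ^ 2) * (Mn : ℝ))) :=
          mul_le_mul_of_nonneg_left hPB (Nat.cast_nonneg _)
        have h8 : ε * Sr ^ 2 ≤ ε * ((Mn : ℝ) ^ 2 * (U0.card : ℝ) ^ 2 / (2 * K ^ 2)
            + (n0 : ℝ) * (Mn : ℝ) * Sr / (4 * K)) := by
          have e1 : ε * ((Mn : ℝ) * Qr) = (Mn : ℝ) * (ε * Qr) := by ring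
          have e2 : (Mn : ℝ) * ((U0.card : ℝ) ^ 2 * (ε / (2 * K ^ 2) * (Mn : ℝ)))
              + (Mn : ℝ) * (ε * ((n0 : ℝ) / (4 * K)) * Sr)
              = ε * ((Mn : ℝ) ^ 2 * (U0.card : ℝ) ^ 2 / (2 * K ^ 2)
                + (n0 : ℝ) * (Mn : ℝ) * Sr / (4 * K)) := by
            field_simp
          linarith [h5, h6, h7, e1.le, e1.ge, e2.le, e2.ge]
        exact le_of_mul_le_mul_left (by linarith [h8]) hε
      have hSrpos : 0 < Sr := by
        have hp : (0 : ℝ) < ((n0 : ℝ) + (U0.card : ℝ)) * (Mn : ℝ) / (2 * K) := by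
          have h1 : (0 : ℝ) < (n0 : ℝ) := by exact_mod_cast hn0pos
          have h2 : (0 : ℝ) ≤ (U0.card : ℝ) := Nat.cast_nonneg _
          have h3 : (0 : ℝ) < (Mn : ℝ) := by exact_mod_cast hMnpos
          exact div_pos (mul_pos (by linarith) h3) (by linarith)
        linarith [hS1]
      have f1 : ((n0 : ℝ) + (U0.card : ℝ)) * (Mn : ℝ) ≤ 2 * K * Sr := by
        have h := mul_le_mul_of_nonneg_left hS1 (by linarith : (0 : ℝ) ≤ 2 * K)
        have e1 : 2 * K * (((n0 : ℝ) + (U0.card : ℝ)) * (Mn : ℝ) / (2 * K))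
            = ((n0 : ℝ) + (U0.card : ℝ)) * (Mn : ℝ) := by field_simp
        linarith [h, e1.le, e1.ge]
      have f2 : ((n0 : ℝ) + 2 * (U0.card : ℝ)) * (Mn : ℝ) ≤ 4 * K * Sr - (n0 : ℝ) * (Mn : ℝ) := by
        nlinarith [f1]
      have f3 : (((n0 : ℝ) + (U0.card : ℝ)) * (Mn : ℝ))
          * (((n0 : ℝ) + 2 * (U0.card : ℝ)) * (Mn : ℝ))
          ≤ (2 * K * Sr) * (4 * K * Sr - (n0 : ℝ) * (Mn : ℝ)) := by
        have hb0 : (0 : ℝ) ≤ (U0.card : ℝ) := Nat.cast_nonneg _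
        have hn0' : (0 : ℝ) < (n0 : ℝ) := by exact_mod_cast hn0pos
        have hm0 : (0 : ℝ) < (Mn : ℝ) := by exact_mod_cast hMnpos
        have hcpos : (0 : ℝ) ≤ ((n0 : ℝ) + 2 * (U0.card : ℝ)) * (Mn : ℝ) :=
          mul_nonneg (by linarith) hm0.le
        have hdpos : (0 : ℝ) ≤ 2 * K * Sr := mul_nonneg (by linarith) hSrpos.le
        exact mul_le_mul f1 f2 hcpos hdpos
      have g2 : 8 * K ^ 2 * Sr ^ 2 ≤ 4 * (Mn : ℝ) ^ 2 * (U0.card : ℝ) ^ 2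
          + 2 * K * (n0 : ℝ) * (Mn : ℝ) * Sr := by
        have h := mul_le_mul_of_nonneg_left hmain (by positivity : (0 : ℝ) ≤ 8 * K ^ 2)
        have e1 : 8 * K ^ 2 * ((Mn : ℝ) ^ 2 * (U0.card : ℝ) ^ 2 / (2 * K ^ 2)
            + (n0 : ℝ) * (Mn : ℝ) * Sr / (4 * K))
            = 4 * (Mn : ℝ) ^ 2 * (U0.card : ℝ) ^ 2 + 2 * K * (n0 : ℝ) * (Mn : ℝ) * Sr := by
          field_simp
          ring
        linarith [h, e1.le, e1.ge]
      have g3 : ((n0 : ℝ) + (U0.card : ℝ)) * ((n0 : ℝ) + 2 * (U0.card : ℝ)) * (Mn : ℝ) ^ 2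
          ≤ 4 * (U0.card : ℝ) ^ 2 * (Mn : ℝ) ^ 2 := by nlinarith [f3, g2]
      have hm0 : (0 : ℝ) < (Mn : ℝ) ^ 2 := by
        have h : (0 : ℝ) < (Mn : ℝ) := by exact_mod_cast hMnpos
        exact pow_pos h 2
      have g4 : ((n0 : ℝ) + (U0.card : ℝ)) * ((n0 : ℝ) + 2 * (U0.card : ℝ))
          ≤ 4 * (U0.card : ℝ) ^ 2 :=
        le_of_mul_le_mul_right g3 hm0
      have hn1' : (1 : ℝ) ≤ (n0 : ℝ) := by exact_mod_cast hn0pos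
      have hb0 : (0 : ℝ) ≤ (U0.card : ℝ) := Nat.cast_nonneg _
      nlinarith [g4, hn1', hb0, hbn, mul_le_mul_of_nonneg_right hbn hb0,
        mul_le_mul hn1' hn1' zero_le_one (by linarith : (0 : ℝ) ≤ (n0 : ℝ))]
    -- use the good tail
    obtain ⟨z, hzZ, hXlb, hBub⟩ := hex
    refine ⟨Uz z, ?_, ?_, ?_, ?_⟩
    · intro x hx
      rw [hUzdef] at hx
      exact hU0V x (Finset.mem_of_mem_filter x hx)
    · exact hXlb
    · have hbadsub : (((Uz z) ×ˢ (Uz z)).filter (fun p =>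
          ¬ (ε / (2 * K ^ 2) * ∏ i ∈ Finset.univ.erase i0, ((V i).card : ℝ) ≤
            (legCount V H i0 p.1 p.2 : ℝ)))).card ≤ Bz z := by
        rw [hBzdef]
        apply Finset.card_le_card
        intro p hp
        rw [Finset.mem_filter] at hp ⊢
        obtain ⟨hpmem, hnle⟩ := hp
        rw [Finset.mem_product] at hpmem
        obtain ⟨h1, h2⟩ := hpmem
        rw [hUzdef, Finset.mem_filter] at h1 h2
        refine ⟨?_, h1.2, h2.2⟩
        rw [hP, Finset.mem_filter, Finset.mem_product]
        exact ⟨⟨h1.1, h2.1⟩, hnle⟩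
      have hsplit2 : (((Uz z) ×ˢ (Uz z)).filter (fun p =>
            ε / (2 * K ^ 2) * ∏ i ∈ Finset.univ.erase i0, ((V i).card : ℝ) ≤
              (legCount V H i0 p.1 p.2 : ℝ))).card
          + (((Uz z) ×ˢ (Uz z)).filter (fun p =>
            ¬ (ε / (2 * K ^ 2) * ∏ i ∈ Finset.univ.erase i0, ((V i).card : ℝ) ≤
              (legCount V H i0 p.1 p.2 : ℝ)))).card = (Uz z).card * (Uz z).card := by
        rw [Finset.card_filter_add_card_filter_not, Finset.card_product]
      have hbadle : ((((Uz z) ×ˢ (Uz z)).filter (fun p =>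
          ¬ (ε / (2 * K ^ 2) * ∏ i ∈ Finset.univ.erase i0, ((V i).card : ℝ) ≤
            (legCount V H i0 p.1 p.2 : ℝ)))).card : ℝ) ≤ ε * ((Uz z).card : ℝ) ^ 2 :=
        le_trans (by exact_mod_cast Nat.cast_le.2 hbadsub) hBub
      have hXX : ((Uz z).card : ℝ) * ((Uz z).card : ℝ) = ((Uz z).card : ℝ) ^ 2 := (sq _).symm
      have hcast3 : ((((Uz z) ×ˢ (Uz z)).filter (fun p =>
            ε / (2 * K ^ 2) * ∏ i ∈ Finset.univ.erase i0, ((V i).card : ℝ) ≤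
              (legCount V H i0 p.1 p.2 : ℝ))).card : ℝ)
          + ((((Uz z) ×ˢ (Uz z)).filter (fun p =>
            ¬ (ε / (2 * K ^ 2) * ∏ i ∈ Finset.univ.erase i0, ((V i).card : ℝ) ≤
              (legCount V H i0 p.1 p.2 : ℝ)))).card : ℝ)
          = ((Uz z).card : ℝ) * ((Uz z).card : ℝ) := by exact_mod_cast hsplit2
      linarith [hbadle, hcast3, hXX.le, hXX.ge]
    · intro u hu
      rw [hUzdef, Finset.mem_filter] at hu
      have h1 := hu.1
      rw [hU0, Finset.mem_filter] at h1
      exact h1.2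
end

section
/- Let r ≥ 2 be an integer and let ε with 0 < ε < 1/(10r) be given; set δ = ε/(10r). Let A_1, …, A_r be disjoint vertex sets, each of size n (with n sufficiently large relative to 1/ε), and let H ⊆ A_1 × ⋯ × A_r be an r-partite r-uniform hypergraph with |E(H)| ≥ (1−δ)n^r. Then for each i ∈ [r] there exists A_i' ⊆ A_i with |A_i'| ≥ ⌈(1−ε)n⌉ such that for every (a_1,…,a_r) ∈ A_1' × ⋯ × A_r', the number of r-octopuses in H supported on (a_1,…,a_r) is at least n^{r(r−1)}/2. -/
open scoped Classical Pointwise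

/-- The vertex set of the `i`-th leg of a (candidate) octopus: the vertices
`(i, a i)`, `(i, w i)` together with the leg vertices `(j, u i j)` for `j ≠ i`,
tagged by the part they belong to. -/
noncomputable def legVerts {α : Type*} {r : ℕ} (a w : Fin r → α) (u : Fin r → Fin r → α)
    (i : Fin r) : Finset (Fin r × α) :=
  {(i, a i), (i, w i)} ∪ (Finset.univ.filter fun j => j ≠ i).image fun j => (j, u i j)

/-- `IsOctopus H a w u` says that the data `w` (joint vertices `w i` for `i < r-1`)
and `u` (leg vertices `u i j ∈ A j`, `j ≠ i`, for each `i < r-1`) form an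
`r`-octopus in `H` supported on `(a 0, …, a (r-1))`: for each `i < r-1` the two
tuples obtained from `u i` by placing `a i` resp. `w i` in coordinate `i` are
edges of `H` (an `i`-th `r`-leg on `(a i, w i)`, with `a i ≠ w i`), the legs are
pairwise vertex-disjoint and avoid the vertex `a (r-1)`, and
`(w 0, …, w (r-2), a (r-1))` is an edge of `H`.  Irrelevant coordinates of the
data (`w` at `r-1`, `u i` at `i`, and `u` at `r-1`) are pinned so that octopuses
correspond bijectively to pairs `(w, u)` satisfying this predicate. -/
def IsOctopus {α : Type*} {r : ℕ} (H : Finset (Fin r → α)) (a w : Fin r → α)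
    (u : Fin r → Fin r → α) : Prop :=
  (∀ i : Fin r, (i : ℕ) < r - 1 →
      a i ≠ w i ∧
      Function.update (u i) i (a i) ∈ H ∧
      Function.update (u i) i (w i) ∈ H) ∧
  (fun j : Fin r => if (j : ℕ) < r - 1 then w j else a j) ∈ H ∧
  (∀ i i' : Fin r, (i : ℕ) < r - 1 → (i' : ℕ) < r - 1 → i ≠ i' →
      Disjoint (legVerts a w u i) (legVerts a w u i')) ∧
  (∀ i i' : Fin r, (i : ℕ) < r - 1 → (i' : ℕ) = r - 1 →
      (i', a i') ∉ legVerts a w u i) ∧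
  (∀ i : Fin r, ((i : ℕ) = r - 1 → w i = a i) ∧ u i i = a i ∧
      ((i : ℕ) = r - 1 → u i = a))

/-- The number of `r`-octopuses in `H` (with vertices in the parts `A i`)
supported on the tuple `a`. -/
noncomputable def octopusCount {α : Type*} [DecidableEq α] {r : ℕ} (A : Fin r → Finset α)
    (H : Finset (Fin r → α)) (a : Fin r → α) : ℕ :=
  (((Fintype.piFinset A) ×ˢ (Fintype.piFinset fun _ => Fintype.piFinset A)).filter
    fun p => IsOctopus H a p.1 p.2).card


open Finset
set_option linter.unusedSectionVars false


section helpers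
variable {ι : Type*} [Fintype ι] [DecidableEq ι] {β : ι → Type*} [∀ i, DecidableEq (β i)]

lemma prod_if_pow (t : Finset ι) (p : ι → Prop) [DecidablePred p] (m : ℕ) :
    (∏ i ∈ t, if p i then m else 1) = m ^ (t.filter p).card := by
  rw [Finset.prod_ite, Finset.prod_const, Finset.prod_const_one, mul_one]

lemma piFinset_card_le (B : ∀ i, Finset (β i)) (s : Finset ι) (n : ℕ)
    (h1 : ∀ i ∉ s, (B i).card ≤ 1) (h2 : ∀ i ∈ s, (B i).card ≤ n) :
    (Fintype.piFinset B).card ≤ n ^ s.card := by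
  rw [Fintype.card_piFinset]
  calc ∏ i, (B i).card ≤ ∏ i, if i ∈ s then n else 1 :=
        Finset.prod_le_prod' fun i _ => by
          by_cases h : i ∈ s <;> simp only [h, if_true, if_false]
          · exact h2 i h
          · exact h1 i h
    _ = n ^ (Finset.univ.filter (· ∈ s)).card := prod_if_pow ..
    _ = n ^ s.card := by rw [show Finset.univ.filter (· ∈ s) = s from by ext x; simp]

lemma piFinset_card_eq (B : ∀ i, Finset (β i)) (s : Finset ι) (n : ℕ)
    (h1 : ∀ i ∉ s, (B i).card = 1) (h2 : ∀ i ∈ s, (B i).card = n) :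
    (Fintype.piFinset B).card = n ^ s.card := by
  rw [Fintype.card_piFinset]
  calc ∏ i, (B i).card = ∏ i, if i ∈ s then n else 1 :=
        Finset.prod_congr rfl fun i _ => by
          by_cases h : i ∈ s <;> simp only [h, if_true, if_false]
          · exact h2 i h
          · exact h1 i h
    _ = n ^ (Finset.univ.filter (· ∈ s)).card := prod_if_pow ..
    _ = n ^ s.card := by rw [show Finset.univ.filter (· ∈ s) = s from by ext x; simp]

lemma piFinset_card_le_mul (B : ∀ i, Finset (β i)) (i₀ : ι) (s : Finset ι) (d n : ℕ)
    (hi₀ : i₀ ∈ s) (hd : (B i₀).card ≤ d)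
    (h1 : ∀ i ∉ s, (B i).card ≤ 1) (h2 : ∀ i ∈ s, i ≠ i₀ → (B i).card ≤ n) :
    (Fintype.piFinset B).card ≤ d * n ^ (s.card - 1) := by
  rw [Fintype.card_piFinset, ← Finset.mul_prod_erase _ _ (Finset.mem_univ i₀)]
  have key : ∏ i ∈ Finset.univ.erase i₀, (B i).card ≤ n ^ (s.card - 1) := by
    calc ∏ i ∈ Finset.univ.erase i₀, (B i).card
        ≤ ∏ i ∈ Finset.univ.erase i₀, if i ∈ s then n else 1 :=
          Finset.prod_le_prod' fun i hi => by
            by_cases h : i ∈ s <;> simp only [h, if_true, if_false]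
            · exact h2 i h (Finset.mem_erase.1 hi).1
            · exact h1 i h
      _ = n ^ ((Finset.univ.erase i₀).filter (· ∈ s)).card := prod_if_pow ..
      _ = n ^ (s.erase i₀).card := by
          rw [show (Finset.univ.erase i₀).filter (· ∈ s) = s.erase i₀ from by
            ext x; simp [Finset.mem_erase, Finset.mem_filter, and_comm]]
      _ = n ^ (s.card - 1) := by rw [Finset.card_erase_of_mem hi₀]
  exact Nat.mul_le_mul hd key

end helpers

section sets
variable {α : Type*} [DecidableEq α] {R : ℕ}

/-- Candidate set for the joint vertices `w`. -/
noncomputable def Wset (A : Fin (R+1) → Finset α) (a : Fin (R+1) → α) : Finset (Fin (R+1) → α) :=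
  Fintype.piFinset fun i => if (i : ℕ) < R then A i else {a i}

/-- Candidate set for the leg vertices `u`. -/
noncomputable def Uset (A : Fin (R+1) → Finset α) (a : Fin (R+1) → α) :
    Finset (Fin (R+1) → Fin (R+1) → α) :=
  Fintype.piFinset fun i => if (i : ℕ) < R then
    Fintype.piFinset (fun j => if j = i then {a i} else A j) else {a}

/-- The index set of the "free" coordinates `i < R`. -/
noncomputable def Fset (R : ℕ) : Finset (Fin (R+1)) :=
  Finset.univ.filter fun i => (i : ℕ) < R

lemma mem_Fset {i : Fin (R+1)} : i ∈ Fset R ↔ (i : ℕ) < R := by simp [Fset]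

lemma card_Fset : (Fset R).card = R := by
  have : Fset R = Finset.univ.erase (Fin.last R) := by
    ext i
    have := i.isLt
    simp only [Fset, Finset.mem_filter, Finset.mem_univ, true_and, Finset.mem_erase,
      and_true, Ne, Fin.ext_iff, Fin.val_last]
    omega
  rw [this, Finset.card_erase_of_mem (Finset.mem_univ _), Finset.card_univ, Fintype.card_fin]
  omega

variable {A : Fin (R+1) → Finset α} {a : Fin (R+1) → α}

lemma Wset_lt {w : Fin (R+1) → α} (hw : w ∈ Wset A a) {i : Fin (R+1)} (hi : (i : ℕ) < R) :
    w i ∈ A i := by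
  have := Fintype.mem_piFinset.1 hw i
  simpa [hi] using this

lemma Wset_last {w : Fin (R+1) → α} (hw : w ∈ Wset A a) {i : Fin (R+1)} (hi : ¬ (i : ℕ) < R) :
    w i = a i := by
  have := Fintype.mem_piFinset.1 hw i
  simpa [hi] using this

lemma Uset_lt {u : Fin (R+1) → Fin (R+1) → α} (hu : u ∈ Uset A a) {i j : Fin (R+1)}
    (hi : (i : ℕ) < R) (hj : j ≠ i) : u i j ∈ A j := by
  have := Fintype.mem_piFinset.1 hu i
  rw [if_pos hi] at this
  have := Fintype.mem_piFinset.1 this j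
  simpa [hj] using this

lemma Uset_diag {u : Fin (R+1) → Fin (R+1) → α} (hu : u ∈ Uset A a) {i : Fin (R+1)}
    (hi : (i : ℕ) < R) : u i i = a i := by
  have := Fintype.mem_piFinset.1 hu i
  rw [if_pos hi] at this
  have := Fintype.mem_piFinset.1 this i
  simpa using this

lemma Uset_last {u : Fin (R+1) → Fin (R+1) → α} (hu : u ∈ Uset A a) {i : Fin (R+1)}
    (hi : ¬ (i : ℕ) < R) : u i = a := by
  have := Fintype.mem_piFinset.1 hu i
  simpa [hi] using this

lemma card_Wset {n : ℕ} (hA : ∀ i, (A i).card = n) : (Wset A a).card = n ^ R := by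
  have h := piFinset_card_eq (fun i : Fin (R+1) => if (i : ℕ) < R then A i else {a i}) (Fset R) n
    (fun i hi => by rw [mem_Fset] at hi; simp [hi])
    (fun i hi => by rw [mem_Fset] at hi; simp [hi, hA])
  rw [Wset, h, card_Fset]

lemma card_inner {n : ℕ} (hA : ∀ i, (A i).card = n) (i : Fin (R+1)) :
    (Fintype.piFinset fun j => if j = i then ({a i} : Finset α) else A j).card = n ^ R := by
  have hcard : (Finset.univ.erase i).card = R := by
    rw [Finset.card_erase_of_mem (Finset.mem_univ _), Finset.card_univ, Fintype.card_fin]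
    omega
  have h := piFinset_card_eq (fun j : Fin (R+1) => if j = i then ({a i} : Finset α) else A j)
    (Finset.univ.erase i) n
    (fun j hj => by
      have hji : j = i := by simpa using hj
      simp [hji])
    (fun j hj => by
      have hji : j ≠ i := (Finset.mem_erase.1 hj).1
      simp [hji, hA])
  rw [h, hcard]

lemma card_Uset {n : ℕ} (hA : ∀ i, (A i).card = n) : (Uset A a).card = n ^ (R * R) := by
  have h := piFinset_card_eq (fun i : Fin (R+1) => if (i : ℕ) < R then
      Fintype.piFinset (fun j : Fin (R+1) => if j = i then ({a i} : Finset α) else A j) else {a})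
    (Fset R) (n ^ R)
    (fun i hi => by rw [mem_Fset] at hi; simp [hi])
    (fun i hi => by rw [mem_Fset] at hi; simpa [hi] using card_inner (a := a) hA i)
  rw [Uset, h, card_Fset, ← pow_mul]

end sets

section bounds
variable {α : Type*} [DecidableEq α] {R n : ℕ} {A : Fin (R+1) → Finset α} {a : Fin (R+1) → α}

lemma card_inner_pin (hA : ∀ i, (A i).card = n) (i₁ j₁ : Fin (R+1)) (hj₁ : j₁ ≠ i₁) (v : α) :
    (Fintype.piFinset (Function.update
      (fun j : Fin (R+1) => if j = i₁ then ({a i₁} : Finset α) else A j) j₁ {v})).card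
      ≤ n ^ (R - 1) := by
  have hs : j₁ ∈ Finset.univ.erase i₁ := Finset.mem_erase.2 ⟨hj₁, Finset.mem_univ _⟩
  have hcard : (((Finset.univ : Finset (Fin (R+1))).erase i₁).erase j₁).card = R - 1 := by
    rw [Finset.card_erase_of_mem hs, Finset.card_erase_of_mem (Finset.mem_univ _),
      Finset.card_univ, Fintype.card_fin]
    omega
  rw [← hcard]
  refine piFinset_card_le _ _ n (fun j hj => ?_) (fun j hj => ?_)
  · rcases Finset.mem_erase.not.1 hj with h
    by_cases h1 : j = j₁
    · subst h1; simp
    · have h2 : j = i₁ := by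
        by_contra h2
        exact h (by simp [h1, h2])
      subst h2
      rw [Function.update_of_ne (Ne.symm hj₁)]
      simp
  · have h1 : j ≠ j₁ := (Finset.mem_erase.1 hj).1
    have h2 : j ≠ i₁ := (Finset.mem_erase.1 (Finset.mem_erase.1 hj).2).1
    rw [Function.update_of_ne h1]
    simp [h2, hA]

lemma card_Wset_pin (hA : ∀ i, (A i).card = n) (i₁ : Fin (R+1)) (hi₁ : (i₁ : ℕ) < R) (v : α) :
    (Fintype.piFinset (Function.update
      (fun i : Fin (R+1) => if (i : ℕ) < R then A i else {a i}) i₁ {v})).card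
      ≤ 1 * n ^ (R - 1) := by
  rw [show R - 1 = (Fset R).card - 1 by rw [card_Fset]]
  refine piFinset_card_le_mul _ i₁ (Fset R) 1 n (mem_Fset.2 hi₁) ?_ ?_ ?_
  · simp
  · intro i hi
    rw [mem_Fset] at hi
    push_neg at hi
    have hne : i ≠ i₁ := fun h => by subst h; omega
    simp [Function.update_of_ne hne, Nat.not_lt.2 hi]
  · intro i hi hne
    rw [mem_Fset] at hi
    simp [Function.update_of_ne hne, hi, hA]

lemma card_Uset_pin (hA : ∀ i, (A i).card = n) (i₁ : Fin (R+1)) (hi₁ : (i₁ : ℕ) < R)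
    (v : Fin (R+1) → α) :
    (Fintype.piFinset (Function.update
      (fun i : Fin (R+1) => if (i : ℕ) < R then
        Fintype.piFinset (fun j : Fin (R+1) => if j = i then ({a i} : Finset α) else A j)
        else {a}) i₁ {v})).card
      ≤ 1 * (n ^ R) ^ (R - 1) := by
  rw [show R - 1 = (Fset R).card - 1 by rw [card_Fset]]
  refine piFinset_card_le_mul _ i₁ (Fset R) 1 (n ^ R) (mem_Fset.2 hi₁) ?_ ?_ ?_
  · simp
  · intro i hi
    rw [mem_Fset] at hi
    push_neg at hi
    have hne : i ≠ i₁ := fun h => by subst h; omega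
    simp [Function.update_of_ne hne, Nat.not_lt.2 hi]
  · intro i hi hne
    rw [mem_Fset] at hi
    rw [Function.update_of_ne hne]
    simp only [hi, if_true]
    exact (card_inner (a := a) hA i).le

lemma constraintU (hA : ∀ i, (A i).card = n)
    (i₁ j₁ : Fin (R+1)) (hi₁ : (i₁ : ℕ) < R) (hj₁ : j₁ ≠ i₁)
    (c : (Fin (R+1) → α) × (Fin (R+1) → Fin (R+1) → α) → α)
    (hc : ∀ p q : (Fin (R+1) → α) × (Fin (R+1) → Fin (R+1) → α), p.1 = q.1 →
      (∀ k, k ≠ i₁ → p.2 k = q.2 k) → (∀ j, j ≠ j₁ → p.2 i₁ j = q.2 i₁ j) → c p = c q) :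
    ((Wset A a ×ˢ Uset A a).filter fun p => p.2 i₁ j₁ = c p).card
      ≤ n ^ R * (n ^ (R - 1) * (n ^ R) ^ (R - 1)) := by
  classical
  set Ucomp := fun i : Fin (R+1) => if (i : ℕ) < R then
      Fintype.piFinset (fun j : Fin (R+1) => if j = i then ({a i} : Finset α) else A j)
      else ({a} : Finset (Fin (R+1) → α)) with hUcomp
  set T := Fintype.piFinset (Function.update
      (fun j : Fin (R+1) => if j = i₁ then ({a i₁} : Finset α) else A j) j₁ {a j₁}) with hT
  have key : ((Wset A a ×ˢ Uset A a).filter fun p => p.2 i₁ j₁ = c p).card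
      ≤ (Wset A a ×ˢ Fintype.piFinset (Function.update Ucomp i₁ T)).card := by
    refine Finset.card_le_card_of_injOn
      (fun p => (p.1, Function.update p.2 i₁ (Function.update (p.2 i₁) j₁ (a j₁)))) ?_ ?_
    · intro p hp
      rw [Finset.mem_coe, Finset.mem_filter] at hp
      obtain ⟨hpmem, -⟩ := hp
      rw [Finset.mem_product] at hpmem
      obtain ⟨hw, hu⟩ := hpmem
      dsimp only
      rw [Finset.mem_coe, Finset.mem_product]
      refine ⟨hw, Fintype.mem_piFinset.2 fun i => ?_⟩
      dsimp only
      by_cases hii : i = i₁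
      · subst hii
        rw [Function.update_self, Function.update_self]
        refine Fintype.mem_piFinset.2 fun j => ?_
        by_cases hjj : j = j₁
        · subst hjj
          rw [Function.update_self, Function.update_self]
          exact Finset.mem_singleton_self _
        · rw [Function.update_of_ne hjj, Function.update_of_ne hjj]
          by_cases hji : j = i
          · subst hji
            simp [Uset_diag hu hi₁]
          · rw [if_neg hji]
            exact Uset_lt hu hi₁ hji
      · rw [Function.update_of_ne hii, Function.update_of_ne hii]
        exact Fintype.mem_piFinset.1 hu i
    · intro p hp q hq hpq
      simp only [Finset.coe_filter, Set.mem_setOf_eq, Finset.mem_product] at hp hq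
      obtain ⟨-, hpc⟩ := hp
      obtain ⟨-, hqc⟩ := hq
      rw [Prod.mk.injEq] at hpq
      obtain ⟨h1, h2⟩ := hpq
      have hk : ∀ k, k ≠ i₁ → p.2 k = q.2 k := by
        intro k hkne
        have := congrFun h2 k
        rwa [Function.update_of_ne hkne, Function.update_of_ne hkne] at this
      have hj : ∀ j, j ≠ j₁ → p.2 i₁ j = q.2 i₁ j := by
        intro j hjne
        have := congrFun h2 i₁
        rw [Function.update_self, Function.update_self] at this
        have := congrFun this j
        rwa [Function.update_of_ne hjne, Function.update_of_ne hjne] at this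
      have hcc : c p = c q := hc p q h1 hk hj
      have hj₁eq : p.2 i₁ j₁ = q.2 i₁ j₁ := by rw [hpc, hqc, hcc]
      have h2' : p.2 = q.2 := by
        funext k j
        by_cases hkk : k = i₁
        · subst hkk
          by_cases hjj : j = j₁
          · subst hjj; exact hj₁eq
          · exact hj j hjj
        · rw [hk k hkk]
      exact Prod.ext h1 h2'
  refine key.trans ?_
  rw [Finset.card_product, card_Wset (a := a) hA]
  refine Nat.mul_le_mul_left _ ?_
  have hd : (Function.update Ucomp i₁ T i₁).card ≤ n ^ (R - 1) := by
    rw [Function.update_self, hT]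
    exact card_inner_pin hA i₁ j₁ hj₁ (a j₁)
  have := piFinset_card_le_mul (Function.update Ucomp i₁ T) i₁ (Fset R)
    (n ^ (R - 1)) (n ^ R) (mem_Fset.2 hi₁) hd
    (fun i hi => by
      rw [mem_Fset] at hi
      have hne : i ≠ i₁ := fun h => by subst h; omega
      rw [Function.update_of_ne hne, hUcomp]
      simp [hi])
    (fun i hi hne => by
      rw [mem_Fset] at hi
      rw [Function.update_of_ne hne, hUcomp]
      simp only [hi, if_true]
      exact (card_inner (a := a) hA i).le)
  rwa [card_Fset] at this

lemma card_le_of_fibers {γ β : Type*} [DecidableEq β] (S : Finset γ) (φ : γ → β) (T : Finset β)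
    (him : ∀ x ∈ S, φ x ∈ T) (K : ℕ) (hfib : ∀ b, (S.filter fun x => φ x = b).card ≤ K) :
    S.card ≤ K * T.card :=
  le_trans (Finset.card_le_mul_card_image (f := φ) S K (fun b _ => hfib b))
    (Nat.mul_le_mul_left K (Finset.card_le_card (Finset.image_subset_iff.2 him)))

lemma E2bound (hA : ∀ i, (A i).card = n) (i : Fin (R+1)) (hi : (i : ℕ) < R)
    (N' : Finset (Fin (R+1) → α)) :
    ((Wset A a ×ˢ Uset A a).filter fun p => p.2 i ∈ N').card
      ≤ (n ^ R * (1 * (n ^ R) ^ (R - 1))) * N'.card := by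
  classical
  refine card_le_of_fibers _
    (fun p : (Fin (R+1) → α) × (Fin (R+1) → Fin (R+1) → α) => p.2 i) N'
    (fun p hp => (Finset.mem_filter.1 hp).2) _ (fun b => ?_)
  have hsub : ((Wset A a ×ˢ Uset A a).filter fun p => p.2 i ∈ N').filter (fun p => p.2 i = b)
      ⊆ Wset A a ×ˢ Fintype.piFinset (Function.update
        (fun k : Fin (R+1) => if (k : ℕ) < R then
          Fintype.piFinset (fun j : Fin (R+1) => if j = k then ({a k} : Finset α) else A j)
          else {a}) i {b}) := by
    intro p hp
    rw [Finset.mem_filter] at hp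
    obtain ⟨hp1, hp2⟩ := hp
    rw [Finset.mem_filter] at hp1
    obtain ⟨hp1, -⟩ := hp1
    rw [Finset.mem_product] at hp1 ⊢
    refine ⟨hp1.1, Fintype.mem_piFinset.2 fun k => ?_⟩
    by_cases hk : k = i
    · subst hk
      rw [Function.update_self, hp2]
      exact Finset.mem_singleton_self _
    · rw [Function.update_of_ne hk]
      exact Fintype.mem_piFinset.1 hp1.2 k
  calc _ ≤ _ := Finset.card_le_card hsub
    _ ≤ n ^ R * (1 * (n ^ R) ^ (R - 1)) := by
        rw [Finset.card_product, card_Wset (a := a) hA]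
        exact Nat.mul_le_mul_left _ (card_Uset_pin hA i hi b)

lemma E3bound (hA : ∀ i, (A i).card = n) (i : Fin (R+1)) (hi : (i : ℕ) < R)
    (N' : Finset (Fin (R+1) → α)) :
    ((Wset A a ×ˢ Uset A a).filter
        fun p => Function.update (p.2 i) i (p.1 i) ∈ N').card
      ≤ ((1 * n ^ (R - 1)) * (1 * (n ^ R) ^ (R - 1))) * N'.card := by
  classical
  refine card_le_of_fibers _
    (fun p : (Fin (R+1) → α) × (Fin (R+1) → Fin (R+1) → α) =>
      Function.update (p.2 i) i (p.1 i)) N'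
    (fun p hp => (Finset.mem_filter.1 hp).2) _ (fun b => ?_)
  have hsub : (((Wset A a ×ˢ Uset A a).filter
        fun p => Function.update (p.2 i) i (p.1 i) ∈ N').filter
          (fun p => Function.update (p.2 i) i (p.1 i) = b))
      ⊆ (Fintype.piFinset (Function.update
          (fun k : Fin (R+1) => if (k : ℕ) < R then A k else {a k}) i {b i})) ×ˢ
        (Fintype.piFinset (Function.update
          (fun k : Fin (R+1) => if (k : ℕ) < R then
            Fintype.piFinset (fun j : Fin (R+1) => if j = k then ({a k} : Finset α) else A j)
            else {a}) i {Function.update b i (a i)})) := by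
    intro p hp
    rw [Finset.mem_filter] at hp
    obtain ⟨hp1, hp2⟩ := hp
    rw [Finset.mem_filter] at hp1
    obtain ⟨hp1, -⟩ := hp1
    rw [Finset.mem_product] at hp1 ⊢
    obtain ⟨hw, hu⟩ := hp1
    have hwi : p.1 i = b i := by
      have := congrFun hp2 i
      rwa [Function.update_self] at this
    have hui : p.2 i = Function.update b i (a i) := by
      funext j
      by_cases hj : j = i
      · subst hj
        rw [Function.update_self, Uset_diag hu hi]
      · rw [Function.update_of_ne hj]
        have := congrFun hp2 j
        rwa [Function.update_of_ne hj] at this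
    constructor
    · refine Fintype.mem_piFinset.2 fun k => ?_
      by_cases hk : k = i
      · subst hk
        rw [Function.update_self, hwi]
        exact Finset.mem_singleton_self _
      · rw [Function.update_of_ne hk]
        exact Fintype.mem_piFinset.1 hw k
    · refine Fintype.mem_piFinset.2 fun k => ?_
      by_cases hk : k = i
      · subst hk
        rw [Function.update_self, hui]
        exact Finset.mem_singleton_self _
      · rw [Function.update_of_ne hk]
        exact Fintype.mem_piFinset.1 hu k
  calc _ ≤ _ := Finset.card_le_card hsub
    _ ≤ (1 * n ^ (R - 1)) * (1 * (n ^ R) ^ (R - 1)) := by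
        rw [Finset.card_product]
        exact Nat.mul_le_mul (card_Wset_pin hA i hi (b i))
          (card_Uset_pin hA i hi (Function.update b i (a i)))

lemma E4bound (hA : ∀ i, (A i).card = n) (N' : Finset (Fin (R+1) → α)) :
    ((Wset A a ×ˢ Uset A a).filter
        fun p => (fun j : Fin (R+1) => if (j : ℕ) < R then p.1 j else a j) ∈ N').card
      ≤ n ^ (R * R) * N'.card := by
  classical
  refine card_le_of_fibers _
    (fun p : (Fin (R+1) → α) × (Fin (R+1) → Fin (R+1) → α) =>
      fun j : Fin (R+1) => if (j : ℕ) < R then p.1 j else a j)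
    N' (fun p hp => (Finset.mem_filter.1 hp).2) _ (fun b => ?_)
  have hsub : (((Wset A a ×ˢ Uset A a).filter
        fun p => (fun j : Fin (R+1) => if (j : ℕ) < R then p.1 j else a j) ∈ N').filter
          (fun p => (fun j : Fin (R+1) => if (j : ℕ) < R then p.1 j else a j) = b))
      ⊆ ({fun j : Fin (R+1) => if (j : ℕ) < R then b j else a j} : Finset (Fin (R+1) → α))
          ×ˢ Uset A a := by
    intro p hp
    rw [Finset.mem_filter] at hp
    obtain ⟨hp1, hp2⟩ := hp
    rw [Finset.mem_filter] at hp1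
    obtain ⟨hp1, -⟩ := hp1
    rw [Finset.mem_product] at hp1 ⊢
    obtain ⟨hw, hu⟩ := hp1
    refine ⟨Finset.mem_singleton.2 ?_, hu⟩
    funext j
    by_cases hj : (j : ℕ) < R
    · have := congrFun hp2 j
      simp only [hj, if_true] at this ⊢
      exact this
    · simp only [hj, if_false]
      exact Wset_last hw hj
  calc _ ≤ _ := Finset.card_le_card hsub
    _ ≤ n ^ (R * R) := by
        rw [Finset.card_product, Finset.card_singleton, one_mul,
          card_Uset (a := a) hA]

end bounds



section legs
variable {α : Type*} [DecidableEq α] {R n : ℕ} {A : Fin (R+1) → Finset α} {a : Fin (R+1) → α}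

lemma mem_legVerts_cases {w : Fin (R+1) → α} {u : Fin (R+1) → Fin (R+1) → α}
    {i : Fin (R+1)} {x : Fin (R+1) × α} (hx : x ∈ legVerts a w u i) :
    x = (i, a i) ∨ x = (i, w i) ∨ ∃ j, j ≠ i ∧ x = (j, u i j) := by
  simp only [legVerts, Finset.mem_union, Finset.mem_insert, Finset.mem_singleton,
    Finset.mem_image, Finset.mem_filter, Finset.mem_univ, true_and] at hx
  rcases hx with (h | h) | ⟨j, hj, h⟩
  · exact Or.inl h
  · exact Or.inr (Or.inl h)
  · exact Or.inr (Or.inr ⟨j, hj, h.symm⟩)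

lemma E1bound (hA : ∀ i, (A i).card = n) (i : Fin (R+1)) (hi : (i : ℕ) < R) :
    ((Wset A a ×ˢ Uset A a).filter fun p => p.1 i = a i).card
      ≤ (1 * n ^ (R - 1)) * n ^ (R * R) := by
  classical
  have hsub : ((Wset A a ×ˢ Uset A a).filter fun p => p.1 i = a i)
      ⊆ (Fintype.piFinset (Function.update
          (fun k : Fin (R+1) => if (k : ℕ) < R then A k else {a k}) i {a i})) ×ˢ Uset A a := by
    intro p hp
    rw [Finset.mem_filter] at hp
    obtain ⟨hp1, hp2⟩ := hp
    rw [Finset.mem_product] at hp1 ⊢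
    refine ⟨Fintype.mem_piFinset.2 fun k => ?_, hp1.2⟩
    by_cases hk : k = i
    · subst hk
      rw [Function.update_self, hp2]
      exact Finset.mem_singleton_self _
    · rw [Function.update_of_ne hk]
      exact Fintype.mem_piFinset.1 hp1.1 k
  calc _ ≤ _ := Finset.card_le_card hsub
    _ ≤ (1 * n ^ (R - 1)) * n ^ (R * R) := by
        rw [Finset.card_product, card_Uset (a := a) hA]
        exact Nat.mul_le_mul_right _ (card_Wset_pin hA i hi (a i))

lemma E5bound (hA : ∀ i, (A i).card = n) (i i' : Fin (R+1)) (hi : (i : ℕ) < R)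
    (hi' : (i' : ℕ) < R) (hne : i ≠ i') :
    ((Wset A a ×ˢ Uset A a).filter fun p =>
        ¬ Disjoint (legVerts a p.1 p.2 i) (legVerts a p.1 p.2 i')).card
      ≤ (R + 5) * (n ^ R * (n ^ (R - 1) * (n ^ R) ^ (R - 1))) := by
  classical
  set X := n ^ R * (n ^ (R - 1) * (n ^ R) ^ (R - 1)) with hX
  set P := Wset A a ×ˢ Uset A a with hP
  set S1 := P.filter (fun p => p.2 i' i = a i) with hS1
  set S2 := P.filter (fun p => p.2 i' i = p.1 i) with hS2
  set S3 := P.filter (fun p => p.2 i i' = a i') with hS3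
  set S4 := P.filter (fun p => p.2 i i' = p.1 i') with hS4
  set T5 := Finset.univ.biUnion (fun j : Fin (R+1) =>
    P.filter fun p => j ≠ i ∧ j ≠ i' ∧ p.2 i j = p.2 i' j) with hT5
  have hcover : P.filter (fun p =>
      ¬ Disjoint (legVerts a p.1 p.2 i) (legVerts a p.1 p.2 i'))
      ⊆ S1 ∪ S2 ∪ S3 ∪ S4 ∪ T5 := by
    intro p hp
    rw [Finset.mem_filter] at hp
    obtain ⟨hpP, hpd⟩ := hp
    obtain ⟨x, hx1, hx2⟩ := Finset.not_disjoint_iff.1 hpd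
    have c1 := mem_legVerts_cases hx1
    have c2 := mem_legVerts_cases hx2
    have D : p.2 i' i = a i ∨ p.2 i' i = p.1 i ∨ p.2 i i' = a i' ∨ p.2 i i' = p.1 i'
        ∨ ∃ j, j ≠ i ∧ j ≠ i' ∧ p.2 i j = p.2 i' j := by
      rcases c1 with h1 | h1 | ⟨j, hj, h1⟩
      · rcases c2 with h2 | h2 | ⟨j', hj', h2⟩
        · rw [h1, Prod.ext_iff] at h2; exact absurd h2.1 hne
        · rw [h1, Prod.ext_iff] at h2; exact absurd h2.1 hne
        · rw [h1, Prod.ext_iff] at h2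
          obtain ⟨hji, hval⟩ := h2
          subst hji
          exact Or.inl hval.symm
      · rcases c2 with h2 | h2 | ⟨j', hj', h2⟩
        · rw [h1, Prod.ext_iff] at h2; exact absurd h2.1 hne
        · rw [h1, Prod.ext_iff] at h2; exact absurd h2.1 hne
        · rw [h1, Prod.ext_iff] at h2
          obtain ⟨hji, hval⟩ := h2
          subst hji
          exact Or.inr (Or.inl hval.symm)
      · rcases c2 with h2 | h2 | ⟨j', hj', h2⟩
        · rw [h1, Prod.ext_iff] at h2
          obtain ⟨hji, hval⟩ := h2
          subst hji
          exact Or.inr (Or.inr (Or.inl hval))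
        · rw [h1, Prod.ext_iff] at h2
          obtain ⟨hji, hval⟩ := h2
          subst hji
          exact Or.inr (Or.inr (Or.inr (Or.inl hval)))
        · rw [h1, Prod.ext_iff] at h2
          obtain ⟨hji, hval⟩ := h2
          subst hji
          exact Or.inr (Or.inr (Or.inr (Or.inr ⟨j, hj, hj', hval⟩)))
    rcases D with h | h | h | h | ⟨j, hj1, hj2, h⟩
    · refine Finset.mem_union_left _ (Finset.mem_union_left _ (Finset.mem_union_left _
        (Finset.mem_union_left _ ?_)))
      rw [hS1]; exact Finset.mem_filter.2 ⟨hpP, h⟩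
    · refine Finset.mem_union_left _ (Finset.mem_union_left _ (Finset.mem_union_left _
        (Finset.mem_union_right _ ?_)))
      rw [hS2]; exact Finset.mem_filter.2 ⟨hpP, h⟩
    · refine Finset.mem_union_left _ (Finset.mem_union_left _ (Finset.mem_union_right _ ?_))
      rw [hS3]; exact Finset.mem_filter.2 ⟨hpP, h⟩
    · refine Finset.mem_union_left _ (Finset.mem_union_right _ ?_)
      rw [hS4]; exact Finset.mem_filter.2 ⟨hpP, h⟩
    · refine Finset.mem_union_right _ ?_
      rw [hT5]
      exact Finset.mem_biUnion.2 ⟨j, Finset.mem_univ _, Finset.mem_filter.2 ⟨hpP, hj1, hj2, h⟩⟩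
  have hS1c : S1.card ≤ X := constraintU hA i' i hi' hne (fun _ => a i)
    (fun p q _ _ _ => rfl)
  have hS2c : S2.card ≤ X := constraintU hA i' i hi' hne (fun p => p.1 i)
    (fun p q h1 _ _ => congrFun h1 i)
  have hS3c : S3.card ≤ X := constraintU hA i i' hi (Ne.symm hne) (fun _ => a i')
    (fun p q _ _ _ => rfl)
  have hS4c : S4.card ≤ X := constraintU hA i i' hi (Ne.symm hne) (fun p => p.1 i')
    (fun p q h1 _ _ => congrFun h1 i')
  have hT5c : T5.card ≤ (R + 1) * X := by
    refine le_trans (Finset.card_biUnion_le) ?_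
    have hbound : ∀ j : Fin (R+1),
        (P.filter fun p => j ≠ i ∧ j ≠ i' ∧ p.2 i j = p.2 i' j).card ≤ X := by
      intro j
      by_cases hcj : j ≠ i ∧ j ≠ i'
      · refine le_trans (Finset.card_le_card
          (Finset.monotone_filter_right P (fun p _ hp => hp.2.2))) ?_
        exact constraintU hA i j hi hcj.1 (fun p => p.2 i' j)
          (fun p q _ hk _ => congrFun (hk i' (Ne.symm hne)) j)
      · rw [Finset.filter_false_of_mem (fun p _ => by tauto)]
        exact Nat.zero_le _
    calc ∑ j : Fin (R+1), (P.filter fun p => j ≠ i ∧ j ≠ i' ∧ p.2 i j = p.2 i' j).card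
        ≤ ∑ _j : Fin (R+1), X := Finset.sum_le_sum fun j _ => hbound j
      _ = (R + 1) * X := by rw [Finset.sum_const, Finset.card_univ, Fintype.card_fin,
            smul_eq_mul]
  calc (P.filter fun p =>
      ¬ Disjoint (legVerts a p.1 p.2 i) (legVerts a p.1 p.2 i')).card
      ≤ (S1 ∪ S2 ∪ S3 ∪ S4 ∪ T5).card := Finset.card_le_card hcover
    _ ≤ (S1 ∪ S2 ∪ S3 ∪ S4).card + T5.card := Finset.card_union_le _ _
    _ ≤ ((S1 ∪ S2 ∪ S3).card + S4.card) + T5.card :=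
        Nat.add_le_add_right (Finset.card_union_le _ _) _
    _ ≤ (((S1 ∪ S2).card + S3.card) + S4.card) + T5.card := by
        exact Nat.add_le_add_right (Nat.add_le_add_right (Finset.card_union_le _ _) _) _
    _ ≤ (((S1.card + S2.card) + S3.card) + S4.card) + T5.card := by
        exact Nat.add_le_add_right (Nat.add_le_add_right
          (Nat.add_le_add_right (Finset.card_union_le _ _) _) _) _
    _ ≤ (((X + X) + X) + X) + (R + 1) * X := by
        exact Nat.add_le_add (Nat.add_le_add (Nat.add_le_add
          (Nat.add_le_add hS1c hS2c) hS3c) hS4c) hT5c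
    _ = (R + 5) * X := by ring

end legs

set_option maxHeartbeats 2000000 in
/-- **Very dense case** (Lemma 2.8 of the paper): in an almost-complete
`r`-partite `r`-uniform hypergraph on parts of size `n` (with `n` sufficiently
large in terms of `ε` and `δ = ε/(10r)`), there are almost-spanning subsets
`A'_i ⊆ A_i` such that every crossing tuple supports at least `n^{r(r-1)}/2`
octopuses. -/
theorem octopuses_dense {α : Type*} [DecidableEq α] (r : ℕ) (hr : 2 ≤ r)
    (ε : ℝ) (hε : 0 < ε) (hε1 : ε < 1 / (10 * r)) :
    ∃ n₀ : ℕ, ∀ n ≥ n₀, ∀ A : Fin r → Finset α,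
      (∀ i, (A i).card = n) → (∀ i j, i ≠ j → Disjoint (A i) (A j)) →
      ∀ H ⊆ Fintype.piFinset A,
        (1 - ε / (10 * r)) * (n : ℝ) ^ r ≤ H.card →
        ∃ A' : Fin r → Finset α, (∀ i, A' i ⊆ A i) ∧
          (∀ i, ⌈(1 - ε) * (n : ℝ)⌉₊ ≤ (A' i).card) ∧
          ∀ a ∈ Fintype.piFinset A',
            (n : ℝ) ^ (r * (r - 1)) / 2 ≤ (octopusCount A H a : ℝ) := by
  classical
  obtain ⟨S, rfl⟩ : ∃ S, r = S + 2 := ⟨r - 2, by omega⟩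
  refine ⟨10 * (S + 6) ^ 3, fun n hn A hA hdisj H hH hHcard => ?_⟩
  have hn1 : 1 ≤ n := le_trans (Nat.one_le_iff_ne_zero.2 (by positivity)) hn
  set q : ℝ := (n : ℝ) with hqdef
  have hq1 : (1 : ℝ) ≤ q := by rw [hqdef]; exact_mod_cast hn1
  have hq0 : (0 : ℝ) < q := lt_of_lt_of_le one_pos hq1
  set N : Finset (Fin (S+2) → α) := Fintype.piFinset A \ H with hNdef
  have hpicard : (Fintype.piFinset A).card = n ^ (S + 2) := by
    rw [Fintype.card_piFinset]
    simp only [hA]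
    rw [Finset.prod_const, Finset.card_univ, Fintype.card_fin]
  have hHle : H.card ≤ n ^ (S + 2) := hpicard ▸ Finset.card_le_card hH
  have hNcard : (N.card : ℝ) ≤ ε / (10 * (S + 2)) * q ^ (S + 2) := by
    have h1 : N.card = n ^ (S + 2) - H.card := by
      rw [hNdef, Finset.card_sdiff_of_subset hH, hpicard]
    have h2 : (N.card : ℝ) = q ^ (S + 2) - H.card := by
      rw [h1, Nat.cast_sub hHle]
      push_cast
      rfl
    rw [h2]
    have := hHcard
    push_cast at this ⊢
    nlinarith [this]
  set d : Fin (S+2) → α → ℕ := fun i v => (N.filter fun e => e i = v).card with hddef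
  set A' : Fin (S+2) → Finset α :=
    fun i => (A i).filter fun v => (d i v : ℝ) * (10 * (S + 2)) ≤ q ^ (S + 1) with hA'def
  have hA'sub : ∀ i, A' i ⊆ A i := fun i => Finset.filter_subset _ _
  have hsize : ∀ i, (1 - ε) * q ≤ ((A' i).card : ℝ) := by
    intro i
    set B := (A i).filter (fun v => ¬ ((d i v : ℝ) * (10 * (S + 2)) ≤ q ^ (S + 1))) with hBdef
    have hsplit : (A' i).card + B.card = n := by
      rw [hA'def, hBdef, Finset.card_filter_add_card_filter_not, hA i]
    have hfib : N.card = ∑ v ∈ A i, d i v := by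
      rw [hddef]
      exact Finset.card_eq_sum_card_fiberwise
        (fun e he => Fintype.mem_piFinset.1 (Finset.mem_sdiff.1 he).1 i)
    have hBsum : ∑ v ∈ B, d i v ≤ N.card := by
      rw [hfib]
      exact Finset.sum_le_sum_of_subset (Finset.filter_subset _ _)
    have hBn : (B.card : ℝ) * q ^ (S + 1) ≤ (10 * (S + 2)) * N.card := by
      have step1 : (B.card : ℝ) * q ^ (S + 1) ≤ ∑ v ∈ B, (d i v : ℝ) * (10 * (S + 2)) := by
        calc (B.card : ℝ) * q ^ (S + 1) = ∑ _v ∈ B, q ^ (S + 1) := by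
              rw [Finset.sum_const, nsmul_eq_mul]
          _ ≤ ∑ v ∈ B, (d i v : ℝ) * (10 * (S + 2)) :=
              Finset.sum_le_sum fun v hv =>
                (not_le.1 (Finset.mem_filter.1 hv).2).le
      have step2 : ∑ v ∈ B, (d i v : ℝ) * (10 * (S + 2)) = (∑ v ∈ B, (d i v : ℝ)) * (10 * (S + 2)) := by
        rw [Finset.sum_mul]
      have step3 : (∑ v ∈ B, (d i v : ℝ)) ≤ (N.card : ℝ) := by
        rw [← Nat.cast_sum]
        exact_mod_cast hBsum
      calc (B.card : ℝ) * q ^ (S + 1) ≤ ∑ v ∈ B, (d i v : ℝ) * (10 * (S + 2)) := step1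
        _ = (∑ v ∈ B, (d i v : ℝ)) * (10 * (S + 2)) := step2
        _ ≤ (N.card : ℝ) * (10 * (S + 2)) := by
            refine mul_le_mul_of_nonneg_right step3 (by positivity)
        _ = (10 * (S + 2)) * N.card := by ring
    have hBle : (B.card : ℝ) ≤ ε * q := by
      have h2 : (10 * ((S : ℝ) + 2)) * N.card ≤ ε * q ^ (S + 2) := by
        have h3 : (10 * ((S : ℝ) + 2)) * (ε / (10 * (S + 2)) * q ^ (S + 2)) = ε * q ^ (S + 2) := by
          field_simp
        calc (10 * ((S : ℝ) + 2)) * N.card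
            ≤ (10 * ((S : ℝ) + 2)) * (ε / (10 * (S + 2)) * q ^ (S + 2)) := by
              refine mul_le_mul_of_nonneg_left ?_ (by positivity)
              exact_mod_cast hNcard
          _ = ε * q ^ (S + 2) := h3
      have h4 : (B.card : ℝ) * q ^ (S + 1) ≤ (ε * q) * q ^ (S + 1) := by
        calc (B.card : ℝ) * q ^ (S + 1) ≤ (10 * ((S : ℝ) + 2)) * N.card := by
              exact_mod_cast hBn
          _ ≤ ε * q ^ (S + 2) := h2
          _ = (ε * q) * q ^ (S + 1) := by ring
      exact le_of_mul_le_mul_right h4 (by positivity)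
    have hcast : ((A' i).card : ℝ) = q - B.card := by
      have : ((A' i).card : ℝ) + B.card = q := by
        rw [← Nat.cast_add, hsplit, hqdef]
      linarith
    rw [hcast]
    linarith
  refine ⟨A', hA'sub, fun i => Nat.ceil_le.2 (hsize i), ?_⟩
  intro a ha
  have haA' : ∀ i, a i ∈ A' i := fun i => Fintype.mem_piFinset.1 ha i
  have haA : ∀ i, a i ∈ A i := fun i => hA'sub i (haA' i)
  have hdeg : ∀ i, ((N.filter fun e => e i = a i).card : ℝ) * (10 * (S + 2)) ≤ q ^ (S + 1) :=
    fun i => (Finset.mem_filter.1 (haA' i)).2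
  set W := Wset A a with hWdef
  set U := Uset A a with hUdef
  set P := W ×ˢ U with hPdef
  have hPcard : P.card = n ^ ((S+1) + (S+1)*(S+1)) := by
    rw [hPdef, Finset.card_product, card_Wset (a := a) hA, card_Uset (a := a) hA, ← pow_add]
  -- P is contained in the ambient product
  have hPsub : P ⊆ (Fintype.piFinset A) ×ˢ (Fintype.piFinset fun _ => Fintype.piFinset A) := by
    intro p hp
    rw [hPdef, Finset.mem_product] at hp
    rw [Finset.mem_product]
    constructor
    · refine Fintype.mem_piFinset.2 fun i => ?_
      by_cases hi : (i : ℕ) < S + 1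
      · exact Wset_lt hp.1 hi
      · rw [Wset_last hp.1 hi]; exact haA i
    · refine Fintype.mem_piFinset.2 fun i => ?_
      refine Fintype.mem_piFinset.2 fun j => ?_
      by_cases hi : (i : ℕ) < S + 1
      · by_cases hj : j = i
        · subst hj; rw [Uset_diag hp.2 hi]; exact haA j
        · exact Uset_lt hp.2 hi hj
      · rw [Uset_last hp.2 hi]; exact haA j
  set Good := P.filter (fun p => IsOctopus H a p.1 p.2) with hGood
  set Bad := P.filter (fun p => ¬ IsOctopus H a p.1 p.2) with hBad
  have hGB : Good.card + Bad.card = P.card := Finset.card_filter_add_card_filter_not _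
  have hGoodle : Good.card ≤ octopusCount A H a := by
    rw [octopusCount]
    refine Finset.card_le_card ?_
    intro p hp
    rw [hGood, Finset.mem_filter] at hp
    exact Finset.mem_filter.2 ⟨hPsub hp.1, hp.2⟩
  -- the bad set is small
  have hBadcard : (Bad.card : ℝ) ≤ q ^ ((S+1) + (S+1)*(S+1)) / 2 := by
    set EE1 := (Fset (S+1)).biUnion (fun i => P.filter fun p => p.1 i = a i) with hEE1
    set EE2 := (Fset (S+1)).biUnion
      (fun i => P.filter fun p => Function.update (p.2 i) i (a i) ∉ H) with hEE2
    set EE3 := (Fset (S+1)).biUnion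
      (fun i => P.filter fun p => Function.update (p.2 i) i (p.1 i) ∉ H) with hEE3
    set EE4 := P.filter
      (fun p => (fun j : Fin (S+2) => if (j : ℕ) < S+1 then p.1 j else a j) ∉ H) with hEE4
    set EE5 := ((Fset (S+1)) ×ˢ (Fset (S+1))).biUnion (fun z => P.filter fun p =>
      z.1 ≠ z.2 ∧ ¬ Disjoint (legVerts a p.1 p.2 z.1) (legVerts a p.1 p.2 z.2)) with hEE5
    set EE6 := (Fset (S+1)).biUnion
      (fun i => P.filter fun p => p.2 i (Fin.last (S+1)) = a (Fin.last (S+1))) with hEE6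
    have hcover : Bad ⊆ EE1 ∪ EE2 ∪ EE3 ∪ EE4 ∪ EE5 ∪ EE6 := by
      intro p hp
      rw [hBad, Finset.mem_filter] at hp
      obtain ⟨hpP, hno⟩ := hp
      have hPp := hpP
      rw [hPdef, Finset.mem_product] at hPp
      obtain ⟨hw, hu⟩ := hPp
      have hC5 : ∀ i : Fin (S+2), ((i : ℕ) = (S+2) - 1 → p.1 i = a i) ∧ p.2 i i = a i ∧
          ((i : ℕ) = (S+2) - 1 → p.2 i = a) := by
        intro i
        refine ⟨fun hi => Wset_last hw (by omega), ?_, fun hi => Uset_last hu (by omega)⟩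
        by_cases hi : (i : ℕ) < S + 1
        · exact Uset_diag hu hi
        · rw [Uset_last hu hi]
      rw [IsOctopus] at hno
      by_cases hC1 : ∀ i : Fin (S+2), (i : ℕ) < (S+2) - 1 →
          a i ≠ p.1 i ∧ Function.update (p.2 i) i (a i) ∈ H ∧
            Function.update (p.2 i) i (p.1 i) ∈ H
      · by_cases hC2 : (fun j : Fin (S+2) => if (j : ℕ) < (S+2) - 1 then p.1 j else a j) ∈ H
        · by_cases hC3 : ∀ i i' : Fin (S+2), (i : ℕ) < (S+2) - 1 → (i' : ℕ) < (S+2) - 1 →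
              i ≠ i' → Disjoint (legVerts a p.1 p.2 i) (legVerts a p.1 p.2 i')
          · by_cases hC4 : ∀ i i' : Fin (S+2), (i : ℕ) < (S+2) - 1 → (i' : ℕ) = (S+2) - 1 →
                (i', a i') ∉ legVerts a p.1 p.2 i
            · exact absurd ⟨hC1, hC2, hC3, hC4, hC5⟩ hno
            · -- E6
              push_neg at hC4
              obtain ⟨i, i', hi, hi', hmem⟩ := hC4
              have hilt : (i : ℕ) < S + 1 := by omega
              have hlast : i' = Fin.last (S+1) := Fin.ext (by rw [Fin.val_last]; omega)
              refine Finset.mem_union_right _ ?_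
              rw [hEE6]
              refine Finset.mem_biUnion.2 ⟨i, mem_Fset.2 hilt, Finset.mem_filter.2 ⟨hpP, ?_⟩⟩
              rcases mem_legVerts_cases hmem with h | h | ⟨j, hj, h⟩
              · rw [Prod.mk.injEq] at h
                have := congrArg Fin.val h.1
                omega
              · rw [Prod.mk.injEq] at h
                have := congrArg Fin.val h.1
                omega
              · rw [Prod.mk.injEq] at h
                obtain ⟨hj1, hj2⟩ := h
                rw [← hlast]
                rw [← hj1] at hj2
                exact hj2.symm
          · -- E5
            push_neg at hC3
            obtain ⟨i, i', hi, hi', hne, hdisj'⟩ := hC3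
            refine Finset.mem_union_left _ (Finset.mem_union_right _ ?_)
            rw [hEE5]
            refine Finset.mem_biUnion.2 ⟨(i, i'), ?_, Finset.mem_filter.2 ⟨hpP, hne, hdisj'⟩⟩
            have m1 : i ∈ Fset (S+1) := mem_Fset.2 (by omega)
            have m2 : i' ∈ Fset (S+1) := mem_Fset.2 (by omega)
            exact Finset.mem_product.2 ⟨m1, m2⟩
        · -- E4
          refine Finset.mem_union_left _ (Finset.mem_union_left _
            (Finset.mem_union_right _ ?_))
          rw [hEE4]
          exact Finset.mem_filter.2 ⟨hpP, hC2⟩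
      · -- E1 / E2 / E3
        push_neg at hC1
        obtain ⟨i, hi, hfail⟩ := hC1
        have hilt : (i : ℕ) < S + 1 := by omega
        by_cases h1 : a i = p.1 i
        · refine Finset.mem_union_left _ (Finset.mem_union_left _ (Finset.mem_union_left _
            (Finset.mem_union_left _ (Finset.mem_union_left _ ?_))))
          rw [hEE1]
          exact Finset.mem_biUnion.2 ⟨i, mem_Fset.2 hilt,
            Finset.mem_filter.2 ⟨hpP, h1.symm⟩⟩
        · by_cases h2 : Function.update (p.2 i) i (a i) ∈ H
          · have h3 : Function.update (p.2 i) i (p.1 i) ∉ H := hfail h1 h2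
            refine Finset.mem_union_left _ (Finset.mem_union_left _ (Finset.mem_union_left _
              (Finset.mem_union_right _ ?_)))
            rw [hEE3]
            exact Finset.mem_biUnion.2 ⟨i, mem_Fset.2 hilt,
              Finset.mem_filter.2 ⟨hpP, h3⟩⟩
          · refine Finset.mem_union_left _ (Finset.mem_union_left _ (Finset.mem_union_left _
              (Finset.mem_union_left _ (Finset.mem_union_right _ ?_))))
            rw [hEE2]
            exact Finset.mem_biUnion.2 ⟨i, mem_Fset.2 hilt,
              Finset.mem_filter.2 ⟨hpP, h2⟩⟩
    -- abbreviations for the relevant real quantities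
    obtain ⟨QM, hQM⟩ : ∃ x : ℝ, x = q ^ ((S+1) + (S+1)*(S+1)) := ⟨_, rfl⟩
    obtain ⟨QK, hQK⟩ : ∃ x : ℝ, x = q ^ S * q ^ ((S+1)*(S+1)) := ⟨_, rfl⟩
    obtain ⟨X, hXdef⟩ : ∃ x : ℝ, x = q ^ (S+1) * (q ^ S * (q ^ (S+1)) ^ S) := ⟨_, rfl⟩
    rw [show q ^ ((S+1) + (S+1)*(S+1)) = QM from hQM.symm]
    have hQM0 : (0:ℝ) < QM := by rw [hQM]; positivity
    have hE1 : (EE1.card : ℝ) ≤ ((S:ℝ)+1) * QK := by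
      have hnat : EE1.card ≤ (S+1) * ((1 * n ^ (S+1-1)) * n ^ ((S+1)*(S+1))) := by
        rw [hEE1]
        calc ((Fset (S+1)).biUnion fun i => P.filter fun p => p.1 i = a i).card
            ≤ ∑ i ∈ Fset (S+1), (P.filter fun p => p.1 i = a i).card :=
              Finset.card_biUnion_le
          _ ≤ ∑ _i ∈ Fset (S+1), (1 * n ^ (S+1-1)) * n ^ ((S+1)*(S+1)) :=
              Finset.sum_le_sum fun i hi => by
                rw [hPdef, hWdef, hUdef]
                exact E1bound (a := a) hA i (mem_Fset.1 hi)
          _ = (S+1) * ((1 * n ^ (S+1-1)) * n ^ ((S+1)*(S+1))) := by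
              rw [Finset.sum_const, card_Fset, smul_eq_mul]
      calc (EE1.card : ℝ) ≤ (((S+1) * ((1 * n ^ (S+1-1)) * n ^ ((S+1)*(S+1))) : ℕ) : ℝ) := by
            exact_mod_cast hnat
        _ = ((S:ℝ)+1) * QK := by
            rw [hQK, hqdef]
            push_cast [Nat.add_sub_cancel]
            ring
    have hE2 : (EE2.card : ℝ) ≤ ((S:ℝ)+1) * (QM / (10*((S:ℝ)+2))) := by
      have hper : ∀ i ∈ Fset (S+1),
          ((P.filter fun p => Function.update (p.2 i) i (a i) ∉ H).card : ℝ)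
          ≤ (q^(S+1) * (1*(q^(S+1))^S)) * (q^(S+1) / (10*((S:ℝ)+2))) := by
        intro i hi
        rw [mem_Fset] at hi
        have hsub : (P.filter fun p => Function.update (p.2 i) i (a i) ∉ H)
            ⊆ P.filter (fun p => p.2 i ∈ N.filter (fun e => e i = a i)) := by
          intro p hp
          rw [Finset.mem_filter] at hp ⊢
          obtain ⟨hpP, hnotH⟩ := hp
          have hPp := hpP
          rw [hPdef, Finset.mem_product] at hPp
          have hupd : Function.update (p.2 i) i (a i) = p.2 i := by
            rw [← Uset_diag hPp.2 hi]
            exact Function.update_eq_self _ _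
          refine ⟨hpP, Finset.mem_filter.2 ⟨Finset.mem_sdiff.2 ⟨?_, ?_⟩, Uset_diag hPp.2 hi⟩⟩
          · refine Fintype.mem_piFinset.2 fun j => ?_
            by_cases hj : j = i
            · subst hj; rw [Uset_diag hPp.2 hi]; exact haA j
            · exact Uset_lt hPp.2 hi hj
          · rwa [hupd] at hnotH
        have hnat : (P.filter fun p => Function.update (p.2 i) i (a i) ∉ H).card
            ≤ (n^(S+1) * (1 * (n^(S+1))^(S+1-1))) * (N.filter (fun e => e i = a i)).card := by
          refine le_trans (Finset.card_le_card hsub) ?_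
          rw [hPdef, hWdef, hUdef]
          exact E2bound hA i hi _
        have hNile : ((N.filter (fun e => e i = a i)).card : ℝ)
            ≤ q^(S+1) / (10*((S:ℝ)+2)) := by
          rw [le_div_iff₀ (by positivity)]
          have := hdeg i
          push_cast at this ⊢
          linarith
        calc ((P.filter fun p => Function.update (p.2 i) i (a i) ∉ H).card : ℝ)
            ≤ ((n^(S+1) * (1 * (n^(S+1))^(S+1-1)) : ℕ) : ℝ)
              * ((N.filter (fun e => e i = a i)).card : ℝ) := by exact_mod_cast hnat
          _ ≤ (q^(S+1) * (1*(q^(S+1))^S)) * (q^(S+1) / (10*((S:ℝ)+2))) := by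
              refine mul_le_mul ?_ hNile (Nat.cast_nonneg _) (by positivity)
              apply le_of_eq
              rw [hqdef]
              push_cast [Nat.add_sub_cancel]
              ring
      have h0 : EE2.card ≤ ∑ i ∈ Fset (S+1),
          (P.filter fun p => Function.update (p.2 i) i (a i) ∉ H).card := by
        rw [hEE2]; exact Finset.card_biUnion_le
      have h1 : (EE2.card : ℝ) ≤ ∑ i ∈ Fset (S+1),
          ((P.filter fun p => Function.update (p.2 i) i (a i) ∉ H).card : ℝ) := by
        exact_mod_cast h0
      refine le_trans h1 (le_trans (Finset.sum_le_sum hper) ?_)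
      rw [Finset.sum_const, card_Fset, nsmul_eq_mul]
      apply le_of_eq
      rw [hQM]
      push_cast
      rw [div_eq_mul_inv, div_eq_mul_inv]
      ring
    have hE3 : (EE3.card : ℝ) ≤ ((S:ℝ)+1) * (ε / (10*((S:ℝ)+2)) * QM) := by
      have hper : ∀ i ∈ Fset (S+1),
          ((P.filter fun p => Function.update (p.2 i) i (p.1 i) ∉ H).card : ℝ)
          ≤ ((1*q^S) * (1*(q^(S+1))^S)) * (ε / (10*((S:ℝ)+2)) * q^(S+2)) := by
        intro i hi
        rw [mem_Fset] at hi
        have hsub : (P.filter fun p => Function.update (p.2 i) i (p.1 i) ∉ H)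
            ⊆ P.filter (fun p => Function.update (p.2 i) i (p.1 i) ∈ N) := by
          intro p hp
          rw [Finset.mem_filter] at hp ⊢
          obtain ⟨hpP, hnotH⟩ := hp
          have hPp := hpP
          rw [hPdef, Finset.mem_product] at hPp
          refine ⟨hpP, Finset.mem_sdiff.2 ⟨?_, hnotH⟩⟩
          refine Fintype.mem_piFinset.2 fun j => ?_
          by_cases hj : j = i
          · subst hj; rw [Function.update_self]; exact Wset_lt hPp.1 hi
          · rw [Function.update_of_ne hj]; exact Uset_lt hPp.2 hi hj
        have hnat : (P.filter fun p => Function.update (p.2 i) i (p.1 i) ∉ H).card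
            ≤ ((1 * n^(S+1-1)) * (1 * (n^(S+1))^(S+1-1))) * N.card := by
          refine le_trans (Finset.card_le_card hsub) ?_
          rw [hPdef, hWdef, hUdef]
          exact E3bound hA i hi _
        calc ((P.filter fun p => Function.update (p.2 i) i (p.1 i) ∉ H).card : ℝ)
            ≤ (((1 * n^(S+1-1)) * (1 * (n^(S+1))^(S+1-1)) : ℕ) : ℝ) * (N.card : ℝ) := by
              exact_mod_cast hnat
          _ ≤ ((1*q^S) * (1*(q^(S+1))^S)) * (ε / (10*((S:ℝ)+2)) * q^(S+2)) := by
              refine mul_le_mul ?_ ?_ (Nat.cast_nonneg _) (by positivity)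
              · apply le_of_eq
                rw [hqdef]
                push_cast [Nat.add_sub_cancel]
                ring
              · have := hNcard
                push_cast at this ⊢
                linarith
      have h0 : EE3.card ≤ ∑ i ∈ Fset (S+1),
          (P.filter fun p => Function.update (p.2 i) i (p.1 i) ∉ H).card := by
        rw [hEE3]; exact Finset.card_biUnion_le
      have h1 : (EE3.card : ℝ) ≤ ∑ i ∈ Fset (S+1),
          ((P.filter fun p => Function.update (p.2 i) i (p.1 i) ∉ H).card : ℝ) := by
        exact_mod_cast h0
      refine le_trans h1 (le_trans (Finset.sum_le_sum hper) ?_)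
      rw [Finset.sum_const, card_Fset, nsmul_eq_mul]
      apply le_of_eq
      rw [hQM]
      push_cast
      ring
    have hE4 : (EE4.card : ℝ) ≤ QM / (10*((S:ℝ)+2)) := by
      have hlastlt : ¬ ((Fin.last (S+1) : Fin (S+2)) : ℕ) < S + 1 := by
        rw [Fin.val_last]; omega
      have hsub : EE4 ⊆ P.filter (fun p =>
          (fun j : Fin (S+2) => if (j : ℕ) < S+1 then p.1 j else a j)
            ∈ N.filter (fun e => e (Fin.last (S+1)) = a (Fin.last (S+1)))) := by
        intro p hp
        rw [hEE4, Finset.mem_filter] at hp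
        obtain ⟨hpP, hnotH⟩ := hp
        have hPp := hpP
        rw [hPdef, Finset.mem_product] at hPp
        rw [Finset.mem_filter]
        refine ⟨hpP, Finset.mem_filter.2 ⟨Finset.mem_sdiff.2 ⟨?_, hnotH⟩, ?_⟩⟩
        · refine Fintype.mem_piFinset.2 fun j => ?_
          by_cases hj : (j : ℕ) < S + 1
          · simp only [hj, if_true]; exact Wset_lt hPp.1 hj
          · simp only [hj, if_false]; exact haA j
        · simp only [hlastlt, if_false]
      have hnat : EE4.card ≤ n ^ ((S+1)*(S+1))
          * (N.filter (fun e => e (Fin.last (S+1)) = a (Fin.last (S+1)))).card := by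
        refine le_trans (Finset.card_le_card hsub) ?_
        rw [hPdef, hWdef, hUdef]
        exact E4bound hA _
      have hNile : ((N.filter (fun e => e (Fin.last (S+1)) = a (Fin.last (S+1)))).card : ℝ)
          ≤ q^(S+1) / (10*((S:ℝ)+2)) := by
        rw [le_div_iff₀ (by positivity)]
        have := hdeg (Fin.last (S+1))
        push_cast at this ⊢
        linarith
      calc (EE4.card : ℝ) ≤ ((n ^ ((S+1)*(S+1)) : ℕ) : ℝ)
            * ((N.filter (fun e => e (Fin.last (S+1)) = a (Fin.last (S+1)))).card : ℝ) := by
            exact_mod_cast hnat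
        _ ≤ q ^ ((S+1)*(S+1)) * (q^(S+1) / (10*((S:ℝ)+2))) := by
            refine mul_le_mul ?_ hNile (Nat.cast_nonneg _) (by positivity)
            apply le_of_eq
            rw [hqdef]
            push_cast
            ring
        _ = QM / (10*((S:ℝ)+2)) := by
            rw [hQM]
            rw [div_eq_mul_inv, div_eq_mul_inv]
            ring
    have hE5 : (EE5.card : ℝ) ≤ (((S:ℝ)+1)*((S:ℝ)+1)*((S:ℝ)+6)) * X := by
      have hper : ∀ z ∈ (Fset (S+1)) ×ˢ (Fset (S+1)),
          (P.filter fun p => z.1 ≠ z.2 ∧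
            ¬ Disjoint (legVerts a p.1 p.2 z.1) (legVerts a p.1 p.2 z.2)).card
          ≤ ((S+1) + 5) * (n^(S+1) * (n^(S+1-1) * (n^(S+1))^(S+1-1))) := by
        intro z hz
        rw [Finset.mem_product] at hz
        by_cases hzz : z.1 ≠ z.2
        · refine le_trans (Finset.card_le_card
            (Finset.monotone_filter_right _ (fun p _ hp => hp.2))) ?_
          rw [hPdef, hWdef, hUdef]
          exact E5bound hA z.1 z.2 (mem_Fset.1 hz.1) (mem_Fset.1 hz.2) hzz
        · rw [Finset.filter_false_of_mem (fun p _ => by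
            push_neg at hzz
            exact fun hcon => hcon.1 hzz)]
          simp
      have hnat : EE5.card ≤ ((S+1)*(S+1))
          * (((S+1) + 5) * (n^(S+1) * (n^(S+1-1) * (n^(S+1))^(S+1-1)))) := by
        rw [hEE5]
        refine le_trans Finset.card_biUnion_le ?_
        refine le_trans (Finset.sum_le_sum hper) ?_
        rw [Finset.sum_const, Finset.card_product, card_Fset, smul_eq_mul]
      calc (EE5.card : ℝ) ≤ ((((S+1)*(S+1))
            * (((S+1) + 5) * (n^(S+1) * (n^(S+1-1) * (n^(S+1))^(S+1-1)))) : ℕ) : ℝ) := by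
            exact_mod_cast hnat
        _ = (((S:ℝ)+1)*((S:ℝ)+1)*((S:ℝ)+6)) * X := by
            rw [hXdef, hqdef]
            push_cast [Nat.add_sub_cancel]
            ring
    have hE6 : (EE6.card : ℝ) ≤ ((S:ℝ)+1) * X := by
      have hnat : EE6.card ≤ (S+1)
          * (n^(S+1) * (n^(S+1-1) * (n^(S+1))^(S+1-1))) := by
        rw [hEE6]
        calc ((Fset (S+1)).biUnion fun i =>
              P.filter fun p => p.2 i (Fin.last (S+1)) = a (Fin.last (S+1))).card
            ≤ ∑ i ∈ Fset (S+1),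
              (P.filter fun p => p.2 i (Fin.last (S+1)) = a (Fin.last (S+1))).card :=
              Finset.card_biUnion_le
          _ ≤ ∑ _i ∈ Fset (S+1), n^(S+1) * (n^(S+1-1) * (n^(S+1))^(S+1-1)) :=
              Finset.sum_le_sum fun i hi => by
                have hilt := mem_Fset.1 hi
                have hne : (Fin.last (S+1) : Fin (S+2)) ≠ i := by
                  refine Fin.ne_of_val_ne ?_
                  rw [Fin.val_last]
                  omega
                rw [hPdef, hWdef, hUdef]
                exact constraintU hA i (Fin.last (S+1)) hilt hne
                  (fun _ => a (Fin.last (S+1))) (fun _ _ _ _ _ => rfl)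
          _ = (S+1) * (n^(S+1) * (n^(S+1-1) * (n^(S+1))^(S+1-1))) := by
              rw [Finset.sum_const, card_Fset, smul_eq_mul]
      calc (EE6.card : ℝ) ≤ (((S+1)
            * (n^(S+1) * (n^(S+1-1) * (n^(S+1))^(S+1-1))) : ℕ) : ℝ) := by
            exact_mod_cast hnat
        _ = ((S:ℝ)+1) * X := by
            rw [hXdef, hqdef]
            push_cast [Nat.add_sub_cancel]
            ring
    -- combine
    have hsum : (Bad.card : ℝ) ≤ (EE1.card : ℝ) + EE2.card + EE3.card + EE4.card
        + EE5.card + EE6.card := by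
      have h1 : Bad.card ≤ (EE1 ∪ EE2 ∪ EE3 ∪ EE4 ∪ EE5 ∪ EE6).card :=
        Finset.card_le_card hcover
      have h2 : (EE1 ∪ EE2 ∪ EE3 ∪ EE4 ∪ EE5 ∪ EE6).card
          ≤ EE1.card + EE2.card + EE3.card + EE4.card + EE5.card + EE6.card := by
        refine le_trans (Finset.card_union_le _ _) ?_
        refine Nat.add_le_add_right ?_ _
        refine le_trans (Finset.card_union_le _ _) ?_
        refine Nat.add_le_add_right ?_ _
        refine le_trans (Finset.card_union_le _ _) ?_
        refine Nat.add_le_add_right ?_ _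
        refine le_trans (Finset.card_union_le _ _) ?_
        refine Nat.add_le_add_right ?_ _
        exact Finset.card_union_le _ _
      exact_mod_cast le_trans h1 h2
    -- bound the main error terms
    have hqbig : (10*((S:ℝ)+6)^3) ≤ q := by
      rw [hqdef]
      have : ((10 * (S + 6) ^ 3 : ℕ) : ℝ) ≤ (n : ℝ) := by exact_mod_cast hn
      push_cast at this
      linarith
    have hXq : X * q = QM := by rw [hXdef, hQM]; ring
    have hQKq : QK * q = QM := by rw [hQK, hQM]; ring
    have hc0 : (0:ℝ) < 10*((S:ℝ)+6)^3 := by positivity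
    have hXle : X ≤ QM / (10*((S:ℝ)+6)^3) := by
      rw [le_div_iff₀ hc0]
      calc X * (10*((S:ℝ)+6)^3) ≤ X * q := by
            refine mul_le_mul_of_nonneg_left hqbig ?_
            rw [hXdef]; positivity
        _ = QM := hXq
    have hQKle : QK ≤ QM / (10*((S:ℝ)+6)^3) := by
      rw [le_div_iff₀ hc0]
      calc QK * (10*((S:ℝ)+6)^3) ≤ QK * q := by
            refine mul_le_mul_of_nonneg_left hqbig ?_
            rw [hQK]; positivity
        _ = QM := hQKq
    have hCle : 2*((S:ℝ)+1) + ((S:ℝ)+1)*((S:ℝ)+1)*((S:ℝ)+6) ≤ ((S:ℝ)+6)^3 := by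
      have hS0 : (0:ℝ) ≤ (S:ℝ) := Nat.cast_nonneg S
      nlinarith [hS0]
    have hεle : ε ≤ 1 := by
      have h10 : (1:ℝ) ≤ 10*((S:ℝ)+2) := by
        nlinarith [(Nat.cast_nonneg S : (0:ℝ) ≤ (S:ℝ))]
      have := hε1
      push_cast at this
      have h2 : 1 / (10*((S:ℝ)+2)) ≤ 1 := by
        rw [div_le_one (by positivity)]
        exact h10
      linarith
    -- first group: terms with a factor 1/q
    have hgroup1 : ((S:ℝ)+1) * QK + (((S:ℝ)+1)*((S:ℝ)+1)*((S:ℝ)+6)) * X + ((S:ℝ)+1) * X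
        ≤ QM / 10 := by
      have hS1 : (0:ℝ) ≤ (S:ℝ)+1 := by positivity
      have t1 : ((S:ℝ)+1) * QK ≤ ((S:ℝ)+1) * (QM / (10*((S:ℝ)+6)^3)) :=
        mul_le_mul_of_nonneg_left hQKle hS1
      have t2 : (((S:ℝ)+1)*((S:ℝ)+1)*((S:ℝ)+6)) * X
          ≤ (((S:ℝ)+1)*((S:ℝ)+1)*((S:ℝ)+6)) * (QM / (10*((S:ℝ)+6)^3)) :=
        mul_le_mul_of_nonneg_left hXle (by positivity)
      have t3 : ((S:ℝ)+1) * X ≤ ((S:ℝ)+1) * (QM / (10*((S:ℝ)+6)^3)) :=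
        mul_le_mul_of_nonneg_left hXle hS1
      have t4 : (2*((S:ℝ)+1) + ((S:ℝ)+1)*((S:ℝ)+1)*((S:ℝ)+6)) * (QM / (10*((S:ℝ)+6)^3))
          ≤ ((S:ℝ)+6)^3 * (QM / (10*((S:ℝ)+6)^3)) :=
        mul_le_mul_of_nonneg_right hCle (by positivity)
      have t5 : ((S:ℝ)+6)^3 * (QM / (10*((S:ℝ)+6)^3)) = QM / 10 := by
        field_simp
      nlinarith [t1, t2, t3, t4, t5]
    have hgroup2 : ((S:ℝ)+1) * (QM / (10*((S:ℝ)+2))) + QM / (10*((S:ℝ)+2)) = QM / 10 := by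
      have : ((S:ℝ)+2) ≠ 0 := by positivity
      field_simp
      ring
    have hgroup3 : ((S:ℝ)+1) * (ε / (10*((S:ℝ)+2)) * QM) ≤ QM / 10 := by
      have key : ((S:ℝ)+1) * (ε / (10*((S:ℝ)+2))) ≤ 1/10 := by
        have h1 : ((S:ℝ)+1) * ε ≤ ((S:ℝ)+2) := by
          nlinarith [(Nat.cast_nonneg S : (0:ℝ) ≤ (S:ℝ)), hε.le, hεle]
        rw [show ((S:ℝ)+1) * (ε / (10*((S:ℝ)+2)))
            = (((S:ℝ)+1) * ε) / (10*((S:ℝ)+2)) from by ring]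
        rw [div_le_div_iff₀ (by positivity) (by norm_num : (0:ℝ) < 10)]
        nlinarith [h1]
      calc ((S:ℝ)+1) * (ε / (10*((S:ℝ)+2)) * QM)
          = (((S:ℝ)+1) * (ε / (10*((S:ℝ)+2)))) * QM := by ring
        _ ≤ (1/10) * QM := mul_le_mul_of_nonneg_right key hQM0.le
        _ = QM / 10 := by ring
    calc (Bad.card : ℝ) ≤ (EE1.card : ℝ) + EE2.card + EE3.card + EE4.card
        + EE5.card + EE6.card := hsum
      _ ≤ (((S:ℝ)+1) * QK + (((S:ℝ)+1)*((S:ℝ)+1)*((S:ℝ)+6)) * X + ((S:ℝ)+1) * X)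
          + (((S:ℝ)+1) * (QM / (10*((S:ℝ)+2))) + QM / (10*((S:ℝ)+2)))
          + ((S:ℝ)+1) * (ε / (10*((S:ℝ)+2)) * QM) := by
        linarith [hE1, hE2, hE3, hE4, hE5, hE6]
      _ ≤ QM / 10 + QM / 10 + QM / 10 := by
        linarith [hgroup1, hgroup3, hgroup2.le]
      _ ≤ QM / 2 := by linarith [hQM0.le]
  -- conclude
  have hM : (S + 2) * ((S + 2) - 1) = (S+1) + (S+1)*(S+1) := by
    have : (S + 2) - 1 = S + 1 := rfl
    rw [this]; ring
  rw [hM]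
  have hGoodreal : q ^ ((S+1) + (S+1)*(S+1)) / 2 ≤ (Good.card : ℝ) := by
    have h1 : (Good.card : ℝ) + Bad.card = q ^ ((S+1) + (S+1)*(S+1)) := by
      rw [← Nat.cast_add, hGB, hPcard]
      push_cast
      rfl
    linarith
  exact le_trans hGoodreal (by exact_mod_cast hGoodle)
end

section
/- Let r ≥ 2 be an integer, A_1, …, A_r finite subsets of an abelian group G, and H ⊆ A_1 × ⋯ × A_r an r-partite r-uniform hypergraph with |⊕_H(A_1,…,A_r)| ≤ C·(∏_{i∈[r]}|A_i|)^{1/r}. Suppose there are subsets A_i' ⊆ A_i such that for every (a_1,…,a_r) ∈ A_1' × ⋯ × A_r', the number of r-octopuses in H supported on (a_1,…,a_r) is at least L·(∏_{i∈[r]}|A_i|)^{r−1}. Then |A_1' + ⋯ + A_r'| ≤ (C^{2r−1}/L)·(∏_{i∈[r]}|A_i|)^{1/r}. -/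
open scoped Classical Pointwise

set_option maxHeartbeats 4000000

lemma aux_filter_card (q : ℕ) :
    (Finset.univ.filter fun i : Fin (q+2) => (i:ℕ) < q+1).card = q+1 := by
  have h : (Finset.univ.filter fun i : Fin (q+2) => (i:ℕ) < q+1)
      = Finset.univ.erase (⟨q+1, by omega⟩ : Fin (q+2)) := by
    ext i
    simp only [Finset.mem_filter, Finset.mem_erase, Finset.mem_univ, true_and, and_true,
      Ne, Fin.ext_iff]
    have := i.isLt
    omega
  rw [h, Finset.card_erase_of_mem (Finset.mem_univ _), Finset.card_univ, Fintype.card_fin]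
  omega

lemma aux_prod_ite_const {M : Type*} [CommMonoid M] (q : ℕ) (b : M) :
    (∏ i : Fin (q+2), if (i:ℕ) < q+1 then b else 1) = b ^ (q+1) := by
  rw [Finset.prod_ite, Finset.prod_const, Finset.prod_const_one, mul_one, aux_filter_card]

lemma aux_prod_pair {M : Type*} [CommMonoid M] {m : ℕ} {i k : Fin m} (h : i ≠ k)
    (f : Fin m → M) : (∏ j, if j = i ∨ j = k then f j else 1) = f i * f k := by
  rw [← Finset.prod_filter]
  have h2 : Finset.univ.filter (fun j : Fin m => j = i ∨ j = k) = {i, k} := by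
    ext j; simp [Finset.mem_insert]
  rw [h2, Finset.prod_pair h]

/-- **Many octopuses force a small sumset** (Lemma 3.1 of the paper). -/
theorem many_representations {G : Type*} [AddCommGroup G] [DecidableEq G]
    (r : ℕ) (hr : 2 ≤ r) (A : Fin r → Finset G) (hA : ∀ i, (A i).Nonempty)
    (C L : ℝ) (hC : 0 < C) (hL : 0 < L)
    (H : Finset (Fin r → G)) (hH : H ⊆ Fintype.piFinset A)
    (hS : ((H.image fun e => ∑ i, e i).card : ℝ) ≤
      C * (∏ i, ((A i).card : ℝ)) ^ (1 / (r : ℝ)))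
    (A' : Fin r → Finset G) (hA' : ∀ i, A' i ⊆ A i)
    (hoct : ∀ a ∈ Fintype.piFinset A',
      L * (∏ i, ((A i).card : ℝ)) ^ (r - 1) ≤ (octopusCount A H a : ℝ)) :
    (((Fintype.piFinset A').image fun a => ∑ i, a i).card : ℝ) ≤
      C ^ (2 * r - 1) / L * (∏ i, ((A i).card : ℝ)) ^ (1 / (r : ℝ)) := by
  classical
  obtain ⟨q, rfl⟩ : ∃ q, r = q + 2 := ⟨r - 2, by omega⟩
  clear hr
  have hsub : q + 2 - 1 = q + 1 := rfl
  set S : Finset G := H.image fun e => ∑ i, e i with hS_def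
  set lst : Fin (q+2) := ⟨q+1, by omega⟩ with hlst_def
  have hlstval : ((lst : Fin (q+2)) : ℕ) = q + 1 := rfl
  have hne_lst : ∀ i : Fin (q+2), ¬((i:ℕ) < q+1) → i = lst := by
    intro i hi
    apply Fin.ext
    have := i.isLt
    rw [hlstval]
    omega
  have hlt_lst : ∀ i : Fin (q+2), (i:ℕ) < q+1 → i ≠ lst := by
    intro i hi h
    rw [h, hlstval] at hi
    omega
  set n : Fin (q+2) → ℕ := fun i => (A i).card with hn_def
  set P : ℕ := ∏ i, n i with hP_def
  have hn_pos : ∀ i, 0 < n i := fun i => (hA i).card_pos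
  have hP_pos : 0 < P := Finset.prod_pos fun i _ => hn_pos i
  obtain ⟨t0, -, ht0⟩ := Finset.exists_max_image Finset.univ n ⟨lst, Finset.mem_univ _⟩
  have ht0' : ∀ i, n i ≤ n t0 := fun i => ht0 i (Finset.mem_univ i)
  set k : Fin (q+2) → Fin (q+2) := fun i => if i = t0 then lst else t0 with hk_def
  have hk_ne : ∀ i : Fin (q+2), (i:ℕ) < q+1 → k i ≠ i := by
    intro i hi
    simp only [hk_def]
    split
    · rename_i h
      subst h
      exact fun hc => hlt_lst i hi hc.symm
    · rename_i h
      exact fun hc => h hc.symm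
  set Emax : Fin (q+2) → ℕ := fun i => ∏ j, if j = i ∨ j = k i then 1 else n j with hEmax_def
  set F : ℕ := ∏ i : Fin (q+2), if (i:ℕ) < q+1 then Emax i else 1 with hF_def
  set Gn : ℕ := ∏ i : Fin (q+2), if (i:ℕ) < q+1 then n i * n (k i) else 1 with hGn_def
  have hPQpair : ∀ i : Fin (q+2), (i:ℕ) < q+1 → Emax i * (n i * n (k i)) = P := by
    intro i hi
    have hik : i ≠ k i := (hk_ne i hi).symm
    have h2 : n i * n (k i) = ∏ j, if j = i ∨ j = k i then n j else 1 :=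
      (aux_prod_pair hik n).symm
    simp only [hEmax_def]
    rw [h2, ← Finset.prod_mul_distrib, hP_def]
    apply Finset.prod_congr rfl
    intro j _
    by_cases hj : j = i ∨ j = k i <;> simp [hj]
  have hFG : F * Gn = P ^ (q + 1) := by
    rw [hF_def, hGn_def, ← Finset.prod_mul_distrib]
    rw [show (∏ i : Fin (q+2), ((if (i:ℕ) < q+1 then Emax i else 1) *
        (if (i:ℕ) < q+1 then n i * n (k i) else 1)))
        = ∏ i : Fin (q+2), if (i:ℕ) < q+1 then P else 1 from ?_]
    · exact aux_prod_ite_const q P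
    · apply Finset.prod_congr rfl
      intro i _
      by_cases hi : (i:ℕ) < q+1
      · simp only [hi, if_true]
        exact hPQpair i hi
      · simp [hi]
  set Q : ℕ := ∏ i : Fin (q+2), if (i:ℕ) < q+1 then n i else 1 with hQ_def
  set K : ℕ := ∏ i : Fin (q+2), if (i:ℕ) < q+1 then n (k i) else 1 with hK_def
  have hfilter_not : Finset.univ.filter (fun i : Fin (q+2) => ¬((i:ℕ) < q+1)) = {lst} := by
    ext i
    simp only [Finset.mem_filter, Finset.mem_univ, true_and, Finset.mem_singleton]
    constructor
    · exact hne_lst i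
    · intro h
      subst h
      rw [hlstval]
      omega
  have hPQ : P = Q * n lst := by
    have hpt : ∀ i : Fin (q+2),
        n i = (if (i:ℕ) < q+1 then n i else 1) * (if (i:ℕ) < q+1 then 1 else n i) := by
      intro i
      by_cases hi : (i:ℕ) < q+1 <;> simp [hi]
    rw [hP_def, Finset.prod_congr rfl (fun i _ => hpt i), Finset.prod_mul_distrib, ← hQ_def]
    congr 1
    rw [Finset.prod_ite, Finset.prod_const_one, one_mul, hfilter_not, Finset.prod_singleton]
  have hGnQK : Gn = Q * K := by
    rw [hGn_def, hQ_def, hK_def, ← Finset.prod_mul_distrib]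
    apply Finset.prod_congr rfl
    intro i _
    by_cases hi : (i:ℕ) < q+1 <;> simp [hi]
  have hQle : Q ≤ n t0 ^ (q+1) := by
    rw [hQ_def, ← aux_prod_ite_const q (n t0)]
    apply Finset.prod_le_prod'
    intro i _
    by_cases hi : (i:ℕ) < q+1 <;> simp [hi, ht0']
  have hPle : P ≤ n t0 ^ (q+2) := by
    rw [hP_def]
    calc ∏ i, n i ≤ ∏ _i : Fin (q+2), n t0 := Finset.prod_le_prod' (fun i _ => ht0' i)
    _ = n t0 ^ (q+2) := by rw [Finset.prod_const, Finset.card_univ, Fintype.card_fin]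
  have hGP : P ^ (2*q+2) ≤ Gn ^ (q+2) := by
    by_cases hcase : t0 = lst
    · have hK2 : K = n t0 ^ (q+1) := by
        rw [hK_def, ← aux_prod_ite_const q (n t0)]
        apply Finset.prod_congr rfl
        intro i _
        by_cases hi : (i:ℕ) < q+1
        · have hit : i ≠ t0 := hcase ▸ hlt_lst i hi
          simp [hi, hk_def, hit]
        · simp [hi]
      rw [hGnQK, hK2, hPQ, ← hcase]
      calc (Q * n t0)^(2*q+2) = Q^(q+2) * Q^q * (n t0)^(2*q+2) := by ring
      _ ≤ Q^(q+2) * (n t0^(q+1))^q * (n t0)^(2*q+2) :=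
          Nat.mul_le_mul (Nat.mul_le_mul le_rfl (Nat.pow_le_pow_left hQle q)) le_rfl
      _ = (Q * n t0^(q+1))^(q+2) := by ring
    · have ht0lt : (t0:ℕ) < q+1 := by
        by_contra h
        exact hcase (hne_lst t0 h)
      have hcard2 : ((Finset.univ.erase t0).filter (fun i : Fin (q+2) => (i:ℕ) < q+1)).card
          = q := by
        have heq : (Finset.univ.erase t0).filter (fun i : Fin (q+2) => (i:ℕ) < q+1)
            = (Finset.univ.erase t0).erase lst := by
          ext i
          simp only [Finset.mem_filter, Finset.mem_erase, Finset.mem_univ, and_true, true_and]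
          constructor
          · rintro ⟨h1, h2⟩
            exact ⟨hlt_lst i h2, h1⟩
          · rintro ⟨h1, h2⟩
            refine ⟨h2, ?_⟩
            by_contra h
            exact h1 (hne_lst i h)
        have hmem : lst ∈ Finset.univ.erase t0 :=
          Finset.mem_erase.mpr ⟨fun h => hcase h.symm, Finset.mem_univ _⟩
        rw [heq, Finset.card_erase_of_mem hmem, Finset.card_erase_of_mem (Finset.mem_univ _),
          Finset.card_univ, Fintype.card_fin]
        omega
      have hK2 : K = n lst * n t0 ^ q := by
        rw [hK_def, ← Finset.mul_prod_erase Finset.univ _ (Finset.mem_univ t0)]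
        congr 1
        · simp [ht0lt, hk_def]
        · have hcg : ∀ i ∈ Finset.univ.erase t0,
              (if (i:ℕ) < q+1 then n (k i) else 1) = (if (i:ℕ) < q+1 then n t0 else 1) := by
            intro i hi
            have hit : i ≠ t0 := (Finset.mem_erase.mp hi).1
            by_cases h : (i:ℕ) < q+1 <;> simp [h, hk_def, hit]
          rw [Finset.prod_congr rfl hcg, Finset.prod_ite, Finset.prod_const,
            Finset.prod_const_one, mul_one, hcard2]
      have hGn2 : Gn = (Q * n lst) * n t0 ^ q := by
        rw [hGnQK, hK2]
        ring
      rw [hGn2, hPQ]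
      have hP2 : Q * n lst ≤ n t0 ^ (q+2) := hPQ ▸ hPle
      calc (Q * n lst)^(2*q+2) = (Q * n lst)^(q+2) * (Q * n lst)^q := by ring
      _ ≤ (Q * n lst)^(q+2) * (n t0^(q+2))^q :=
          Nat.mul_le_mul le_rfl (Nat.pow_le_pow_left hP2 q)
      _ = ((Q * n lst) * n t0^q)^(q+2) := by ring
  set S' : Fin (q+2) → Finset G := fun i => if (i:ℕ) < q+1 then S else {0} with hS'_def
  set V : G → Finset ((Fin (q+2) → G) × (Fin (q+2) → G)) := fun σ =>
    ((Fintype.piFinset S') ×ˢ (Fintype.piFinset S')).filter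
      (fun p => σ - (∑ i : Fin (q+2), if (i:ℕ) < q+1 then p.1 i - p.2 i else 0) ∈ S) with hV_def
  set T : Finset G := (Fintype.piFinset A').image fun a => ∑ i, a i with hT_def
  -- Lemma 1 : octopus count bounded by fibers over V
  have L1 : ∀ a ∈ Fintype.piFinset A', octopusCount A H a ≤ F * (V (∑ i, a i)).card := by
    intro a ha
    set O := ((Fintype.piFinset A) ×ˢ (Fintype.piFinset fun _ => Fintype.piFinset A)).filter
      (fun p : (Fin (q+2) → G) × (Fin (q+2) → (Fin (q+2) → G)) =>
        IsOctopus H a p.1 p.2) with hO_def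
    set Θ : (Fin (q+2) → G) × (Fin (q+2) → (Fin (q+2) → G)) →
        (Fin (q+2) → G) × (Fin (q+2) → G) :=
      fun x => (fun i => if (i:ℕ) < q+1 then ∑ j, x.2 i j else 0,
                fun i => if (i:ℕ) < q+1 then ∑ j, Function.update (x.2 i) i (x.1 i) j else 0)
      with hΘ_def
    -- basic octopus facts
    have hupin : ∀ x ∈ O, ∀ i : Fin (q+2), x.2 i i = a i := by
      intro x hx i
      exact ((Finset.mem_filter.mp hx).2.2.2.2.2 i).2.1
    have huH : ∀ x ∈ O, ∀ i : Fin (q+2), (i:ℕ) < q+1 → x.2 i ∈ H := by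
      intro x hx i hi
      have hoc : IsOctopus H a x.1 x.2 := (Finset.mem_filter.mp hx).2
      have h1 := (hoc.1 i (by rw [hsub]; exact hi)).2.1
      rwa [← hupin x hx i, Function.update_eq_self] at h1
    -- bound on the number of edges with fixed coordinate and fixed sum
    have Ebound : ∀ (i : Fin (q+2)), (i:ℕ) < q+1 → ∀ s : G,
        (H.filter fun e => e i = a i ∧ ∑ j, e j = s).card ≤ Emax i := by
      intro i hi s
      have hik : k i ≠ i := hk_ne i hi
      have hc0m : ∀ j, (hA j).choose ∈ A j := fun j => (hA j).choose_spec
      have htarget : Emax i = (Fintype.piFinset fun j =>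
          if j = i ∨ j = k i then ({(hA j).choose} : Finset G) else A j).card := by
        rw [Fintype.card_piFinset]
        simp only [hEmax_def]
        apply Finset.prod_congr rfl
        intro j _
        by_cases hj : j = i ∨ j = k i <;> simp [hj, hn_def]
      rw [htarget]
      apply Finset.card_le_card_of_injOn
        (fun e j => if j = i ∨ j = k i then (hA j).choose else e j)
      · intro e he
        obtain ⟨heH, -, -⟩ := Finset.mem_filter.mp he
        rw [Finset.mem_coe, Fintype.mem_piFinset]
        intro j
        by_cases hj : j = i ∨ j = k i
        · simp [hj]
        · simp only [hj, if_false]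
          exact Fintype.mem_piFinset.mp (hH heH) j
      · intro e he e' he' heq2
        obtain ⟨heH, hei, hes⟩ := Finset.mem_filter.mp he
        obtain ⟨he'H, he'i, he's⟩ := Finset.mem_filter.mp he'
        have hcoord : ∀ j, ¬(j = i ∨ j = k i) → e j = e' j := by
          intro j hj
          have := congrFun heq2 j
          simpa [hj] using this
        have hki : e (k i) = e' (k i) := by
          have hsum : ∑ j, e j = ∑ j, e' j := hes.trans he's.symm
          rw [← Finset.add_sum_erase _ e (Finset.mem_univ (k i)),
              ← Finset.add_sum_erase _ e' (Finset.mem_univ (k i))] at hsum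
          have hrest : ∑ j ∈ Finset.univ.erase (k i), e j
              = ∑ j ∈ Finset.univ.erase (k i), e' j := by
            apply Finset.sum_congr rfl
            intro j hj
            have hjk : j ≠ k i := (Finset.mem_erase.mp hj).1
            by_cases hji : j = i
            · rw [hji, hei, he'i]
            · exact hcoord j (by tauto)
          rw [hrest] at hsum
          exact add_right_cancel hsum
        funext j
        by_cases hji : j = i
        · rw [hji, hei, he'i]
        · by_cases hjk : j = k i
          · rw [hjk]
            exact hki
          · exact hcoord j (by tauto)
    -- fiber bound for Θ
    have hfib : ∀ p ∈ O.image Θ, (O.filter fun x => Θ x = p).card ≤ F := by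
      intro p _
      have step1 : (O.filter fun x => Θ x = p).card ≤ (Fintype.piFinset fun i : Fin (q+2) =>
          if (i:ℕ) < q+1 then H.filter (fun e => e i = a i ∧ ∑ j, e j = p.1 i)
          else ({a} : Finset (Fin (q+2) → G))).card := by
        apply Finset.card_le_card_of_injOn (fun x => x.2)
        · intro x hx
          obtain ⟨hxO, hxp⟩ := Finset.mem_filter.mp hx
          have hoc : IsOctopus H a x.1 x.2 := (Finset.mem_filter.mp hxO).2
          rw [Finset.mem_coe, Fintype.mem_piFinset]
          intro i
          by_cases hi : (i:ℕ) < q+1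
          · simp only [hi, if_true]
            refine Finset.mem_filter.mpr ⟨huH x hxO i hi, hupin x hxO i, ?_⟩
            have h1 := congrArg (fun z => z.1 i) hxp
            simpa [hΘ_def, hi, show (i:ℕ) ≤ q by omega] using h1
          · simp only [hi, if_false, Finset.mem_singleton]
            have hieq : (i:ℕ) = q+1 := by
              have := i.isLt
              omega
            exact (hoc.2.2.2.2 i).2.2 (by rw [hsub]; exact hieq)
        · intro x hx y hy hxy
          simp only [Finset.mem_coe] at hx hy
          obtain ⟨hxO, hxp⟩ := Finset.mem_filter.mp hx
          obtain ⟨hyO, hyp⟩ := Finset.mem_filter.mp hy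
          have hocx : IsOctopus H a x.1 x.2 := (Finset.mem_filter.mp hxO).2
          have hocy : IsOctopus H a y.1 y.2 := (Finset.mem_filter.mp hyO).2
          have hu : x.2 = y.2 := hxy
          have hw : x.1 = y.1 := by
            funext i
            by_cases hi : (i:ℕ) < q+1
            · have h1 := congrArg (fun z => z.2 i) hxp
              have h2 := congrArg (fun z => z.2 i) hyp
              simp only [hΘ_def, hi, if_true] at h1 h2
              rw [Finset.sum_update_of_mem (Finset.mem_univ i)] at h1 h2
              rw [hu] at h1
              exact add_right_cancel (h1.trans h2.symm)
            · have hieq : (i:ℕ) = q+1 := by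
                have := i.isLt
                omega
              rw [(hocx.2.2.2.2 i).1 (by rw [hsub]; exact hieq),
                (hocy.2.2.2.2 i).1 (by rw [hsub]; exact hieq)]
          exact Prod.ext hw hu
      have step2 : (Fintype.piFinset fun i : Fin (q+2) =>
          if (i:ℕ) < q+1 then H.filter (fun e => e i = a i ∧ ∑ j, e j = p.1 i)
          else ({a} : Finset (Fin (q+2) → G))).card ≤ F := by
        rw [Fintype.card_piFinset, hF_def]
        apply Finset.prod_le_prod'
        intro i _
        by_cases hi : (i:ℕ) < q+1
        · simp only [hi, if_true]
          exact Ebound i hi (p.1 i)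
        · simp [hi]
      exact step1.trans step2
    -- image of Θ lands in V (∑ a)
    have himg : O.image Θ ⊆ V (∑ i, a i) := by
      intro p hp
      obtain ⟨x, hxO, rfl⟩ := Finset.mem_image.mp hp
      have hoc : IsOctopus H a x.1 x.2 := (Finset.mem_filter.mp hxO).2
      simp only [hV_def, Finset.mem_filter, Finset.mem_product]
      refine ⟨⟨?_, ?_⟩, ?_⟩
      · rw [Fintype.mem_piFinset]
        intro i
        by_cases hi : (i:ℕ) < q+1
        · simp only [hΘ_def, hS'_def, hi, if_true]
          exact Finset.mem_image_of_mem _ (huH x hxO i hi)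
        · have hi' : ¬ (i:ℕ) ≤ q := by omega
          simp [hΘ_def, hS'_def, hi, hi']
      · rw [Fintype.mem_piFinset]
        intro i
        by_cases hi : (i:ℕ) < q+1
        · simp only [hΘ_def, hS'_def, hi, if_true]
          exact Finset.mem_image_of_mem _ ((hoc.1 i (by rw [hsub]; exact hi)).2.2)
        · have hi' : ¬ (i:ℕ) ≤ q := by omega
          simp [hΘ_def, hS'_def, hi, hi']
      · have hdiff : ∀ i : Fin (q+2),
            (if (i:ℕ) < q+1 then (Θ x).1 i - (Θ x).2 i else 0)
            = (if (i:ℕ) < q+1 then a i - x.1 i else 0) := by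
          intro i
          by_cases hi : (i:ℕ) < q+1
          · simp only [hΘ_def, hi, if_true]
            rw [Finset.sum_update_of_mem (Finset.mem_univ i),
              ← Finset.add_sum_erase _ (x.2 i) (Finset.mem_univ i), hupin x hxO i,
              Finset.sdiff_singleton_eq_erase]
            abel
          · simp [hi]
        rw [Finset.sum_congr rfl (fun i _ => hdiff i)]
        have hkey : (∑ i, a i) - (∑ i : Fin (q+2), if (i:ℕ) < q+1 then a i - x.1 i else 0)
            = ∑ i : Fin (q+2), (if (i:ℕ) < q+1 then x.1 i else a i) := by
          rw [← Finset.sum_sub_distrib]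
          apply Finset.sum_congr rfl
          intro i _
          by_cases hi : (i:ℕ) < q+1
          · simp only [hi, if_true]
            abel
          · simp [hi]
        rw [hkey]
        have hcen : (fun j : Fin (q+2) => if (j:ℕ) < q+1 then x.1 j else a j) ∈ H := by
          have := hoc.2.1
          rwa [hsub] at this
        exact Finset.mem_image_of_mem _ hcen
    show O.card ≤ F * (V (∑ i, a i)).card
    calc O.card ≤ F * (O.image Θ).card := Finset.card_le_mul_card_image (f := Θ) O F hfib
    _ ≤ F * (V (∑ i, a i)).card := Nat.mul_le_mul le_rfl (Finset.card_le_card himg)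
  -- Lemma 2 : total V-count bounded by S-powers
  have L2 : (∑ σ ∈ T, (V σ).card) ≤ S.card ^ (2*q+3) := by
    rw [← Finset.card_sigma]
    have hmaps : ∀ x ∈ T.sigma (fun σ => V σ),
        ((x.2.1, Function.update x.2.2 lst
          (x.1 - ∑ i : Fin (q+2), if (i:ℕ) < q+1 then x.2.1 i - x.2.2 i else 0)) :
          (Fin (q+2) → G) × (Fin (q+2) → G))
          ∈ (Fintype.piFinset S') ×ˢ (Fintype.piFinset fun _ : Fin (q+2) => S) := by
      rintro ⟨σ, s, t⟩ hx
      dsimp only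
      rw [Finset.mem_sigma] at hx
      obtain ⟨hσT, hVm⟩ := hx
      simp only [hV_def, Finset.mem_filter, Finset.mem_product] at hVm
      obtain ⟨⟨hs, ht⟩, hc⟩ := hVm
      rw [Finset.mem_product]
      refine ⟨hs, ?_⟩
      rw [Fintype.mem_piFinset]
      intro j
      dsimp only
      by_cases hj : j = lst
      · rw [hj, Function.update_self]
        exact hc
      · rw [Function.update_of_ne hj]
        have hjlt : (j:ℕ) < q+1 := by
          by_contra h
          exact hj (hne_lst j h)
        have := Fintype.mem_piFinset.mp ht j
        simpa [hS'_def, hjlt, show (j:ℕ) ≤ q by omega] using this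
    have hinj : Set.InjOn (fun x : (_ : G) × ((Fin (q+2) → G) × (Fin (q+2) → G)) =>
        ((x.2.1, Function.update x.2.2 lst
          (x.1 - ∑ i : Fin (q+2), if (i:ℕ) < q+1 then x.2.1 i - x.2.2 i else 0)) :
          (Fin (q+2) → G) × (Fin (q+2) → G)))
        (T.sigma (fun σ => V σ)) := by
      rintro ⟨σ, s, t⟩ hx ⟨σ', s', t'⟩ hy hxy
      dsimp only at hxy
      simp only [Finset.mem_coe, Finset.mem_sigma] at hx hy
      obtain ⟨hσT, hVm⟩ := hx
      obtain ⟨hσ'T, hV'm⟩ := hy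
      simp only [hV_def, Finset.mem_filter, Finset.mem_product] at hVm hV'm
      obtain ⟨⟨hs, ht⟩, hc⟩ := hVm
      obtain ⟨⟨hs', ht'⟩, hc'⟩ := hV'm
      have htlst : t lst = 0 := by
        have := Fintype.mem_piFinset.mp ht lst
        simp only [hS'_def, hlstval] at this
        simpa using this
      have ht'lst : t' lst = 0 := by
        have := Fintype.mem_piFinset.mp ht' lst
        simp only [hS'_def, hlstval] at this
        simpa using this
      have hss : s = s' := congrArg Prod.fst hxy
      have hupd := congrArg Prod.snd hxy
      simp only at hss hupd
      have htt : t = t' := by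
        funext j
        by_cases hj : j = lst
        · rw [hj, htlst, ht'lst]
        · have := congrFun hupd j
          rwa [Function.update_of_ne hj, Function.update_of_ne hj] at this
      have hcc := congrFun hupd lst
      rw [Function.update_self, Function.update_self] at hcc
      have hσσ : σ = σ' := by
        rw [hss, htt] at hcc
        exact sub_left_inj.mp hcc
      subst hσσ
      subst hss
      subst htt
      rfl
    have hcard : ((Fintype.piFinset S') ×ˢ (Fintype.piFinset fun _ : Fin (q+2) => S)).card
        = S.card ^ (2*q+3) := by
      rw [Finset.card_product, Fintype.card_piFinset, Fintype.card_piFinset]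
      have h1 : (∏ i : Fin (q+2), (S' i).card) = S.card ^ (q+1) := by
        rw [← aux_prod_ite_const q S.card]
        apply Finset.prod_congr rfl
        intro i _
        by_cases hi : (i:ℕ) < q+1
        · have hi' : (i:ℕ) ≤ q := by omega
          simp [hS'_def, hi, hi']
        · have hi' : ¬ (i:ℕ) ≤ q := by omega
          simp [hS'_def, hi, hi']
      rw [h1, Finset.prod_const, Finset.card_univ, Fintype.card_fin, ← pow_add]
      congr 1
      omega
    calc (T.sigma fun σ => V σ).card
        ≤ ((Fintype.piFinset S') ×ˢ (Fintype.piFinset fun _ : Fin (q+2) => S)).card :=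
          Finset.card_le_card_of_injOn _ hmaps hinj
    _ = S.card ^ (2*q+3) := hcard
  -- Real arithmetic conclusion
  set Pr : ℝ := ∏ i, ((A i).card : ℝ) with hPr_def
  have hPrP : Pr = (P : ℝ) := by
    rw [hPr_def, hP_def, hn_def]
    push_cast
    rfl
  have hPr_pos : 0 < Pr := by
    rw [hPrP]
    exact_mod_cast hP_pos
  have hF_pos : 0 < F := by
    rw [hF_def]
    apply Finset.prod_pos
    intro i _
    by_cases hi : (i:ℕ) < q+1
    · simp only [hi, if_true, hEmax_def]
      apply Finset.prod_pos
      intro j _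
      by_cases hj : j = i ∨ j = k i <;> simp [hj, hn_pos j]
    · simp [hi]
  have hGn_pos : 0 < Gn := by
    rcases Nat.eq_zero_or_pos Gn with h | h
    · rw [h, mul_zero] at hFG
      exact absurd hFG.symm (pow_pos hP_pos (q+1)).ne'
    · exact h
  set ρ : ℝ := Pr ^ (1 / ((q+2 : ℕ) : ℝ)) with hρ_def
  have hρ_pos : 0 < ρ := Real.rpow_pos_of_pos hPr_pos _
  have hq2ne : ((q+2 : ℕ) : ℝ) ≠ 0 := by
    exact_mod_cast Nat.succ_ne_zero (q+1)
  have hρ_pow : ρ ^ (q+2) = Pr := by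
    rw [hρ_def, ← Real.rpow_natCast (Pr ^ (1 / ((q+2:ℕ):ℝ))) (q+2), ← Real.rpow_mul hPr_pos.le,
      one_div, inv_mul_cancel₀ hq2ne, Real.rpow_one]
  have hρ2 : ρ ^ (2*q+2) ≤ (Gn : ℝ) := by
    have h1 : (ρ ^ (2*q+2)) ^ (q+2) ≤ ((Gn:ℝ)) ^ (q+2) := by
      rw [← pow_mul, show (2*q+2)*(q+2) = (q+2)*(2*q+2) from by ring, pow_mul, hρ_pow]
      calc Pr ^ (2*q+2) = ((P:ℝ)) ^ (2*q+2) := by rw [hPrP]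
      _ = ((P^(2*q+2) : ℕ) : ℝ) := by push_cast; ring
      _ ≤ ((Gn^(q+2) : ℕ) : ℝ) := by exact_mod_cast hGP
      _ = (Gn:ℝ)^(q+2) := by push_cast; ring
    exact le_of_pow_le_pow_left₀ (Nat.succ_ne_zero _) (Nat.cast_nonneg Gn) h1
  have hTσ : ∀ σ ∈ T, L * Pr ^ (q+1) ≤ (F:ℝ) * ((V σ).card : ℝ) := by
    intro σ hσ
    rw [hT_def] at hσ
    obtain ⟨a, ha, rfl⟩ := Finset.mem_image.mp hσ
    have h1 := hoct a ha
    rw [show q+2-1 = q+1 from rfl] at h1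
    have h2 : (octopusCount A H a : ℝ) ≤ (F:ℝ) * ((V (∑ i, a i)).card : ℝ) := by
      exact_mod_cast L1 a ha
    exact h1.trans h2
  have hsum : (T.card : ℝ) * (L * Pr ^ (q+1)) ≤ (F:ℝ) * (S.card:ℝ) ^ (2*q+3) := by
    calc (T.card : ℝ) * (L * Pr ^ (q+1)) = ∑ _σ ∈ T, (L * Pr ^ (q+1)) := by
          rw [Finset.sum_const, nsmul_eq_mul]
    _ ≤ ∑ σ ∈ T, (F:ℝ) * ((V σ).card : ℝ) := Finset.sum_le_sum hTσ
    _ = (F:ℝ) * ∑ σ ∈ T, ((V σ).card : ℝ) := by rw [← Finset.mul_sum]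
    _ ≤ (F:ℝ) * (S.card:ℝ)^(2*q+3) := by
          apply mul_le_mul_of_nonneg_left _ (Nat.cast_nonneg F)
          calc (∑ σ ∈ T, ((V σ).card:ℝ)) = (((∑ σ ∈ T, (V σ).card : ℕ)) : ℝ) := by
                push_cast
                rfl
          _ ≤ (((S.card ^ (2*q+3) : ℕ)) : ℝ) := by exact_mod_cast L2
          _ = (S.card:ℝ)^(2*q+3) := by push_cast; ring
  have hFGr : (F:ℝ) * (Gn:ℝ) = Pr^(q+1) := by
    rw [hPrP]
    exact_mod_cast hFG
  have hchain : (T.card : ℝ) * (L * Pr ^ (q+1)) ≤ C^(2*q+3) * Pr^(q+1) * ρ := by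
    refine hsum.trans ?_
    calc (F:ℝ) * (S.card:ℝ)^(2*q+3) ≤ (F:ℝ) * (C*ρ)^(2*q+3) := by
          apply mul_le_mul_of_nonneg_left _ (Nat.cast_nonneg F)
          exact pow_le_pow_left₀ (Nat.cast_nonneg _) hS _
    _ = C^(2*q+3) * ((F:ℝ) * (ρ^(2*q+2)) * ρ) := by ring
    _ ≤ C^(2*q+3) * ((F:ℝ) * (Gn:ℝ) * ρ) := by
          apply mul_le_mul_of_nonneg_left _ (pow_nonneg hC.le _)
          apply mul_le_mul_of_nonneg_right _ hρ_pos.le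
          exact mul_le_mul_of_nonneg_left hρ2 (Nat.cast_nonneg F)
    _ = C^(2*q+3) * Pr^(q+1) * ρ := by rw [hFGr]; ring
  have hLP : 0 < L * Pr^(q+1) := mul_pos hL (pow_pos hPr_pos _)
  rw [show 2*(q+2)-1 = 2*q+3 from by omega]
  have h2 : (T.card : ℝ) ≤ C^(2*q+3) * Pr^(q+1) * ρ / (L * Pr^(q+1)) := by
    rw [le_div_iff₀ hLP]
    exact hchain
  refine h2.trans (le_of_eq ?_)
  rw [show C^(2*q+3) * Pr^(q+1) * ρ = Pr^(q+1) * (C^(2*q+3) * ρ) from by ring,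
      mul_comm L (Pr^(q+1)), mul_div_mul_left _ _ (pow_pos hPr_pos (q+1)).ne',
      mul_div_right_comm]
end

section
/- Let r ≥ 2 be an integer and let ε, C > 1 be fixed. For all sufficiently small δ > 0 and sufficiently large n: if A_1, …, A_r are subsets of an abelian group G each of size n, H ⊆ A_1 × ⋯ × A_r satisfies |E(H)| ≥ (1−δ)n^r and |⊕_H(A_1,…,A_r)| ≤ Cn, then for each i there exists A_i' ⊆ A_i with |A_i'| = ⌈(1−ε)n⌉ and |A_1' + ⋯ + A_r'| ≤ 2C^{2r−1}n. -/
open scoped Classical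
open Finset

section BSGaux

variable {G : Type} [AddCommGroup G]

/-- index map from parameter indices to coordinate indices -/
def bsgIdx (r : ℕ) (k : Fin (2*r-2)) : Fin r :=
  if h : (k : ℕ) < r - 1 then ⟨k, by have := k.2; omega⟩
  else ⟨(k : ℕ) - (r-2), by have := k.2; omega⟩

def bsgZ (r : ℕ) (a : Fin r → G) (p : Fin (2*r-2) → G) (i : Fin r) : G :=
  if h : (i : ℕ) < r - 1 then p ⟨i, by have := i.2; omega⟩ else a i

def bsgY (r : ℕ) (a : Fin r → G) (p : Fin (2*r-2) → G) (i : Fin r) : G :=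
  if h : 0 < (i : ℕ) then p ⟨r - 2 + (i : ℕ), by have := i.2; omega⟩ else a i

def bsgV (r : ℕ) (a : Fin r → G) (p : Fin (2*r-2) → G) (j : Fin (2*r-1)) : Fin r → G :=
  fun i => if 2*(i:ℕ) < (j:ℕ) then bsgZ r a p i
    else if 2*(i:ℕ) = (j:ℕ) then a i else bsgY r a p i

lemma sum_neg_one_pow (m : ℕ) :
    ∑ j ∈ Finset.range m, ((-1:ℤ))^j = if Even m then 0 else 1 := by
  induction m with
  | zero => simp
  | succ m ih =>
    rw [Finset.sum_range_succ, ih]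
    rcases Nat.even_or_odd m with h | h
    · simp [h, Nat.even_add_one, h.neg_one_pow]
    · simp [Nat.not_even_iff_odd.2 h, Nat.even_add_one, Nat.not_even_iff_odd.2 h, h.neg_one_pow]

lemma alt_pick (c b d : G) (t m : ℕ) (ht : t ≤ m) :
    ∑ j ∈ Finset.range (2*m+1),
      ((-1:ℤ))^j • (if 2*t < j then c else if 2*t = j then b else d) = b := by
  have h1 : 2*t+1 ≤ 2*m+1 := by omega
  rw [← Finset.sum_range_add_sum_Ico _ h1, Finset.sum_range_succ]
  have e1 : ∑ j ∈ Finset.range (2*t),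
      ((-1:ℤ))^j • (if 2*t < j then c else if 2*t = j then b else d)
      = ∑ j ∈ Finset.range (2*t), ((-1:ℤ))^j • d := by
    refine Finset.sum_congr rfl fun j hj => ?_
    rw [Finset.mem_range] at hj
    rw [if_neg (by omega), if_neg (by omega)]
  have e2 : ∑ j ∈ Finset.Ico (2*t+1) (2*m+1),
      ((-1:ℤ))^j • (if 2*t < j then c else if 2*t = j then b else d)
      = ∑ j ∈ Finset.Ico (2*t+1) (2*m+1), ((-1:ℤ))^j • c := by
    refine Finset.sum_congr rfl fun j hj => ?_
    rw [Finset.mem_Ico] at hj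
    rw [if_pos (by omega)]
  rw [e1, e2, ← Finset.sum_smul, ← Finset.sum_smul, sum_neg_one_pow]
  have e3 : ∑ j ∈ Finset.Ico (2*t+1) (2*m+1), ((-1:ℤ))^j = 0 := by
    have := Finset.sum_range_add_sum_Ico (fun j => ((-1:ℤ))^j) h1
    rw [sum_neg_one_pow, sum_neg_one_pow] at this
    have ho1 : ¬ Even (2*t+1) := by simp [Nat.even_add_one, even_two_mul]
    have ho2 : ¬ Even (2*m+1) := by simp [Nat.even_add_one, even_two_mul]
    rw [if_neg ho1, if_neg ho2] at this
    linarith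
  rw [e3, if_pos (by exact even_two_mul t)]
  simp

end BSGaux

section BSGaux2

variable {G : Type} [AddCommGroup G]

lemma bsgIdx_val_low {r : ℕ} (k : Fin (2*r-2)) (hk : (k:ℕ) < r-1) :
    ((bsgIdx r k : Fin r) : ℕ) = (k:ℕ) := by simp [bsgIdx, hk]

lemma bsgIdx_val_high {r : ℕ} (k : Fin (2*r-2)) (hk : ¬ (k:ℕ) < r-1) :
    ((bsgIdx r k : Fin r) : ℕ) = (k:ℕ) - (r-2) := by simp [bsgIdx, hk]

variable {r : ℕ} {A : Fin r → Finset G} {a : Fin r → G} {p : Fin (2*r-2) → G}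

lemma bsgZ_mem (ha : ∀ i, a i ∈ A i) (hp : ∀ k, p k ∈ A (bsgIdx r k)) (i : Fin r) :
    bsgZ r a p i ∈ A i := by
  unfold bsgZ
  split_ifs with h
  · have h2 := hp ⟨(i:ℕ), by have := i.2; omega⟩
    have h3 : bsgIdx r ⟨(i:ℕ), by have := i.2; omega⟩ = i := by
      apply Fin.ext
      rw [bsgIdx_val_low _ h]
    rwa [h3] at h2
  · exact ha i

lemma bsgY_mem (ha : ∀ i, a i ∈ A i) (hp : ∀ k, p k ∈ A (bsgIdx r k)) (i : Fin r) :
    bsgY r a p i ∈ A i := by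
  unfold bsgY
  split_ifs with h
  · have h2 := hp ⟨r - 2 + (i:ℕ), by have := i.2; omega⟩
    have h3 : bsgIdx r ⟨r - 2 + (i:ℕ), by have := i.2; omega⟩ = i := by
      apply Fin.ext
      rw [bsgIdx_val_high _ (by simp only [Fin.val_mk]; omega)]
      simp
    rwa [h3] at h2
  · exact ha i

lemma bsgV_mem (ha : ∀ i, a i ∈ A i) (hp : ∀ k, p k ∈ A (bsgIdx r k))
    (j : Fin (2*r-1)) (i : Fin r) : bsgV r a p j i ∈ A i := by
  unfold bsgV
  split_ifs with h1 h2
  · exact bsgZ_mem ha hp i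
  · exact ha i
  · exact bsgY_mem ha hp i

lemma bsgV_altSum (hr : 2 ≤ r) (a : Fin r → G) (p : Fin (2*r-2) → G) :
    ∑ j : Fin (2*r-1), ((-1:ℤ))^(j:ℕ) • (∑ i, bsgV r a p j i) = ∑ i, a i := by
  have e1 : ∀ j : Fin (2*r-1), ((-1:ℤ))^(j:ℕ) • (∑ i, bsgV r a p j i)
      = ∑ i, ((-1:ℤ))^(j:ℕ) • bsgV r a p j i := fun j => Finset.smul_sum
  rw [Finset.sum_congr rfl (fun j _ => e1 j), Finset.sum_comm]
  refine Finset.sum_congr rfl (fun i _ => ?_)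
  have e2 : ∑ j : Fin (2*r-1), ((-1:ℤ))^(j:ℕ) • bsgV r a p j i
      = ∑ j ∈ Finset.range (2*r-1), ((-1:ℤ))^j •
          (if 2*(i:ℕ) < j then bsgZ r a p i else if 2*(i:ℕ) = j then a i else bsgY r a p i) :=
    Fin.sum_univ_eq_sum_range
      (fun j => ((-1:ℤ))^j •
        (if 2*(i:ℕ) < j then bsgZ r a p i else if 2*(i:ℕ) = j then a i else bsgY r a p i)) _
  rw [e2, show 2*r-1 = 2*(r-1)+1 by omega]
  exact alt_pick _ _ _ _ _ (by have := i.2; omega)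

lemma bsgV_diff_low (hr : 2 ≤ r) (a : Fin r → G) (p : Fin (2*r-2) → G)
    (k : Fin (2*r-2)) (hk : (k:ℕ) < r-1) :
    (∑ i, bsgV r a p ⟨2*(k:ℕ), by have := k.2; omega⟩ i)
      - (∑ i, bsgV r a p ⟨2*(k:ℕ)+1, by have := k.2; omega⟩ i)
      = a ⟨(k:ℕ), by have := k.2; omega⟩ - p k := by
  rw [← Finset.sum_sub_distrib]
  have hpf : ((k:ℕ)) < r := by have := k.2; omega
  trans (bsgV r a p ⟨2*(k:ℕ), by have := k.2; omega⟩ (⟨(k:ℕ), hpf⟩ : Fin r)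
      - bsgV r a p ⟨2*(k:ℕ)+1, by have := k.2; omega⟩ (⟨(k:ℕ), hpf⟩ : Fin r))
  · apply Finset.sum_eq_single_of_mem _ (Finset.mem_univ _)
    intro i _ hne
    have hne' : (i:ℕ) ≠ (k:ℕ) := fun h => hne (Fin.ext h)
    unfold bsgV
    rcases lt_or_ge (2*(i:ℕ)) (2*(k:ℕ)) with h2 | h2
    · rw [if_pos (by simpa using h2), if_pos (by simp only [Fin.val_mk]; omega)]
      exact sub_self _
    · rw [if_neg (by simp only [Fin.val_mk]; omega), if_neg (by simp only [Fin.val_mk]; omega), if_neg (by simp only [Fin.val_mk]; omega),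
        if_neg (by simp only [Fin.val_mk]; omega)]
      exact sub_self _
  · unfold bsgV
    rw [if_neg (by simp only [Fin.val_mk]; omega), if_pos (by simp only [Fin.val_mk]),
      if_pos (by simp only [Fin.val_mk]; omega)]
    unfold bsgZ
    rw [dif_pos (by simp only [Fin.val_mk]; omega)]

lemma bsgV_diff_high (hr : 2 ≤ r) (a : Fin r → G) (p : Fin (2*r-2) → G)
    (k : Fin (2*r-2)) (hk : ¬ (k:ℕ) < r-1) :
    (∑ i, bsgV r a p ⟨2*((k:ℕ)-(r-2))-1, by have := k.2; omega⟩ i)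
      - (∑ i, bsgV r a p ⟨2*((k:ℕ)-(r-2)), by have := k.2; omega⟩ i)
      = p k - a ⟨(k:ℕ)-(r-2), by have := k.2; omega⟩ := by
  have hk2 := k.2
  have hi0 : 1 ≤ (k:ℕ)-(r-2) := by omega
  rw [← Finset.sum_sub_distrib]
  have hpf : ((k:ℕ)-(r-2)) < r := by omega
  trans (bsgV r a p ⟨2*((k:ℕ)-(r-2))-1, by omega⟩ (⟨(k:ℕ)-(r-2), hpf⟩ : Fin r)
      - bsgV r a p ⟨2*((k:ℕ)-(r-2)), by omega⟩ (⟨(k:ℕ)-(r-2), hpf⟩ : Fin r))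
  · apply Finset.sum_eq_single_of_mem _ (Finset.mem_univ _)
    intro i _ hne
    have hne' : (i:ℕ) ≠ (k:ℕ)-(r-2) := fun h => hne (Fin.ext h)
    unfold bsgV
    rcases lt_or_ge ((i:ℕ)) ((k:ℕ)-(r-2)) with h2 | h2
    · rw [if_pos (by simp only [Fin.val_mk]; omega), if_pos (by simp only [Fin.val_mk]; omega)]
      exact sub_self _
    · rw [if_neg (by simp only [Fin.val_mk]; omega), if_neg (by simp only [Fin.val_mk]; omega), if_neg (by simp only [Fin.val_mk]; omega),
        if_neg (by simp only [Fin.val_mk]; omega)]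
      exact sub_self _
  · unfold bsgV
    rw [if_neg (by simp only [Fin.val_mk]; omega), if_neg (by simp only [Fin.val_mk]; omega),
      if_neg (by simp only [Fin.val_mk]; omega), if_pos (by simp only [Fin.val_mk])]
    unfold bsgY
    rw [dif_pos (by simp only [Fin.val_mk]; omega)]
    have : (⟨r - 2 + ((k:ℕ) - (r - 2)), by omega⟩ : Fin (2*r-2)) = k := Fin.ext (by simp only [Fin.val_mk]; omega)
    rw [this]

lemma card_le_of_agree {ι : Type} [Fintype ι] [DecidableEq ι] (D : ι → Finset G) (n : ℕ)
    (hD : ∀ k, (D k).card = n) (U : Finset ι) (p₀ : ι → G) (B : Finset (ι → G))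
    (hB : ∀ q ∈ B, q ∈ Fintype.piFinset D ∧ ∀ k ∈ U, q k = p₀ k) :
    B.card ≤ n ^ (Fintype.card ι - U.card) := by
  have hsub : B ⊆ Fintype.piFinset (fun k => if k ∈ U then ({p₀ k} : Finset G) else D k) := by
    intro q hq
    rw [Fintype.mem_piFinset]
    intro k
    by_cases hkU : k ∈ U
    · simp [hkU, (hB q hq).2 k hkU]
    · simpa [hkU] using (Fintype.mem_piFinset.1 (hB q hq).1) k
  refine le_trans (Finset.card_le_card hsub) ?_
  rw [Fintype.card_piFinset]
  have e1 : ∀ k, (if k ∈ U then ({p₀ k} : Finset G) else D k).card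
      = (if k ∈ U then 1 else n) := by
    intro k; split_ifs with h <;> simp [hD k]
  rw [Finset.prod_congr rfl (fun k _ => e1 k), Finset.prod_ite, Finset.prod_const,
    Finset.prod_const, one_pow, one_mul]
  have e2 : Finset.univ.filter (fun k => ¬ k ∈ U) = Finset.univ \ U := by
    ext x; simp
  rw [e2, Finset.card_sdiff_of_subset (Finset.subset_univ _), Finset.card_univ]

end BSGaux2

section BSGaux3

variable {G : Type} [AddCommGroup G] {r : ℕ} 

lemma bsgV_pivot (hr : 2 ≤ r) (a : Fin r → G) (q : Fin (2*r-2) → G) (k : ℕ) (hk : k ≤ r-1) :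
    bsgV r a q ⟨2*k, by omega⟩ ⟨k, by omega⟩ = a ⟨k, by omega⟩ := by
  unfold bsgV
  rw [if_neg (by simp only [Fin.val_mk]; omega), if_pos (by simp only [Fin.val_mk])]

lemma bsg_recover_even (hr : 2 ≤ r) (a : Fin r → G) (q : Fin (2*r-2) → G)
    (k : ℕ) (hk : k ≤ r-1) (t : Fin (r-1)) :
    bsgV r a q ⟨2*k, by omega⟩
      (if (t:ℕ) < k then ⟨(t:ℕ), by have := t.2; omega⟩ else ⟨(t:ℕ)+1, by have := t.2; omega⟩)
      = q (if (t:ℕ) < k then ⟨(t:ℕ), by have := t.2; omega⟩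
           else ⟨(t:ℕ)+r-1, by have := t.2; omega⟩) := by
  have ht := t.2
  split_ifs with h
  · unfold bsgV
    rw [if_pos (by simp only [Fin.val_mk]; omega)]
    unfold bsgZ
    rw [dif_pos (by simp only [Fin.val_mk]; omega)]
  · unfold bsgV
    rw [if_neg (by simp only [Fin.val_mk]; omega), if_neg (by simp only [Fin.val_mk]; omega)]
    unfold bsgY
    rw [dif_pos (by simp only [Fin.val_mk]; omega)]
    exact congrArg q (Fin.ext (by simp only [Fin.val_mk]; omega))

lemma bsg_recover_odd (hr : 2 ≤ r) (a : Fin r → G) (q : Fin (2*r-2) → G)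
    (k : ℕ) (hk : k ≤ r-2) (t : Fin r) :
    bsgV r a q ⟨2*k+1, by omega⟩ t
      = q (if (t:ℕ) ≤ k then ⟨(t:ℕ), by omega⟩
           else ⟨(t:ℕ)+r-2, by have := t.2; omega⟩) := by
  have ht := t.2
  split_ifs with h
  · unfold bsgV
    rw [if_pos (by simp only [Fin.val_mk]; omega)]
    unfold bsgZ
    rw [dif_pos (by omega)]
  · unfold bsgV
    rw [if_neg (by simp only [Fin.val_mk]; omega), if_neg (by simp only [Fin.val_mk]; omega)]
    unfold bsgY
    rw [dif_pos (by omega)]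
    exact congrArg q (Fin.ext (by simp only [Fin.val_mk]; omega))

end BSGaux3

section BSGaux4

variable {G : Type} [AddCommGroup G] [DecidableEq G] {r n : ℕ}

lemma bsg_badcard_even (hr : 2 ≤ r)
    (A : Fin r → Finset G) (hA : ∀ i, (A i).card = n) (H : Finset (Fin r → G))
    (a : Fin r → G) (haA : ∀ i, a i ∈ A i) (k : ℕ) (hkr : k ≤ r-1) :
    ((Fintype.piFinset (fun kk => A (bsgIdx r kk))).filter
        (fun p => bsgV r a p ⟨2*k, by omega⟩ ∉ H)).card
      ≤ n^(r-1) * ((((Fintype.piFinset A).filter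
          (fun e => e ⟨k, by omega⟩ = a ⟨k, by omega⟩)) \ H).card) := by
  set D : Fin (2*r-2) → Finset G := fun kk => A (bsgIdx r kk) with hDdef
  have hDcard : ∀ kk, (D kk).card = n := fun kk => hA _
  set f : (Fin (2*r-2) → G) → (Fin r → G) := fun p => bsgV r a p ⟨2*k, by omega⟩ with hfdef
  set BadS := (Fintype.piFinset D).filter (fun p => f p ∉ H) with hBadS
  have himg : BadS.image f ⊆
      ((Fintype.piFinset A).filter (fun e => e ⟨k, by omega⟩ = a ⟨k, by omega⟩)) \ H := by
    intro e he'
    obtain ⟨p, hpB, hpe⟩ := Finset.mem_image.1 he'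
    rw [hBadS, Finset.mem_filter] at hpB
    have hpD : ∀ kk, p kk ∈ A (bsgIdx r kk) := Fintype.mem_piFinset.1 hpB.1
    rw [Finset.mem_sdiff, Finset.mem_filter]
    refine ⟨⟨?_, ?_⟩, ?_⟩
    · rw [← hpe]; exact Fintype.mem_piFinset.2 (fun i => bsgV_mem haA hpD _ i)
    · rw [← hpe]; exact bsgV_pivot hr a p k hkr
    · rw [← hpe]; exact hpB.2
  have hfib : ∀ e ∈ BadS.image f, (BadS.filter (fun p => f p = e)).card ≤ n^(r-1) := by
    intro e he'
    obtain ⟨p₀, hp₀, hp₀e⟩ := Finset.mem_image.1 he'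
    have hrec : ∀ q ∈ BadS.filter (fun p => f p = e),
        q ∈ Fintype.piFinset D ∧
          ∀ u ∈ Finset.image (fun t : Fin (r-1) =>
              if (t:ℕ) < k then (⟨(t:ℕ), by have := t.2; omega⟩ : Fin (2*r-2))
              else ⟨(t:ℕ)+r-1, by have := t.2; omega⟩) Finset.univ,
            q u = p₀ u := by
      intro q hq
      rw [Finset.mem_filter] at hq
      obtain ⟨hqB, hqe⟩ := hq
      rw [hBadS, Finset.mem_filter] at hqB
      refine ⟨hqB.1, ?_⟩
      intro u hu
      obtain ⟨t, _, htu⟩ := Finset.mem_image.1 hu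
      rw [← htu]
      have hq2 := bsg_recover_even (G := G) hr a q k hkr t
      have hp2 := bsg_recover_even (G := G) hr a p₀ k hkr t
      have hmid : f q = f p₀ := hqe.trans hp₀e.symm
      exact hq2.symm.trans ((congrFun hmid _).trans hp2)
    have hWeinj : Function.Injective (fun t : Fin (r-1) =>
        if (t:ℕ) < k then (⟨(t:ℕ), by have := t.2; omega⟩ : Fin (2*r-2))
        else ⟨(t:ℕ)+r-1, by have := t.2; omega⟩) := by
      intro t t' h
      have hv := congrArg Fin.val h
      have ht := t.2
      have ht' := t'.2
      apply Fin.ext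
      by_cases h1 : (t:ℕ) < k <;> by_cases h2 : (t':ℕ) < k <;>
        simp only [h1, h2, if_pos, if_neg, Fin.val_mk, if_true, if_false] at hv <;> omega
    have hcard := card_le_of_agree D n hDcard _ p₀ _ hrec
    rw [Finset.card_image_of_injective _ hWeinj, Finset.card_univ, Fintype.card_fin,
      Fintype.card_fin] at hcard
    have he2 : (2*r-2) - (r-1) = r-1 := by omega
    rwa [he2] at hcard
  exact le_trans (Finset.card_le_mul_card_image (f := f) BadS (n^(r-1)) hfib)
    (Nat.mul_le_mul_left _ (Finset.card_le_card himg))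

lemma bsg_badcard_odd (hr : 2 ≤ r)
    (A : Fin r → Finset G) (hA : ∀ i, (A i).card = n) (H : Finset (Fin r → G))
    (a : Fin r → G) (haA : ∀ i, a i ∈ A i) (k : ℕ) (hkr : k ≤ r-2) :
    ((Fintype.piFinset (fun kk => A (bsgIdx r kk))).filter
        (fun p => bsgV r a p ⟨2*k+1, by omega⟩ ∉ H)).card
      ≤ n^(r-2) * ((Fintype.piFinset A \ H).card) := by
  set D : Fin (2*r-2) → Finset G := fun kk => A (bsgIdx r kk) with hDdef
  have hDcard : ∀ kk, (D kk).card = n := fun kk => hA _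
  set f : (Fin (2*r-2) → G) → (Fin r → G) := fun p => bsgV r a p ⟨2*k+1, by omega⟩ with hfdef
  set BadS := (Fintype.piFinset D).filter (fun p => f p ∉ H) with hBadS
  have himg : BadS.image f ⊆ Fintype.piFinset A \ H := by
    intro e he'
    obtain ⟨p, hpB, hpe⟩ := Finset.mem_image.1 he'
    rw [hBadS, Finset.mem_filter] at hpB
    have hpD : ∀ kk, p kk ∈ A (bsgIdx r kk) := Fintype.mem_piFinset.1 hpB.1
    rw [Finset.mem_sdiff]
    refine ⟨?_, ?_⟩
    · rw [← hpe]; exact Fintype.mem_piFinset.2 (fun i => bsgV_mem haA hpD _ i)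
    · rw [← hpe]; exact hpB.2
  have hfib : ∀ e ∈ BadS.image f, (BadS.filter (fun p => f p = e)).card ≤ n^(r-2) := by
    intro e he'
    obtain ⟨p₀, hp₀, hp₀e⟩ := Finset.mem_image.1 he'
    have hrec : ∀ q ∈ BadS.filter (fun p => f p = e),
        q ∈ Fintype.piFinset D ∧
          ∀ u ∈ Finset.image (fun t : Fin r =>
              if (t:ℕ) ≤ k then (⟨(t:ℕ), by omega⟩ : Fin (2*r-2))
              else ⟨(t:ℕ)+r-2, by have := t.2; omega⟩) Finset.univ,
            q u = p₀ u := by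
      intro q hq
      rw [Finset.mem_filter] at hq
      obtain ⟨hqB, hqe⟩ := hq
      rw [hBadS, Finset.mem_filter] at hqB
      refine ⟨hqB.1, ?_⟩
      intro u hu
      obtain ⟨t, _, htu⟩ := Finset.mem_image.1 hu
      rw [← htu]
      have hq2 := bsg_recover_odd (G := G) hr a q k hkr t
      have hp2 := bsg_recover_odd (G := G) hr a p₀ k hkr t
      have hmid : f q = f p₀ := hqe.trans hp₀e.symm
      exact hq2.symm.trans ((congrFun hmid _).trans hp2)
    have hWoinj : Function.Injective (fun t : Fin r =>
        if (t:ℕ) ≤ k then (⟨(t:ℕ), by omega⟩ : Fin (2*r-2))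
        else ⟨(t:ℕ)+r-2, by have := t.2; omega⟩) := by
      intro t t' h
      have hv := congrArg Fin.val h
      have ht := t.2
      have ht' := t'.2
      apply Fin.ext
      by_cases h1 : (t:ℕ) ≤ k <;> by_cases h2 : (t':ℕ) ≤ k <;>
        simp only [h1, h2, if_pos, if_neg, Fin.val_mk, if_true, if_false] at hv <;> omega
    have hcard := card_le_of_agree D n hDcard _ p₀ _ hrec
    rw [Finset.card_image_of_injective _ hWoinj, Finset.card_univ, Fintype.card_fin,
      Fintype.card_fin] at hcard
    have he2 : (2*r-2) - r = r-2 := by omega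
    rwa [he2] at hcard
  exact le_trans (Finset.card_le_mul_card_image (f := f) BadS (n^(r-2)) hfib)
    (Nat.mul_le_mul_left _ (Finset.card_le_card himg))

end BSGaux4
set_option maxHeartbeats 1000000 in
/-- Weaker "almost all" hypergraph BSG (Lemma 4.1 of the paper): for `δ`
sufficiently small and `n` sufficiently large, an almost-complete hypergraph
with restricted sumset of size at most `Cn` yields almost-spanning subsets
`A'_i` of size exactly `⌈(1-ε)n⌉` with `|A'_1 + ⋯ + A'_r| ≤ 2 C^{2r-1} n`. -/
theorem weak_almost_hypergraph_BSG (r : ℕ) (hr : 2 ≤ r) (ε C : ℝ)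
    (hε : 0 < ε) (hε1 : ε < 1) (hC : 1 < C) :
    ∃ δ₀ : ℝ, 0 < δ₀ ∧ ∃ n₀ : ℕ,
      ∀ δ : ℝ, 0 < δ → δ ≤ δ₀ → ∀ n ≥ n₀,
        ∀ (G : Type) [AddCommGroup G] [DecidableEq G] (A : Fin r → Finset G),
          (∀ i, (A i).card = n) →
          ∀ H ⊆ Fintype.piFinset A,
            (1 - δ) * (n : ℝ) ^ r ≤ H.card →
            ((H.image fun e => ∑ i, e i).card : ℝ) ≤ C * n →
            ∃ A' : Fin r → Finset G, (∀ i, A' i ⊆ A i) ∧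
              (∀ i, (A' i).card = ⌈(1 - ε) * (n : ℝ)⌉₊) ∧
              (((Fintype.piFinset A').image fun a => ∑ i, a i).card : ℝ) ≤
                2 * C ^ (2 * r - 1) * n := by
  have hrR : (0:ℝ) < (r:ℝ) := by positivity
  refine ⟨ε/(8*r), by positivity, 1, ?_⟩
  intro δ hδ0 hδ n hn G _ _ A hA H hH hHcard hScard
  have hn1 : 1 ≤ n := hn
  have hnR : (0:ℝ) < (n:ℝ) := by exact_mod_cast hn1
  classical
  set θ : ℝ := 1/(4*(r:ℝ)) with hθdef
  have hθ0 : 0 < θ := by positivity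
  have hδθ : δ < θ := by
    rw [hθdef]
    have : ε/(8*r) < 1/(4*(r:ℝ)) := by
      rw [div_lt_div_iff₀ (by positivity) (by positivity)]
      nlinarith
    linarith
  set Good : Fin r → Finset G := fun i => (A i).filter
    (fun x => (1-θ) * (n:ℝ)^(r-1) ≤ ((H.filter (fun e => e i = x)).card : ℝ)) with hGood
  have hfull : ∀ (i : Fin r), ∀ x ∈ A i,
      ((Fintype.piFinset A).filter (fun e => e i = x)).card = n^(r-1) := by
    intro i x hx
    rw [Fintype.card_filter_piFinset_eq_of_mem A i hx]
    calc ∏ j ∈ Finset.univ.erase i, (A j).card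
        = ∏ j ∈ Finset.univ.erase i, n := Finset.prod_congr rfl (fun j _ => hA j)
      _ = n ^ (r-1) := by
          rw [Finset.prod_const, Finset.card_erase_of_mem (Finset.mem_univ _),
            Finset.card_univ, Fintype.card_fin]
  have hdegle : ∀ (i : Fin r), ∀ x ∈ A i,
      ((H.filter (fun e => e i = x)).card : ℝ) ≤ (n:ℝ)^(r-1) := by
    intro i x hx
    have h1 : (H.filter (fun e => e i = x)).card ≤ n^(r-1) := by
      rw [← hfull i x hx]
      exact Finset.card_le_card (Finset.filter_subset_filter _ hH)
    calc ((H.filter (fun e => e i = x)).card : ℝ) ≤ ((n^(r-1) : ℕ) : ℝ) := by exact_mod_cast h1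
      _ = (n:ℝ)^(r-1) := by push_cast; ring
  have hpowsplit : (n:ℝ)^(r:ℕ) = (n:ℝ) * (n:ℝ)^(r-1) := by
    rw [← pow_succ']
    congr 1
    omega
  have hGsub : ∀ i, Good i ⊆ A i := fun i => Finset.filter_subset _ _
  -- size of the good sets
  have hGcard : ∀ i, (1-ε) * (n:ℝ) ≤ ((Good i).card : ℝ) := by
    intro i
    have hfib : ∑ x ∈ A i, (H.filter (fun e => e i = x)).card = H.card :=
      (Finset.card_eq_sum_card_fiberwise (fun e he => (Fintype.mem_piFinset.1 (hH he)) i)).symm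
    have hsum : ∑ x ∈ A i, ((n:ℝ)^(r-1) - ((H.filter (fun e => e i = x)).card : ℝ))
        ≤ δ * (n:ℝ)^(r:ℕ) := by
      rw [Finset.sum_sub_distrib, Finset.sum_const, hA i]
      have : ((∑ x ∈ A i, ((H.filter (fun e => e i = x)).card : ℝ))) = (H.card : ℝ) := by
        rw [← Nat.cast_sum, hfib]
      rw [this]
      have h2 : (n • ((n:ℝ)^(r-1)) : ℝ) = (n:ℝ)^(r:ℕ) := by
        rw [nsmul_eq_mul, ← hpowsplit]
      rw [h2]
      nlinarith [hHcard]
    set Bad : Finset G := (A i).filter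
      (fun x => ¬ ((1-θ) * (n:ℝ)^(r-1) ≤ ((H.filter (fun e => e i = x)).card : ℝ))) with hBad
    have hsplit : (Good i).card + Bad.card = n := by
      rw [hGood, hBad, Finset.card_filter_add_card_filter_not, hA i]
    have hbadle : (Bad.card : ℝ) * (θ * (n:ℝ)^(r-1)) ≤ δ * (n:ℝ)^(r:ℕ) := by
      calc (Bad.card : ℝ) * (θ * (n:ℝ)^(r-1))
          = ∑ _x ∈ Bad, θ * (n:ℝ)^(r-1) := by rw [Finset.sum_const, nsmul_eq_mul]
        _ ≤ ∑ x ∈ Bad, ((n:ℝ)^(r-1) - ((H.filter (fun e => e i = x)).card : ℝ)) := by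
            refine Finset.sum_le_sum ?_
            intro x hx
            rw [hBad, Finset.mem_filter] at hx
            have := hx.2
            push_neg at this
            nlinarith [this]
        _ ≤ ∑ x ∈ A i, ((n:ℝ)^(r-1) - ((H.filter (fun e => e i = x)).card : ℝ)) := by
            refine Finset.sum_le_sum_of_subset_of_nonneg (Finset.filter_subset _ _) ?_
            intro x hx _
            have := hdegle i x hx
            linarith
        _ ≤ δ * (n:ℝ)^(r:ℕ) := hsum
    -- Bad.card ≤ (ε/2) n
    have hBadn : (Bad.card : ℝ) ≤ (ε/2) * n := by
      have hp : (0:ℝ) < (n:ℝ)^(r-1) := pow_pos hnR _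
      have h1 : (Bad.card : ℝ) * θ * (n:ℝ)^(r-1) ≤ (δ * n) * (n:ℝ)^(r-1) := by
        rw [hpowsplit] at hbadle
        nlinarith [hbadle]
      have h2 : (Bad.card : ℝ) * θ ≤ δ * n := le_of_mul_le_mul_right h1 hp
      have hBc : (Bad.card:ℝ) = ((Bad.card:ℝ) * θ) * (4*(r:ℝ)) := by
        rw [hθdef]; field_simp
      have hstep : ((Bad.card:ℝ) * θ) * (4*(r:ℝ)) ≤ (δ*n)*(4*(r:ℝ)) :=
        mul_le_mul_of_nonneg_right h2 (by positivity)
      have hstep2 : (δ*(n:ℝ))*(4*(r:ℝ)) ≤ (ε/(8*(r:ℝ))*n)*(4*(r:ℝ)) := by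
        apply mul_le_mul_of_nonneg_right _ (by positivity)
        apply mul_le_mul_of_nonneg_right hδ (le_of_lt hnR)
      have hstep3 : (ε/(8*(r:ℝ))*(n:ℝ))*(4*(r:ℝ)) = (ε/2)*n := by field_simp; ring
      linarith [hBc, hstep, hstep2, hstep3]
    have : ((Good i).card : ℝ) = n - Bad.card := by
      have := hsplit
      push_cast [← this]
      ring
    rw [this]
    nlinarith [hBadn]
  have hm : ∀ i, ⌈(1-ε)*(n:ℝ)⌉₊ ≤ (Good i).card := fun i => Nat.ceil_le.2 (hGcard i)
  have hex : ∀ i : Fin r, ∃ B ⊆ Good i, B.card = ⌈(1-ε)*(n:ℝ)⌉₊ := fun i =>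
    Finset.exists_subset_card_eq (hm i)
  choose A' hA'sub hA'card using hex
  refine ⟨A', fun i => (hA'sub i).trans (hGsub i), hA'card, ?_⟩
  -- final counting argument
  set TT := (Fintype.piFinset A').image (fun a => ∑ i, a i) with hTT
  have hpiAcard : (Fintype.piFinset A).card = n^r := by
    rw [Fintype.card_piFinset]
    calc ∏ i, (A i).card = ∏ _i : Fin r, n := Finset.prod_congr rfl (fun i _ => hA i)
      _ = n^r := by rw [Finset.prod_const, Finset.card_univ, Fintype.card_fin]
  have hcompl : (((Fintype.piFinset A) \ H).card : ℝ) ≤ δ * (n:ℝ)^(r:ℕ) := by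
    have h2 : H.card ≤ (Fintype.piFinset A).card := Finset.card_le_card hH
    have h1 : (((Fintype.piFinset A) \ H).card : ℝ)
        = ((Fintype.piFinset A).card : ℝ) - (H.card : ℝ) := by
      rw [Finset.card_sdiff_of_subset hH, Nat.cast_sub h2]
    rw [h1, hpiAcard]
    push_cast
    nlinarith [hHcard]
  set F2 : G → Finset (Fin (2*r-1) → G) := fun g =>
    (Fintype.piFinset (fun _ : Fin (2*r-1) => H.image (fun e => ∑ i, e i))).filter
      (fun s => ∑ j : Fin (2*r-1), ((-1:ℤ))^((j:ℕ)) • s j = g) with hF2def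
  have hee : 2*r-1 = (2*r-2)+1 := by omega
  have key : ∀ g ∈ TT, (n:ℝ)^(2*r-2) ≤ 2 * ((F2 g).card : ℝ) := by
    intro g hg
    rw [hTT] at hg
    obtain ⟨a, haP, hag⟩ := Finset.mem_image.1 hg
    have haG : ∀ i, a i ∈ Good i := fun i => hA'sub i ((Fintype.mem_piFinset.1 haP) i)
    have haA : ∀ i, a i ∈ A i := fun i => hGsub i (haG i)
    have hadeg : ∀ i, (1-θ) * (n:ℝ)^(r-1) ≤ ((H.filter (fun e => e i = a i)).card : ℝ) := by
      intro i
      have h0 := haG i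
      simp only [hGood, Finset.mem_filter] at h0
      exact h0.2
    have hWall : ∀ i : Fin r,
        ((((Fintype.piFinset A).filter (fun e => e i = a i)) \ H).card : ℝ)
          ≤ θ * (n:ℝ)^(r-1) := by
      intro i
      have hinter : ((Fintype.piFinset A).filter (fun e => e i = a i)) ∩ H
          = H.filter (fun e => e i = a i) := by
        ext e
        simp only [Finset.mem_inter, Finset.mem_filter]
        constructor
        · rintro ⟨⟨_, h2⟩, h3⟩; exact ⟨h3, h2⟩
        · rintro ⟨h1, h2⟩; exact ⟨⟨hH h1, h2⟩, h1⟩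
      have hsplit2 := Finset.card_sdiff_add_card_inter
        ((Fintype.piFinset A).filter (fun e => e i = a i)) H
      rw [hinter, hfull i (a i) (haA i)] at hsplit2
      have hreal : ((((Fintype.piFinset A).filter (fun e => e i = a i)) \ H).card : ℝ)
          + ((H.filter (fun e => e i = a i)).card : ℝ) = (n:ℝ)^(r-1) := by
        exact_mod_cast congrArg (Nat.cast : ℕ → ℝ) hsplit2
      have := hadeg i
      nlinarith [this, hreal, pow_nonneg (le_of_lt hnR) (r-1)]
    have hsplitpow1 : (n:ℝ)^(2*r-2) = (n:ℝ)^(r-1) * (n:ℝ)^(r-1) := by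
      rw [← pow_add]; congr 1; omega
    have hsplitpow2 : (n:ℝ)^(2*r-2) = (n:ℝ)^(r-2) * (n:ℝ)^(r:ℕ) := by
      rw [← pow_add]; congr 1; omega
    -- bad set bounds
    have hbad : ∀ j : Fin (2*r-1),
        (((Fintype.piFinset (fun kk => A (bsgIdx r kk))).filter
          (fun p => bsgV r a p j ∉ H)).card : ℝ) ≤ θ * (n:ℝ)^(2*r-2) := by
      intro j
      have hj2 : (j:ℕ) < 2*r-1 := j.2
      have hnr1 : (0:ℝ) ≤ (n:ℝ)^(r-1) := by positivity
      rcases Nat.even_or_odd (j:ℕ) with he | ho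
      · obtain ⟨k, hk⟩ := he
        have hkr : k ≤ r-1 := by omega
        have hkpf : (2*k) < 2*r-1 := by omega
        have hkpf2 : k < r := by omega
        have hjeq : j = ⟨2*k, hkpf⟩ := Fin.ext (by simp only [Fin.val_mk]; omega)
        rw [hjeq]
        have hlem := bsg_badcard_even (n := n) hr A hA H a haA k hkr
        have h1 : (((Fintype.piFinset (fun kk => A (bsgIdx r kk))).filter
            (fun p => bsgV r a p ⟨2*k, hkpf⟩ ∉ H)).card : ℝ)
            ≤ (n:ℝ)^(r-1) * ((((Fintype.piFinset A).filter
              (fun e => e ⟨k, hkpf2⟩ = a ⟨k, hkpf2⟩)) \ H).card : ℝ) := by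
          exact_mod_cast hlem
        refine le_trans h1 ?_
        have h2 : ((((Fintype.piFinset A).filter
            (fun e => e ⟨k, hkpf2⟩ = a ⟨k, hkpf2⟩)) \ H).card : ℝ)
            ≤ θ * (n:ℝ)^(r-1) := hWall ⟨k, hkpf2⟩
        calc (n:ℝ)^(r-1) * ((((Fintype.piFinset A).filter
              (fun e => e ⟨k, hkpf2⟩ = a ⟨k, hkpf2⟩)) \ H).card : ℝ)
            ≤ (n:ℝ)^(r-1) * (θ * (n:ℝ)^(r-1)) := mul_le_mul_of_nonneg_left h2 hnr1
          _ = θ * (n:ℝ)^(2*r-2) := by rw [hsplitpow1]; ring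
      · obtain ⟨k, hk⟩ := ho
        have hkr : k ≤ r-2 := by omega
        have hkpf : (2*k+1) < 2*r-1 := by omega
        have hjeq : j = ⟨2*k+1, hkpf⟩ := Fin.ext (by simp only [Fin.val_mk]; omega)
        rw [hjeq]
        have hlem := bsg_badcard_odd (n := n) hr A hA H a haA k hkr
        have h1 : (((Fintype.piFinset (fun kk => A (bsgIdx r kk))).filter
            (fun p => bsgV r a p ⟨2*k+1, hkpf⟩ ∉ H)).card : ℝ)
            ≤ (n:ℝ)^(r-2) * (((Fintype.piFinset A \ H)).card : ℝ) := by
          exact_mod_cast hlem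
        refine le_trans h1 ?_
        have hnr2 : (0:ℝ) ≤ (n:ℝ)^(r-2) := by positivity
        calc (n:ℝ)^(r-2) * (((Fintype.piFinset A \ H)).card : ℝ)
            ≤ (n:ℝ)^(r-2) * (δ * (n:ℝ)^(r:ℕ)) := mul_le_mul_of_nonneg_left hcompl hnr2
          _ ≤ (n:ℝ)^(r-2) * (θ * (n:ℝ)^(r:ℕ)) := by
              have hp : (0:ℝ) ≤ (n:ℝ)^(r:ℕ) := by positivity
              exact mul_le_mul_of_nonneg_left
                (mul_le_mul_of_nonneg_right (le_of_lt hδθ) hp) hnr2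
          _ = θ * (n:ℝ)^(2*r-2) := by rw [hsplitpow2]; ring
    -- lower bound on the number of good parameters
    have hbase : (Fintype.piFinset (fun kk => A (bsgIdx r kk))).card = n^(2*r-2) := by
      rw [Fintype.card_piFinset]
      calc ∏ kk, (A (bsgIdx r kk)).card = ∏ _kk : Fin (2*r-2), n :=
            Finset.prod_congr rfl (fun kk _ => hA _)
        _ = n^(2*r-2) := by rw [Finset.prod_const, Finset.card_univ, Fintype.card_fin]
    set P := (Fintype.piFinset (fun kk => A (bsgIdx r kk))).filter
      (fun p => ∀ j : Fin (2*r-1), bsgV r a p j ∈ H) with hPdef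
    have hPcard : (n:ℝ)^(2*r-2) ≤ 2 * (P.card : ℝ) := by
      have hsplitP : P.card + ((Fintype.piFinset (fun kk => A (bsgIdx r kk))).filter
          (fun p => ¬ ∀ j : Fin (2*r-1), bsgV r a p j ∈ H)).card = n^(2*r-2) := by
        rw [hPdef, Finset.card_filter_add_card_filter_not, hbase]
      have hsub2 : (Fintype.piFinset (fun kk => A (bsgIdx r kk))).filter
          (fun p => ¬ ∀ j : Fin (2*r-1), bsgV r a p j ∈ H)
          ⊆ Finset.univ.biUnion (fun j : Fin (2*r-1) =>
            (Fintype.piFinset (fun kk => A (bsgIdx r kk))).filter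
              (fun p => bsgV r a p j ∉ H)) := by
        intro p hp
        rw [Finset.mem_filter] at hp
        obtain ⟨hp1, hp2⟩ := hp
        push_neg at hp2
        obtain ⟨j, hj⟩ := hp2
        exact Finset.mem_biUnion.2 ⟨j, Finset.mem_univ _, Finset.mem_filter.2 ⟨hp1, hj⟩⟩
      have hcard2 : (((Fintype.piFinset (fun kk => A (bsgIdx r kk))).filter
          (fun p => ¬ ∀ j : Fin (2*r-1), bsgV r a p j ∈ H)).card : ℝ)
          ≤ (2*(r:ℝ)-1) * (θ * (n:ℝ)^(2*r-2)) := by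
        have hc3 : (((Fintype.piFinset (fun kk => A (bsgIdx r kk))).filter
            (fun p => ¬ ∀ j : Fin (2*r-1), bsgV r a p j ∈ H)).card : ℝ)
            ≤ ((Finset.univ.biUnion (fun j : Fin (2*r-1) =>
              (Fintype.piFinset (fun kk => A (bsgIdx r kk))).filter
                (fun p => bsgV r a p j ∉ H))).card : ℝ) := by
          exact_mod_cast Finset.card_le_card hsub2
        have hc4 : ((Finset.univ.biUnion (fun j : Fin (2*r-1) =>
            (Fintype.piFinset (fun kk => A (bsgIdx r kk))).filter
              (fun p => bsgV r a p j ∉ H))).card : ℝ)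
            ≤ ∑ j : Fin (2*r-1), (((Fintype.piFinset (fun kk => A (bsgIdx r kk))).filter
              (fun p => bsgV r a p j ∉ H)).card : ℝ) := by
          exact_mod_cast Finset.card_biUnion_le
        have hc5 : ∑ j : Fin (2*r-1), (((Fintype.piFinset (fun kk => A (bsgIdx r kk))).filter
            (fun p => bsgV r a p j ∉ H)).card : ℝ)
            ≤ ∑ _j : Fin (2*r-1), θ * (n:ℝ)^(2*r-2) :=
          Finset.sum_le_sum (fun j _ => hbad j)
        have hc6 : ∑ _j : Fin (2*r-1), θ * (n:ℝ)^(2*r-2)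
            = (2*(r:ℝ)-1) * (θ * (n:ℝ)^(2*r-2)) := by
          rw [Finset.sum_const, Finset.card_univ, Fintype.card_fin, nsmul_eq_mul]
          congr 1
          push_cast [Nat.cast_sub (by omega : 1 ≤ 2*r)]
          ring
        rw [hc6] at hc5
        linarith [hc3, hc4, hc5]
      have hhalf : (2*(r:ℝ)-1) * θ ≤ 1/2 := by
        rw [hθdef, mul_one_div, div_le_div_iff₀ (by positivity) (by norm_num : (0:ℝ) < 2)]
        have h2r : (2:ℝ) ≤ (r:ℝ) := by exact_mod_cast hr
        nlinarith [h2r]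
      have hsplitR : (P.card : ℝ) + (((Fintype.piFinset (fun kk => A (bsgIdx r kk))).filter
          (fun p => ¬ ∀ j : Fin (2*r-1), bsgV r a p j ∈ H)).card : ℝ) = (n:ℝ)^(2*r-2) := by
        have := congrArg (Nat.cast : ℕ → ℝ) hsplitP
        push_cast at this
        convert this using 2 <;> push_cast <;> ring
      have hnn : (0:ℝ) ≤ (n:ℝ)^(2*r-2) := by positivity
      nlinarith [hcard2, hsplitR, hhalf, hnn, hθ0]
    -- injection into the fiber of alternating sums
    have hinj : P.card ≤ (F2 g).card := by
      simp only [hF2def]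
      apply Finset.card_le_card_of_injOn (fun p => fun j : Fin (2*r-1) => ∑ i, bsgV r a p j i)
      · intro p hp
        rw [hPdef, Finset.mem_coe, Finset.mem_filter] at hp
        rw [Finset.mem_coe, Finset.mem_filter]
        constructor
        · exact Fintype.mem_piFinset.2 (fun j => Finset.mem_image.2 ⟨bsgV r a p j, hp.2 j, rfl⟩)
        · show (∑ j : Fin (2*r-1), ((-1:ℤ))^((j:ℕ)) • (∑ i, bsgV r a p j i)) = g
          rw [bsgV_altSum hr a p]
          exact hag
      · intro p hp p' hp' hφ
        have hall : ∀ j : Fin (2*r-1), ∑ i, bsgV r a p j i = ∑ i, bsgV r a p' j i :=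
          fun j => congrFun hφ j
        funext kk
        by_cases hkk : (kk:ℕ) < r-1
        · have h1 := bsgV_diff_low hr a p kk hkk
          have h2 := bsgV_diff_low hr a p' kk hkk
          have e1 := hall ⟨2*(kk:ℕ), by have := kk.2; omega⟩
          have e2 := hall ⟨2*(kk:ℕ)+1, by have := kk.2; omega⟩
          have h3 : a ⟨(kk:ℕ), by have := kk.2; omega⟩ - p kk
              = a ⟨(kk:ℕ), by have := kk.2; omega⟩ - p' kk :=
            h1.symm.trans ((congr (congrArg (· - ·) e1) e2).trans h2)
          exact sub_right_inj.1 h3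
        · have h1 := bsgV_diff_high hr a p kk hkk
          have h2 := bsgV_diff_high hr a p' kk hkk
          have e1 := hall ⟨2*((kk:ℕ)-(r-2))-1, by have := kk.2; omega⟩
          have e2 := hall ⟨2*((kk:ℕ)-(r-2)), by have := kk.2; omega⟩
          have h3 : p kk - a ⟨(kk:ℕ)-(r-2), by have := kk.2; omega⟩
              = p' kk - a ⟨(kk:ℕ)-(r-2), by have := kk.2; omega⟩ :=
            h1.symm.trans ((congr (congrArg (· - ·) e1) e2).trans h2)
          exact sub_left_inj.1 h3
    calc (n:ℝ)^(2*r-2) ≤ 2 * (P.card : ℝ) := hPcard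
      _ ≤ 2 * ((F2 g).card : ℝ) := by
          have : (P.card : ℝ) ≤ ((F2 g).card : ℝ) := by exact_mod_cast hinj
          linarith
  -- assemble
  have hdisj : ∑ g ∈ TT, (F2 g).card
      ≤ (Fintype.piFinset (fun _ : Fin (2*r-1) => H.image (fun e => ∑ i, e i))).card := by
    rw [← Finset.card_biUnion]
    · apply Finset.card_le_card
      apply Finset.biUnion_subset.2
      intro g _
      simp only [hF2def]
      exact Finset.filter_subset _ _
    · intro g1 _ g2 _ hne
      rw [Function.onFun, Finset.disjoint_left]
      intro s hs1 hs2
      simp only [hF2def, Finset.mem_filter] at hs1 hs2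
      exact hne (hs1.2.symm.trans hs2.2)
  have hXc : ((Fintype.piFinset (fun _ : Fin (2*r-1) =>
      H.image (fun e => ∑ i, e i))).card : ℝ) ≤ (C*(n:ℝ))^(2*r-1) := by
    rw [Fintype.card_piFinset_const]
    calc (((H.image (fun e => ∑ i, e i)).card ^ (2*r-1) : ℕ) : ℝ)
        = (((H.image (fun e => ∑ i, e i)).card : ℝ))^(2*r-1) := by push_cast; ring
      _ ≤ (C*n)^(2*r-1) := pow_le_pow_left₀ (by positivity) hScard _
  have hlow : (TT.card : ℝ) * (n:ℝ)^(2*r-2) ≤ 2 * (C*(n:ℝ))^(2*r-1) := by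
    have hs1 : ∑ _g ∈ TT, (n:ℝ)^(2*r-2) ≤ ∑ g ∈ TT, 2 * ((F2 g).card : ℝ) :=
      Finset.sum_le_sum (fun g hg => key g hg)
    rw [Finset.sum_const, nsmul_eq_mul] at hs1
    have hs2 : ∑ g ∈ TT, 2 * ((F2 g).card:ℝ) = 2 * ((∑ g ∈ TT, (F2 g).card : ℕ) : ℝ) := by
      rw [← Finset.mul_sum]
      congr 1
      push_cast
      rfl
    rw [hs2] at hs1
    have hs3 : ((∑ g ∈ TT, (F2 g).card : ℕ) : ℝ)
        ≤ ((Fintype.piFinset (fun _ : Fin (2*r-1) =>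
          H.image (fun e => ∑ i, e i))).card : ℝ) := by exact_mod_cast hdisj
    nlinarith [hs1, hs3, hXc]
  have hp : (0:ℝ) < (n:ℝ)^(2*r-2) := pow_pos hnR _
  have hns : (n:ℝ)^(2*r-1) = (n:ℝ)^(2*r-2) * (n:ℝ) := by
    rw [hee, pow_succ]
  have hrw : 2 * (C*(n:ℝ))^(2*r-1) = (2 * C^(2*r-1) * n) * (n:ℝ)^(2*r-2) := by
    rw [mul_pow, hns]
    ring
  rw [hrw] at hlow
  exact le_of_mul_le_mul_right hlow hp
end
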